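/- arXiv:2310.07926 — 7 statements merged into one kernel-verified Lean document; each statement's English description precedes it below -/
import Mathlib

section
/- For every integer K ≥ 2 and every η > 0 there exists a constant C(K,η) > 0 with the following property. Let n, d ≥ 1 and let Z_1, …, Z_n ⊂ 𝔻 be sets with |Z_j| = K for every j and with minimum pairwise distance min_{1≤j≤n} min_{z≠z'∈Z_j} |z − z'| ≥ η. Set Y_n = ∏_{j=1}^n Z_j. Then every analytic polynomial f on 𝔻^n of degree at most d and individual degree at most K−1 satisfies ‖f‖_{𝔻^n} ≤ C(K,η)^d · ‖f‖_{Y_n}. -/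
open Finset Polynomial

lemma nat_prod_dist (d k : ℕ) (hk : k ≤ d) :
    ∏ m ∈ (range (d+1)).erase k, Nat.dist k m = Nat.factorial k * Nat.factorial (d - k) := by
  have hset : (range (d+1)).erase k = (range k) ∪ (Ico (k+1) (d+1)) := by
    ext m
    simp only [mem_erase, mem_range, mem_union, mem_Ico]
    omega
  have hdisj : Disjoint (range k) (Ico (k+1) (d+1)) := by
    simp only [Finset.disjoint_left, mem_range, mem_Ico]
    omega
  rw [hset, prod_union hdisj]
  congr 1
  · rw [← Finset.prod_range_add_one_eq_factorial k,
      ← Finset.prod_range_reflect (fun j => j + 1) k]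
    refine prod_congr rfl fun m hm => ?_
    rw [mem_range] at hm
    rw [Nat.dist_eq_sub_of_le_right hm.le]
    omega
  · rw [Finset.prod_Ico_eq_prod_range, ← Finset.prod_range_add_one_eq_factorial (d - k)]
    have he : d + 1 - (k+1) = d - k := by omega
    rw [he]
    refine prod_congr rfl fun m hm => ?_
    rw [Nat.dist_eq_sub_of_le (by omega)]
    omega

lemma cast_nat_dist (k m : ℕ) : ((Nat.dist k m : ℝ)) = |(k:ℝ) - m| := by
  rcases le_total k m with h | h
  · rw [Nat.dist_eq_sub_of_le h, abs_sub_comm,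
      abs_of_nonneg (sub_nonneg.mpr (show (k:ℝ) ≤ m by exact_mod_cast h))]
    push_cast [h]
    ring
  · rw [Nat.dist_eq_sub_of_le_right h,
      abs_of_nonneg (sub_nonneg.mpr (show (m:ℝ) ≤ k by exact_mod_cast h))]
    push_cast [h]
    ring

lemma pow_div_factorial_le (d : ℕ) : ((d:ℝ))^d / (Nat.factorial d : ℝ) ≤ 3 ^ d := by
  have h1 : ((d:ℝ))^d / (Nat.factorial d : ℝ) ≤ Real.exp d := by
    have h := Real.sum_le_exp_of_nonneg (x := (d:ℝ)) (by positivity) (d+1)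
    have h2 : ((d:ℝ))^d/(Nat.factorial d : ℝ) ≤ ∑ i ∈ range (d+1), (d:ℝ)^i / (Nat.factorial i : ℝ) :=
      Finset.single_le_sum (f := fun i => (d:ℝ)^i/(Nat.factorial i : ℝ)) (fun i _ => by positivity)
        (self_mem_range_succ d)
    calc ((d:ℝ))^d / (Nat.factorial d : ℝ) ≤ _ := h2
      _ ≤ Real.exp d := h
  have h3 : Real.exp (d : ℝ) = Real.exp 1 ^ d := by
    rw [← Real.exp_nat_mul]
    norm_num
  have h4 : Real.exp 1 ^ d ≤ 3 ^ d := by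
    apply pow_le_pow_left₀ (le_of_lt (Real.exp_pos 1))
    linarith [Real.exp_one_lt_d9]
  calc ((d:ℝ))^d / (Nat.factorial d : ℝ) ≤ Real.exp d := h1
    _ = Real.exp 1 ^ d := h3
    _ ≤ 3 ^ d := h4

lemma poly_growth (d : ℕ) (hd : 1 ≤ d) (r : ℝ) (hr0 : 0 < r) (hr1 : r ≤ 1) (M : ℝ)
    (p : Polynomial ℂ) (hp : p.natDegree ≤ d)
    (hb : ∀ t : ℝ, |t| ≤ r → ‖p.eval (t : ℂ)‖ ≤ M) (z : ℂ) (hz : ‖z‖ ≤ 1) :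
    ‖p.eval z‖ ≤ (12 / r) ^ d * M := by
  have hM : 0 ≤ M := le_trans (norm_nonneg _) (hb 0 (by simpa using le_of_lt hr0))
  have hdR : (0:ℝ) < d := by exact_mod_cast hd
  set t : ℕ → ℝ := fun k => r * (2*k - d) / d with ht
  have habs : ∀ k, k ≤ d → |t k| ≤ r := by
    intro k hk
    have hkd : (k:ℝ) ≤ d := by exact_mod_cast hk
    have hk0 : (0:ℝ) ≤ k := Nat.cast_nonneg k
    have h2 : |2*(k:ℝ) - d| ≤ d := abs_le.mpr ⟨by linarith, by linarith⟩
    have h3 : |t k| = r * |2*(k:ℝ) - d| / d := by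
      rw [ht]
      rw [abs_div, abs_mul, abs_of_pos hr0, abs_of_pos hdR]
    rw [h3, div_le_iff₀ hdR]
    nlinarith
  set v : ℕ → ℂ := fun k => ((t k : ℝ) : ℂ) with hv
  have htdiff : ∀ k m : ℕ, t k - t m = (2*r/d) * ((k:ℝ) - m) := by
    intro k m
    rw [ht]
    field_simp
    ring
  have hdiff : ∀ k m : ℕ, v k - v m = (((2*r/d) * ((k:ℝ) - m) : ℝ) : ℂ) := by
    intro k m
    rw [hv, ← Complex.ofReal_sub, htdiff]
  have hinj : Set.InjOn v (range (d+1)) := by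
    intro k hk m hm h
    have h2 : ((2*r/d) * ((k:ℝ) - m) : ℝ) = 0 := by
      have h5 := hdiff k m
      rw [sub_eq_zero.mpr h] at h5
      exact_mod_cast h5.symm
    have h4 : (2*r/(d:ℝ)) ≠ 0 := by positivity
    have h3 : (k:ℝ) = m := by
      rcases mul_eq_zero.mp h2 with h5 | h5
      · exact absurd h5 h4
      · linarith [sub_eq_zero.mp h5]
    exact_mod_cast h3
  have hdeg : p.degree < (#(range (d+1)) : ℕ) := by
    rw [card_range]
    refine lt_of_le_of_lt (degree_le_natDegree) ?_
    exact_mod_cast Nat.lt_succ_of_le hp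
  have hinterp := Lagrange.eq_interpolate hinj hdeg
  have heval : p.eval z = ∑ k ∈ range (d+1),
      p.eval (v k) * (Lagrange.basis (range (d+1)) v k).eval z := by
    conv_lhs => rw [hinterp]
    rw [Lagrange.interpolate_apply, Polynomial.eval_finset_sum]
    exact sum_congr rfl fun k _ => by rw [Polynomial.eval_mul, Polynomial.eval_C]
  have hbasis : ∀ k ∈ range (d+1),
      ‖(Lagrange.basis (range (d+1)) v k).eval z‖
        ≤ ((d:ℝ)/r)^d / ((Nat.factorial k : ℝ) * (Nat.factorial (d-k) : ℝ)) := by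
    intro k hk
    rw [mem_range, Nat.lt_succ_iff] at hk
    rw [Lagrange.basis, Polynomial.eval_prod, norm_prod]
    have hfac : ∀ m ∈ (range (d+1)).erase k,
        ‖(Lagrange.basisDivisor (v k) (v m)).eval z‖ ≤ ((d:ℝ)/r) / (Nat.dist k m : ℝ) := by
      intro m hm
      rw [mem_erase, mem_range, Nat.lt_succ_iff] at hm
      have hmk : m ≠ k := hm.1
      have hdistpos : (0:ℝ) < (Nat.dist k m : ℝ) := by
        have h0 : Nat.dist k m ≠ 0 := fun hcon => hmk (Nat.eq_of_dist_eq_zero hcon).symm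
        have : 0 < Nat.dist k m := Nat.pos_of_ne_zero h0
        exact_mod_cast this
      rw [Lagrange.basisDivisor, Polynomial.eval_mul, Polynomial.eval_C,
        Polynomial.eval_sub, Polynomial.eval_X, Polynomial.eval_C, norm_mul, norm_inv]
      have hden : ‖v k - v m‖ = (2*r/d) * (Nat.dist k m : ℝ) := by
        rw [hdiff k m, Complex.norm_real, Real.norm_eq_abs, abs_mul,
          abs_of_pos (by positivity), cast_nat_dist]
      have hnum : ‖z - v m‖ ≤ 2 := by
        calc ‖z - v m‖ ≤ ‖z‖ + ‖v m‖ := norm_sub_le _ _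
          _ ≤ 1 + r := add_le_add hz
              (by rw [hv]; simpa [Complex.norm_real] using habs m hm.2)
          _ ≤ 2 := by linarith
      rw [hden]
      calc ((2*r/(d:ℝ)) * (Nat.dist k m : ℝ))⁻¹ * ‖z - v m‖
          ≤ ((2*r/(d:ℝ)) * (Nat.dist k m : ℝ))⁻¹ * 2 := by gcongr
        _ = ((d:ℝ)/r) / (Nat.dist k m : ℝ) := by field_simp
    calc ∏ m ∈ (range (d+1)).erase k, ‖(Lagrange.basisDivisor (v k) (v m)).eval z‖
        ≤ ∏ m ∈ (range (d+1)).erase k, ((d:ℝ)/r) / (Nat.dist k m : ℝ) :=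
          prod_le_prod (fun m _ => norm_nonneg _) hfac
      _ = ((d:ℝ)/r)^d / ((Nat.factorial k : ℝ) * (Nat.factorial (d-k) : ℝ)) := by
          rw [prod_div_distrib, prod_const, card_erase_of_mem (by simp [Nat.lt_succ_of_le hk]),
            card_range]
          simp only [Nat.add_sub_cancel]
          congr 1
          rw [← Nat.cast_prod, nat_prod_dist d k hk]
          push_cast
          ring
  have hsum : ∑ k ∈ range (d+1), (1:ℝ) / ((Nat.factorial k : ℝ) * (Nat.factorial (d-k) : ℝ))
      = 2^d / (Nat.factorial d : ℝ) := by
    rw [eq_div_iff (by positivity)]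
    rw [sum_mul]
    have : ∀ k ∈ range (d+1),
        (1:ℝ) / ((Nat.factorial k : ℝ) * (Nat.factorial (d-k) : ℝ)) * (Nat.factorial d : ℝ)
          = (d.choose k : ℝ) := by
      intro k hk
      rw [mem_range, Nat.lt_succ_iff] at hk
      have h8 := Nat.choose_mul_factorial_mul_factorial hk
      have h9 : ((d.choose k : ℝ)) * ((Nat.factorial k : ℝ) * (Nat.factorial (d-k) : ℝ))
          = (Nat.factorial d : ℝ) := by exact_mod_cast congrArg (Nat.cast (R := ℝ)) (by rw [← h8]; ring)
      field_simp
      linarith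
    rw [sum_congr rfl this]
    rw [← Nat.cast_sum, Nat.sum_range_choose]
    push_cast
    ring
  calc ‖p.eval z‖ = ‖∑ k ∈ range (d+1), p.eval (v k) * (Lagrange.basis (range (d+1)) v k).eval z‖ := by rw [heval]
    _ ≤ ∑ k ∈ range (d+1), ‖p.eval (v k) * (Lagrange.basis (range (d+1)) v k).eval z‖ := norm_sum_le _ _
    _ ≤ ∑ k ∈ range (d+1), M * (((d:ℝ)/r)^d / ((Nat.factorial k : ℝ) * (Nat.factorial (d-k) : ℝ))) := by
        refine sum_le_sum fun k hk => ?_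
        rw [norm_mul]
        have hk' : k ≤ d := by rw [mem_range, Nat.lt_succ_iff] at hk; exact hk
        exact mul_le_mul (hb (t k) (habs k hk')) (hbasis k hk) (norm_nonneg _) hM
    _ = M * ((d:ℝ)/r)^d * (∑ k ∈ range (d+1), (1:ℝ) / ((Nat.factorial k : ℝ) * (Nat.factorial (d-k) : ℝ))) := by
        rw [mul_sum]
        refine sum_congr rfl fun k _ => ?_
        ring
    _ = M * ((d:ℝ)/r)^d * (2^d / (Nat.factorial d : ℝ)) := by rw [hsum]
    _ ≤ (12 / r) ^ d * M := by
        have hfne : ((Nat.factorial d : ℝ)) ≠ 0 := by positivity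
        have h10 : ((d:ℝ)/r)^d * (2^d / (Nat.factorial d : ℝ))
            = (2/r)^d * ((d:ℝ)^d / (Nat.factorial d : ℝ)) := by
          rw [div_pow, div_pow]
          field_simp
        have h11 := pow_div_factorial_le d
        have h12 : (2/r)^d * ((d:ℝ)^d / (Nat.factorial d : ℝ)) ≤ (2/r)^d * 3^d := by
          gcongr
        have h13 : (2/r)^d * (3:ℝ)^d = (6/r)^d := by
          rw [← mul_pow]
          congr 1
          ring
        have h14 : ((6:ℝ)/r)^d ≤ (12/r)^d := by
          have hle : (6:ℝ)/r ≤ 12/r := by gcongr; norm_num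
          exact pow_le_pow_left₀ (by positivity) hle d
        calc M * ((d:ℝ)/r)^d * (2^d / (Nat.factorial d : ℝ))
            = M * (((d:ℝ)/r)^d * (2^d / (Nat.factorial d : ℝ))) := by ring
          _ ≤ M * ((12/r)^d) := by
              refine mul_le_mul_of_nonneg_left ?_ hM
              rw [h10]
              linarith
          _ = (12 / r) ^ d * M := by ring

/-- Theorem 1.1 (product sampling sets): for every `K ≥ 2` and `η > 0` there is a
constant `C = C(K, η) > 0` such that for all `n, d ≥ 1`, all sets `Z j ⊂ 𝔻` of
cardinality `K` with pairwise distances at least `η`, every analytic polynomial of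
degree at most `d` and individual degree at most `K − 1` satisfies
`‖f‖_{𝔻^n} ≤ C^d ‖f‖_{∏ Z j}`. -/
theorem stmt0 (K : ℕ) (hK : 2 ≤ K) (η : ℝ) (hη : 0 < η) :
    ∃ C : ℝ, 0 < C ∧
      ∀ (n d : ℕ), 1 ≤ n → 1 ≤ d →
      ∀ Z : Fin n → Finset ℂ,
        (∀ j, ∀ z ∈ Z j, ‖z‖ ≤ 1) →
        (∀ j, (Z j).card = K) →
        (∀ j, ∀ z ∈ Z j, ∀ z' ∈ Z j, z ≠ z' → η ≤ ‖z - z'‖) →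
      ∀ (a : (Fin n → Fin K) → ℂ) (f : (Fin n → ℂ) → ℂ),
        (∀ z : Fin n → ℂ, f z =
          ∑ α ∈ Finset.univ.filter (fun α : Fin n → Fin K => ∑ i, (α i : ℕ) ≤ d),
            a α * ∏ i, z i ^ (α i : ℕ)) →
      ∀ x : Fin n → ℂ, (∀ i, ‖x i‖ ≤ 1) →
        ‖f x‖ ≤
          C ^ d * ⨆ ξ : {ξ : Fin n → ℂ // ∀ j, ξ j ∈ Z j}, ‖f ξ.1‖ := by
  have hKR : (0:ℝ) < K := by positivity
  set R₀ : ℝ := (2/η)^(K-1) + 1 with hR₀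
  have hK2 : (2:ℝ) ≤ K := by exact_mod_cast hK
  have hR₀1 : 1 ≤ R₀ := by
    have h := pow_nonneg (by positivity : (0:ℝ) ≤ 2/η) (K-1)
    simp only [hR₀]
    linarith
  have hR₀0 : 0 < R₀ := by linarith
  set r : ℝ := 1/(2*K*R₀) with hrdef
  have hr0 : 0 < r := by positivity
  have hr1 : r ≤ 1 := by
    simp only [hrdef]
    rw [div_le_one (by positivity)]
    nlinarith [hK2, hR₀1]
  clear_value R₀ r
  refine ⟨(12/r)^2, by positivity, ?_⟩
  intro n d hn hd Z hZ1 hZcard hsep a f hf x hx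
  set A := Finset.univ.filter (fun α : Fin n → Fin K => ∑ i, (α i : ℕ) ≤ d) with hA
  set M := ⨆ ξ : {ξ : Fin n → ℂ // ∀ j, ξ j ∈ Z j}, ‖f ξ.1‖ with hM
  -- boundedness facts about M
  have hfin : (Set.range fun ξ : {ξ : Fin n → ℂ // ∀ j, ξ j ∈ Z j} => ‖f ξ.1‖).Finite := by
    apply Set.Finite.subset (Set.Finite.image (fun g => ‖f g‖)
      (Fintype.piFinset Z).finite_toSet)
    rintro _ ⟨ξ, rfl⟩
    exact ⟨ξ.1, by simpa [Fintype.mem_piFinset] using ξ.2, rfl⟩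
  have hMb : ∀ g : Fin n → ℂ, (∀ j, g j ∈ Z j) → ‖f g‖ ≤ M :=
    fun g hg => le_ciSup hfin.bddAbove ⟨g, hg⟩
  have hne : ∀ j, ∃ w, w ∈ Z j := by
    intro j
    have : 0 < (Z j).card := by rw [hZcard j]; omega
    obtain ⟨w, hw⟩ := card_pos.mp this
    exact ⟨w, hw⟩
  have hM0 : 0 ≤ M := by
    choose g hg using hne
    exact le_trans (norm_nonneg _) (hMb g hg)
  -- Lagrange data
  set L : Fin n → ℂ → ℂ := fun j w => Polynomial.eval (x j) (Lagrange.basis (Z j) id w) with hL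
  set c : Fin n → ℂ → ℂ := fun j w => L j w - (K:ℂ)⁻¹ with hc
  have hF1 : ∀ j, ∀ t : ℕ, t < K → ∑ w ∈ Z j, L j w * w ^ t = (x j)^t := by
    intro j t ht
    have hinj : Set.InjOn (id : ℂ → ℂ) (Z j) := Function.injective_id.injOn
    have hdeg : (Polynomial.X^t : Polynomial ℂ).degree < (#(Z j) : ℕ) := by
      rw [hZcard j, Polynomial.degree_X_pow]
      exact_mod_cast ht
    have h := Lagrange.eq_interpolate hinj hdeg
    have h2 := congrArg (Polynomial.eval (x j)) h
    rw [Lagrange.interpolate_apply, Polynomial.eval_finset_sum] at h2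
    simp only [Polynomial.eval_mul, Polynomial.eval_C, Polynomial.eval_pow,
      Polynomial.eval_X, id_eq] at h2
    rw [h2]
    exact sum_congr rfl fun w _ => mul_comm _ _

  -- norm versions of hypotheses
  have hx' : ∀ i, ‖x i‖ ≤ 1 := fun i => hx i
  have hZ1' : ∀ j, ∀ z ∈ Z j, ‖z‖ ≤ 1 := fun j z hz => by
    exact hZ1 j z hz
  have hsep' : ∀ j, ∀ z ∈ Z j, ∀ z' ∈ Z j, z ≠ z' → η ≤ ‖z - z'‖ := fun j z hz z' hz' hne => by
    exact hsep j z hz z' hz' hne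
  have hKinv : ∀ j, ∑ _w ∈ Z j, (K:ℂ)⁻¹ = (1:ℂ) := by
    intro j
    rw [sum_const, hZcard j, nsmul_eq_mul]
    have : (K:ℂ) ≠ 0 := by exact_mod_cast (by omega : K ≠ 0)
    field_simp
  have hLsum : ∀ j, ∑ w ∈ Z j, L j w = 1 := by
    intro j
    have h := hF1 j 0 (by omega)
    simpa using h
  have hcsum : ∀ j, ∑ w ∈ Z j, c j w = 0 := by
    intro j
    simp only [hc]
    rw [sum_sub_distrib, hLsum j, hKinv j, sub_self]
  have hcresum : ∀ j, ∑ w ∈ Z j, (c j w).re = 0 := by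
    intro j
    have h := congrArg Complex.re (hcsum j)
    simpa [Complex.re_sum] using h
  have hcimsum : ∀ j, ∑ w ∈ Z j, (c j w).im = 0 := by
    intro j
    have h := congrArg Complex.im (hcsum j)
    simpa [Complex.im_sum] using h
  have hcreC : ∀ j, ∑ w ∈ Z j, (((c j w).re : ℝ) : ℂ) = 0 := by
    intro j
    rw [← Complex.ofReal_sum, hcresum j, Complex.ofReal_zero]
  have hcimC : ∀ j, ∑ w ∈ Z j, (((c j w).im : ℝ) : ℂ) = 0 := by
    intro j
    rw [← Complex.ofReal_sum, hcimsum j, Complex.ofReal_zero]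
  -- bounds on Lagrange coefficients
  have hLb : ∀ j, ∀ w ∈ Z j, ‖L j w‖ ≤ (2/η)^(K-1) := by
    intro j w hw
    simp only [hL]
    rw [Lagrange.basis, Polynomial.eval_prod, norm_prod]
    have hb : ∀ w' ∈ (Z j).erase w,
        ‖Polynomial.eval (x j) (Lagrange.basisDivisor (id w) (id w'))‖ ≤ 2/η := by
      intro w' hw'
      rw [mem_erase] at hw'
      have hww' : w ≠ w' := fun h => hw'.1 h.symm
      have hsep2 := hsep' j w hw w' hw'.2 hww'
      rw [Lagrange.basisDivisor]
      simp only [Polynomial.eval_mul, Polynomial.eval_C, Polynomial.eval_sub,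
        Polynomial.eval_X, id_eq]
      rw [norm_mul, norm_inv]
      have h1 : ‖x j - w'‖ ≤ 2 := by
        calc ‖x j - w'‖ ≤ ‖x j‖ + ‖w'‖ := norm_sub_le _ _
          _ ≤ 1 + 1 := add_le_add (hx' j) (hZ1' j w' hw'.2)
          _ = 2 := by norm_num
      have h2 : ‖w - w'‖⁻¹ ≤ η⁻¹ := by
        apply inv_anti₀ hη hsep2
      calc ‖w - w'‖⁻¹ * ‖x j - w'‖ ≤ η⁻¹ * 2 :=
            mul_le_mul h2 h1 (norm_nonneg _) (by positivity)
        _ = 2/η := by ring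
    calc ∏ w' ∈ (Z j).erase w, ‖Polynomial.eval (x j) (Lagrange.basisDivisor (id w) (id w'))‖
        ≤ ∏ _w' ∈ (Z j).erase w, (2/η) := prod_le_prod (fun _ _ => norm_nonneg _) hb
      _ = (2/η)^(K-1) := by rw [prod_const, card_erase_of_mem hw, hZcard j]
  have hcb : ∀ j, ∀ w ∈ Z j, ‖c j w‖ ≤ R₀ := by
    intro j w hw
    simp only [hc]
    calc ‖L j w - (K:ℂ)⁻¹‖ ≤ ‖L j w‖ + ‖(K:ℂ)⁻¹‖ := norm_sub_le _ _
      _ ≤ (2/η)^(K-1) + 1 := by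
          refine add_le_add (hLb j w hw) ?_
          rw [norm_inv, Complex.norm_natCast]
          have h1 : (1:ℝ) ≤ K := by linarith
          rw [inv_le_one_iff₀]
          right
          exact h1
      _ = R₀ := by rw [hR₀]
  -- the two-parameter deformation
  set m : Fin n → ℕ → ℂ → ℂ → ℂ := fun j t u v =>
    ∑ w ∈ Z j, ((K:ℂ)⁻¹ + u * (((c j w).re : ℝ) : ℂ) + v * (((c j w).im : ℝ) : ℂ)) * w ^ t
    with hm
  set H : ℂ → ℂ → ℂ := fun u v => ∑ α ∈ A, a α * ∏ j, m j (α j : ℕ) u v with hH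
  have hm0 : ∀ j (u v : ℂ), m j 0 u v = 1 := by
    intro j u v
    simp only [hm, pow_zero, mul_one]
    rw [sum_add_distrib, sum_add_distrib, hKinv j, ← mul_sum, ← mul_sum, hcreC j, hcimC j,
      mul_zero, mul_zero, add_zero, add_zero]
  have hmtop : ∀ j (t : ℕ), t < K → m j t 1 Complex.I = (x j)^t := by
    intro j t ht
    have key : ∀ w : ℂ, (K:ℂ)⁻¹ + 1 * (((c j w).re : ℝ) : ℂ) + Complex.I * (((c j w).im : ℝ):ℂ)
        = L j w := by
      intro w
      have h1 : L j w = c j w + (K:ℂ)⁻¹ := by simp [hc]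
      rw [h1]
      linear_combination (Complex.re_add_im (c j w))
    rw [show m j t 1 Complex.I = ∑ w ∈ Z j, L j w * w ^ t from
      sum_congr rfl fun w _ => by rw [key w]]
    exact hF1 j t ht
  -- Pillar 1 : probability bound on the real square
  have hP1 : ∀ u v : ℝ, |u| ≤ r → |v| ≤ r → ‖H ↑u ↑v‖ ≤ M := by
    intro u v hu hv
    set S : Fin n → ℂ → ℝ := fun j w => (K:ℝ)⁻¹ + u * (c j w).re + v * (c j w).im with hS
    have hScast : ∀ j w, ((S j w : ℝ) : ℂ)
        = (K:ℂ)⁻¹ + (u:ℂ) * (((c j w).re:ℝ):ℂ) + (v:ℂ)*(((c j w).im:ℝ):ℂ) := by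
      intro j w
      simp only [hS]
      push_cast
      ring
    have h2rR : 2*r*R₀ = (K:ℝ)⁻¹ := by
      simp only [hrdef]
      field_simp
    have hSnn : ∀ j, ∀ w ∈ Z j, 0 ≤ S j w := by
      intro j w hw
      have hre : |(c j w).re| ≤ R₀ :=
        le_trans (Complex.abs_re_le_norm _) (by exact hcb j w hw)
      have him : |(c j w).im| ≤ R₀ :=
        le_trans (Complex.abs_im_le_norm _) (by exact hcb j w hw)
      have h3 : |u * (c j w).re| ≤ r * R₀ := by
        rw [abs_mul]
        exact mul_le_mul hu hre (abs_nonneg _) (le_of_lt hr0)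
      have h4 : |v * (c j w).im| ≤ r * R₀ := by
        rw [abs_mul]
        exact mul_le_mul hv him (abs_nonneg _) (le_of_lt hr0)
      have h5 := neg_abs_le (u * (c j w).re)
      have h6 := neg_abs_le (v * (c j w).im)
      simp only [hS]
      nlinarith [h3, h4, h5, h6, h2rR]
    have hSsum : ∀ j, ∑ w ∈ Z j, S j w = 1 := by
      intro j
      simp only [hS]
      rw [sum_add_distrib, sum_add_distrib, ← mul_sum, ← mul_sum, hcresum j, hcimsum j,
        mul_zero, mul_zero, add_zero, add_zero, sum_const, hZcard j, nsmul_eq_mul]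
      have : (K:ℝ) ≠ 0 := by positivity
      field_simp
    have hHfub : H ↑u ↑v = ∑ p ∈ Fintype.piFinset Z, ((∏ j, S j (p j) : ℝ):ℂ) * f p := by
      simp only [hH]
      have e1 : ∀ α : Fin n → Fin K, (∏ j, m j (α j:ℕ) ↑u ↑v)
          = ∑ p ∈ Fintype.piFinset Z, ∏ j, ((S j (p j):ℝ):ℂ) * (p j)^(α j:ℕ) := by
        intro α
        have hkey := Finset.prod_univ_sum (t := Z)
          (f := fun j w => ((S j w : ℝ):ℂ) * w ^ (α j : ℕ))
        rw [← hkey]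
        refine prod_congr rfl fun j _ => ?_
        simp only [hm]
        refine sum_congr rfl fun w _ => ?_
        rw [hScast]
      calc ∑ α ∈ A, a α * ∏ j, m j (α j:ℕ) ↑u ↑v
          = ∑ α ∈ A, ∑ p ∈ Fintype.piFinset Z,
              a α * ∏ j, ((S j (p j):ℝ):ℂ) * (p j)^(α j:ℕ) := by
            refine sum_congr rfl fun α _ => ?_
            rw [e1 α, mul_sum]
        _ = ∑ p ∈ Fintype.piFinset Z, ∑ α ∈ A,
              a α * ∏ j, ((S j (p j):ℝ):ℂ) * (p j)^(α j:ℕ) := sum_comm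
        _ = ∑ p ∈ Fintype.piFinset Z, ((∏ j, S j (p j) : ℝ):ℂ) * f p := by
            refine sum_congr rfl fun p _ => ?_
            rw [hf p, mul_sum]
            refine sum_congr rfl fun α _ => ?_
            have hsplit : ∏ j, ((S j (p j):ℝ):ℂ) * (p j)^(α j:ℕ)
                = ((∏ j, S j (p j) : ℝ):ℂ) * ∏ j, (p j)^(α j:ℕ) := by
              rw [prod_mul_distrib, Complex.ofReal_prod]
            rw [hsplit]
            ring
    rw [hHfub]
    have hprodnn : ∀ p ∈ Fintype.piFinset Z, 0 ≤ ∏ j, S j (p j) := by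
      intro p hp
      exact prod_nonneg fun j _ => hSnn j (p j) (Fintype.mem_piFinset.mp hp j)
    calc ‖∑ p ∈ Fintype.piFinset Z, ((∏ j, S j (p j) : ℝ):ℂ) * f p‖
        ≤ ∑ p ∈ Fintype.piFinset Z, ‖((∏ j, S j (p j) : ℝ):ℂ) * f p‖ := norm_sum_le _ _
      _ ≤ ∑ p ∈ Fintype.piFinset Z, (∏ j, S j (p j)) * M := by
          refine sum_le_sum fun p hp => ?_
          rw [norm_mul, Complex.norm_real, Real.norm_eq_abs, abs_of_nonneg (hprodnn p hp)]
          have hfp : ‖f p‖ ≤ M := by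
            exact hMb p (fun j => Fintype.mem_piFinset.mp hp j)
          exact mul_le_mul_of_nonneg_left hfp (hprodnn p hp)
      _ = (∑ p ∈ Fintype.piFinset Z, ∏ j, S j (p j)) * M := by rw [sum_mul]
      _ = M := by
          have hsum1 : ∑ p ∈ Fintype.piFinset Z, ∏ j, S j (p j) = 1 := by
            have hkey := Finset.prod_univ_sum (t := Z) (f := fun j w => S j w)
            rw [← hkey, prod_congr rfl (fun j _ => hSsum j), prod_const_one]
          rw [hsum1, one_mul]
  -- splitting m as an affine function of the second / first argument
  have hmsplit2 : ∀ (j : Fin n) (t:ℕ) (u v : ℂ), m j t u v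
      = (∑ w ∈ Z j, ((K:ℂ)⁻¹ + u * (((c j w).re:ℝ):ℂ)) * w ^ t)
        + (∑ w ∈ Z j, (((c j w).im:ℝ):ℂ) * w ^ t) * v := by
    intro j t u v
    simp only [hm]
    conv_rhs => rw [Finset.sum_mul, ← Finset.sum_add_distrib]
    refine sum_congr rfl fun w _ => by ring
  have hmsplit1 : ∀ (j : Fin n) (t:ℕ) (u v : ℂ), m j t u v
      = (∑ w ∈ Z j, ((K:ℂ)⁻¹ + v * (((c j w).im:ℝ):ℂ)) * w ^ t)
        + (∑ w ∈ Z j, (((c j w).re:ℝ):ℂ) * w ^ t) * u := by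
    intro j t u v
    simp only [hm]
    conv_rhs => rw [Finset.sum_mul, ← Finset.sum_add_distrib]
    refine sum_congr rfl fun w _ => by ring
  -- polynomials realising H in each variable
  set P2 : ℂ → Polynomial ℂ := fun u => ∑ α ∈ A, Polynomial.C (a α) *
    ∏ j, (if (α j : ℕ) = 0 then 1 else
      (Polynomial.C (∑ w ∈ Z j, ((K:ℂ)⁻¹ + u * (((c j w).re:ℝ):ℂ)) * w ^ (α j:ℕ))
        + Polynomial.C (∑ w ∈ Z j, (((c j w).im:ℝ):ℂ) * w ^ (α j:ℕ)) * Polynomial.X)) with hP2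
  set Q2 : ℂ → Polynomial ℂ := fun v => ∑ α ∈ A, Polynomial.C (a α) *
    ∏ j, (if (α j : ℕ) = 0 then 1 else
      (Polynomial.C (∑ w ∈ Z j, ((K:ℂ)⁻¹ + v * (((c j w).im:ℝ):ℂ)) * w ^ (α j:ℕ))
        + Polynomial.C (∑ w ∈ Z j, (((c j w).re:ℝ):ℂ) * w ^ (α j:ℕ)) * Polynomial.X)) with hQ2
  have hP2eval : ∀ u v : ℂ, (P2 u).eval v = H u v := by
    intro u v
    simp only [hP2, hH]
    rw [Polynomial.eval_finset_sum]
    refine sum_congr rfl fun α hα => ?_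
    rw [Polynomial.eval_mul, Polynomial.eval_C, Polynomial.eval_prod]
    congr 1
    refine prod_congr rfl fun j _ => ?_
    by_cases ht : (α j : ℕ) = 0
    · rw [if_pos ht, Polynomial.eval_one, ht, hm0 j u v]
    · rw [if_neg ht, hmsplit2 j (α j : ℕ) u v, Polynomial.eval_add, Polynomial.eval_C,
        Polynomial.eval_mul, Polynomial.eval_C, Polynomial.eval_X]
  have hQ2eval : ∀ u v : ℂ, (Q2 v).eval u = H u v := by
    intro u v
    simp only [hQ2, hH]
    rw [Polynomial.eval_finset_sum]
    refine sum_congr rfl fun α hα => ?_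
    rw [Polynomial.eval_mul, Polynomial.eval_C, Polynomial.eval_prod]
    congr 1
    refine prod_congr rfl fun j _ => ?_
    by_cases ht : (α j : ℕ) = 0
    · rw [if_pos ht, Polynomial.eval_one, ht, hm0 j u v]
    · rw [if_neg ht, hmsplit1 j (α j : ℕ) u v, Polynomial.eval_add, Polynomial.eval_C,
        Polynomial.eval_mul, Polynomial.eval_C, Polynomial.eval_X]
  have hdeg2 : ∀ u : ℂ, (P2 u).natDegree ≤ d := by
    intro u
    simp only [hP2]
    refine Polynomial.natDegree_sum_le_of_forall_le _ _ fun α hα => ?_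
    refine le_trans (Polynomial.natDegree_C_mul_le _ _) ?_
    refine le_trans (Polynomial.natDegree_prod_le _ _) ?_
    have hα' : ∑ i, (α i : ℕ) ≤ d := by
      rw [hA] at hα
      exact (mem_filter.mp hα).2
    refine le_trans ?_ hα'
    refine sum_le_sum fun j _ => ?_
    by_cases ht : (α j : ℕ) = 0
    · rw [if_pos ht, Polynomial.natDegree_one]
      omega
    · rw [if_neg ht]
      refine le_trans (Polynomial.natDegree_add_le _ _) ?_
      rw [Polynomial.natDegree_C]
      rw [max_le_iff]
      refine ⟨by omega, ?_⟩
      refine le_trans (Polynomial.natDegree_C_mul_le _ _) ?_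
      rw [Polynomial.natDegree_X]
      omega
  have hdegQ2 : ∀ v : ℂ, (Q2 v).natDegree ≤ d := by
    intro v
    simp only [hQ2]
    refine Polynomial.natDegree_sum_le_of_forall_le _ _ fun α hα => ?_
    refine le_trans (Polynomial.natDegree_C_mul_le _ _) ?_
    refine le_trans (Polynomial.natDegree_prod_le _ _) ?_
    have hα' : ∑ i, (α i : ℕ) ≤ d := by
      rw [hA] at hα
      exact (mem_filter.mp hα).2
    refine le_trans ?_ hα'
    refine sum_le_sum fun j _ => ?_
    by_cases ht : (α j : ℕ) = 0
    · rw [if_pos ht, Polynomial.natDegree_one]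
      omega
    · rw [if_neg ht]
      refine le_trans (Polynomial.natDegree_add_le _ _) ?_
      rw [Polynomial.natDegree_C]
      rw [max_le_iff]
      refine ⟨by omega, ?_⟩
      refine le_trans (Polynomial.natDegree_C_mul_le _ _) ?_
      rw [Polynomial.natDegree_X]
      omega
  -- two growth steps
  have step1 : ∀ u : ℝ, |u| ≤ r → ‖H ↑u Complex.I‖ ≤ (12/r)^d * M := by
    intro u hu
    have h := poly_growth d hd r hr0 hr1 M (P2 ↑u) (hdeg2 ↑u)
      (fun t ht => by rw [hP2eval]; exact hP1 u t hu ht) Complex.I (by simp)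
    rwa [hP2eval] at h
  have step2 : ‖H 1 Complex.I‖ ≤ (12/r)^d * ((12/r)^d * M) := by
    have h := poly_growth d hd r hr0 hr1 ((12/r)^d * M) (Q2 Complex.I) (hdegQ2 _)
      (fun t ht => by rw [hQ2eval]; exact step1 t ht) 1 (by simp)
    rwa [hQ2eval] at h
  have hHfx : H 1 Complex.I = f x := by
    simp only [hH]
    rw [hf x]
    refine sum_congr rfl fun α hα => ?_
    congr 1
    exact prod_congr rfl fun j _ => hmtop j (α j : ℕ) (α j).isLt
  calc ‖f x‖ = ‖H 1 Complex.I‖ := by rw [hHfx]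
    _ ≤ (12/r)^d * ((12/r)^d * M) := step2
    _ = ((12/r)^2)^d * M := by
        rw [pow_two, mul_pow]
        ring
end

section
/- There is a universal constant C > 0 such that for all integers n ≥ 1, K ≥ 2, d ≥ 1 and every analytic polynomial f on 𝔻^n of degree at most d and individual degree at most K−1, ‖f‖_{𝔻^n} ≤ (C · log K)^{2d} · ‖f‖_{Ω_K^n}. -/
open Finset Polynomial

noncomputable section

private def bb : ℂ := (3 : ℂ)⁻¹

private def mom (K j : ℕ) (y : ℂ) : ℂ :=
  if j = 0 then 1 else bb ^ j * y ^ j + bb ^ (K - j) * (starRingEnd ℂ y) ^ (K - j)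

private def kap (K : ℕ) (y w : ℂ) : ℂ :=
  (K : ℂ)⁻¹ * (1 + ∑ j ∈ Finset.Icc 1 (K - 1),
    bb ^ j * ((y * starRingEnd ℂ w) ^ j + (starRingEnd ℂ y * w) ^ j))

private lemma geom_orthog {ω : ℂ} {Kn : ℕ} (hω : IsPrimitiveRoot ω Kn) (t : ℤ) :
    ∑ k ∈ Finset.range Kn, ω ^ ((k : ℤ) * t) = if (Kn : ℤ) ∣ t then (Kn : ℂ) else 0 := by
  have key : ∀ k : ℕ, ω ^ ((k : ℤ) * t) = (ω ^ t) ^ k := by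
    intro k
    rw [← zpow_natCast (ω ^ t) k, ← zpow_mul, mul_comm]
  simp_rw [key]
  by_cases h : (Kn : ℤ) ∣ t
  · have h1 : ω ^ t = 1 := (hω.zpow_eq_one_iff_dvd t).mpr h
    simp [h1, if_pos h]
  · have hne : ω ^ t ≠ 1 := fun hh => h ((hω.zpow_eq_one_iff_dvd t).mp hh)
    rw [geom_sum_eq hne, if_neg h]
    have hKn : (ω ^ t) ^ Kn = 1 := by
      rw [← zpow_natCast (ω ^ t) Kn, ← zpow_mul, mul_comm, zpow_mul, zpow_natCast, hω.pow_eq_one,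
        one_zpow]
    rw [hKn]
    simp

private lemma int_dvd_small {K : ℕ} (hK : 0 < K) {t : ℤ} (h1 : -(K:ℤ) < t) (h2 : t < K)
    (hd : (K:ℤ) ∣ t) : t = 0 := by
  obtain ⟨c, rfl⟩ := hd
  have hK' : (0:ℤ) < K := by exact_mod_cast hK
  have hc1 : c < 1 := by
    have := (mul_lt_mul_iff_right₀ hK').mp (by linarith : (K:ℤ) * c < K * 1)
    linarith
  have hc2 : -1 < c := by
    have := (mul_lt_mul_iff_right₀ hK').mp (by linarith : (K:ℤ) * (-1) < K * c)
    linarith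
  have : c = 0 := by omega
  simp [this]

private lemma int_dvd_eq {K : ℕ} (hK : 0 < K) {t : ℤ} (h1 : 0 < t) (h2 : t < 2*K)
    (hd : (K:ℤ) ∣ t) : t = K := by
  obtain ⟨c, rfl⟩ := hd
  have hK' : (0:ℤ) < K := by exact_mod_cast hK
  have hc1 : c < 2 := by
    have := (mul_lt_mul_iff_right₀ hK').mp (by linarith : (K:ℤ) * c < K * 2)
    linarith
  have hc2 : 0 < c := by
    have := (mul_lt_mul_iff_right₀ hK').mp (by linarith : (K:ℤ) * 0 < K * c)
    linarith
  have : c = 1 := by omega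
  simp [this]

/-- The key moment identity. -/
private lemma kap_moment {K : ℕ} (hK : 2 ≤ K) {ω : ℂ} (hω : IsPrimitiveRoot ω K)
    (hconj : starRingEnd ℂ ω = ω⁻¹) (y : ℂ) {l : ℕ} (hl : l ≤ K - 1) :
    ∑ k ∈ Finset.range K, kap K y (ω ^ k) * (ω ^ k) ^ l = mom K l y := by
  have hK0 : 0 < K := by omega
  have hω0 : ω ≠ 0 := hω.ne_zero (by omega)
  have powid : ∀ (k : ℕ) (t : ℤ), (ω ^ k) ^ t = ω ^ ((k : ℤ) * t) := by
    intro k t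
    rw [← zpow_natCast ω k, ← zpow_mul]
  have hconjpow : ∀ k : ℕ, starRingEnd ℂ (ω ^ k) = (ω ^ k)⁻¹ := by
    intro k
    rw [map_pow, hconj, inv_pow]
  have main : ∀ k ∈ Finset.range K, kap K y (ω ^ k) * (ω ^ k) ^ l =
      (K : ℂ)⁻¹ * (ω ^ ((k : ℤ) * (l : ℤ)) + ∑ j ∈ Finset.Icc 1 (K - 1),
        bb ^ j * (y ^ j * ω ^ ((k : ℤ) * ((l : ℤ) - (j : ℤ))) +
          (starRingEnd ℂ y) ^ j * ω ^ ((k : ℤ) * ((l : ℤ) + (j : ℤ))))) := by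
    intro k _
    have hW0 : (ω ^ k) ≠ 0 := pow_ne_zero _ hω0
    rw [kap, mul_assoc, add_mul, one_mul, Finset.sum_mul]
    congr 2
    · rw [← zpow_natCast (ω ^ k) l, powid]
    refine Finset.sum_congr rfl fun j hj => ?_
    have e1 : (starRingEnd ℂ (ω ^ k)) ^ j * (ω ^ k) ^ l =
        ω ^ ((k : ℤ) * ((l : ℤ) - (j : ℤ))) := by
      rw [hconjpow, inv_pow, ← zpow_natCast (ω ^ k) j, ← zpow_natCast (ω ^ k) l, ← zpow_neg,
        ← zpow_add₀ hW0, powid]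
      congr 1
      ring
    have e2 : (ω ^ k) ^ j * (ω ^ k) ^ l = ω ^ ((k : ℤ) * ((l : ℤ) + (j : ℤ))) := by
      rw [← zpow_natCast (ω ^ k) j, ← zpow_natCast (ω ^ k) l, ← zpow_add₀ hW0, powid]
      congr 1
      ring
    rw [← e1, ← e2, mul_pow y, mul_pow (starRingEnd ℂ y)]
    ring
  rw [Finset.sum_congr rfl main, ← Finset.mul_sum, Finset.sum_add_distrib,
    geom_orthog hω (l : ℤ), Finset.sum_comm]
  have inner : ∀ j ∈ Finset.Icc 1 (K - 1),
      (∑ k ∈ Finset.range K, bb ^ j * (y ^ j * ω ^ ((k : ℤ) * ((l : ℤ) - (j : ℤ))) +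
        (starRingEnd ℂ y) ^ j * ω ^ ((k : ℤ) * ((l : ℤ) + (j : ℤ))))) =
      (if j = l then bb ^ l * y ^ l * (K : ℂ) else 0) +
      (if j = K - l ∧ 1 ≤ l then bb ^ (K - l) * (starRingEnd ℂ y) ^ (K - l) * (K : ℂ) else 0) := by
    intro j hj
    rw [Finset.mem_Icc] at hj
    obtain ⟨h1j, hjK⟩ := hj
    rw [← Finset.mul_sum, Finset.sum_add_distrib, ← Finset.mul_sum, ← Finset.mul_sum,
      geom_orthog hω ((l : ℤ) - (j : ℤ)), geom_orthog hω ((l : ℤ) + (j : ℤ))]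
    have cond1 : ((K:ℤ) ∣ (l : ℤ) - (j : ℤ)) ↔ j = l := by
      constructor
      · intro h
        have := int_dvd_small hK0 (by push_cast; omega) (by push_cast; omega) h
        omega
      · intro h
        subst h
        simp
    have cond2 : ((K:ℤ) ∣ (l : ℤ) + (j : ℤ)) ↔ (j = K - l ∧ 1 ≤ l) := by
      constructor
      · intro h
        have := int_dvd_eq hK0 (by push_cast; omega) (by push_cast; omega) h
        omega
      · rintro ⟨h1, h2⟩
        subst h1
        have : (l : ℤ) + (K - l : ℕ) = K := by push_cast; omega
        rw [this]
    rw [if_congr cond1 rfl rfl, if_congr cond2 rfl rfl]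
    have t1 : bb ^ j * (y ^ j * (if j = l then (K:ℂ) else 0)) =
        if j = l then bb ^ l * y ^ l * (K : ℂ) else 0 := by
      by_cases h : j = l
      · subst h
        simp [mul_assoc]
      · simp [h]
    have t2 : bb ^ j * ((starRingEnd ℂ y) ^ j * (if j = K - l ∧ 1 ≤ l then (K:ℂ) else 0)) =
        if j = K - l ∧ 1 ≤ l then bb ^ (K - l) * (starRingEnd ℂ y) ^ (K - l) * (K : ℂ) else 0 := by
      by_cases h : j = K - l ∧ 1 ≤ l
      · obtain ⟨h1, h2⟩ := h
        subst h1
        simp [mul_assoc, h2]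
      · simp [h]
    rw [mul_add, t1, t2]
  rw [Finset.sum_congr rfl inner, Finset.sum_add_distrib]
  have s1 : (∑ j ∈ Finset.Icc 1 (K-1), if j = l then bb ^ l * y ^ l * (K : ℂ) else 0) =
      if 1 ≤ l then bb ^ l * y ^ l * (K : ℂ) else 0 := by
    rw [Finset.sum_ite_eq' (Finset.Icc 1 (K-1)) l]
    have : l ∈ Finset.Icc 1 (K-1) ↔ 1 ≤ l := by
      rw [Finset.mem_Icc]
      omega
    by_cases h : 1 ≤ l
    · rw [if_pos (this.mpr h), if_pos h]
    · rw [if_neg (fun hh => h (this.mp hh)), if_neg h]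
  have s2 : (∑ j ∈ Finset.Icc 1 (K-1), if j = K - l ∧ 1 ≤ l
        then bb ^ (K - l) * (starRingEnd ℂ y) ^ (K - l) * (K : ℂ) else 0) =
      if 1 ≤ l then bb ^ (K - l) * (starRingEnd ℂ y) ^ (K - l) * (K : ℂ) else 0 := by
    have step : ∀ j ∈ Finset.Icc 1 (K-1), (if j = K - l ∧ 1 ≤ l
        then bb ^ (K - l) * (starRingEnd ℂ y) ^ (K - l) * (K : ℂ) else 0) =
        (if j = K - l then (if 1 ≤ l then bb ^ (K - l) * (starRingEnd ℂ y) ^ (K - l) * (K : ℂ)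
          else 0) else 0) := by
      intro j _
      by_cases h1 : j = K - l <;> by_cases h2 : 1 ≤ l <;> simp [h1, h2]
    rw [Finset.sum_congr rfl step, Finset.sum_ite_eq' (Finset.Icc 1 (K-1)) (K - l)]
    have hmem : K - l ∈ Finset.Icc 1 (K-1) ↔ 1 ≤ l := by
      rw [Finset.mem_Icc]
      omega
    by_cases h : 1 ≤ l
    · rw [if_pos (hmem.mpr h)]
    · rw [if_neg (fun hh => h (hmem.mp hh)), if_neg h]
  rw [s1, s2]
  have hKC : (K : ℂ) ≠ 0 := Nat.cast_ne_zero.mpr (by omega)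
  by_cases h : 1 ≤ l
  · have hl0 : ¬ ((K:ℤ) ∣ (l:ℤ)) := by
      intro hd
      have := int_dvd_small hK0 (by push_cast; omega) (by push_cast; omega) hd
      omega
    rw [if_neg hl0, if_pos h, if_pos h, mom, if_neg (by omega : ¬ l = 0)]
    field_simp
    ring
  · have hl0 : l = 0 := by omega
    subst hl0
    norm_num [mom]
    exact inv_mul_cancel₀ hKC

private lemma kap_conj (K : ℕ) (y w : ℂ) : starRingEnd ℂ (kap K y w) = kap K y w := by
  rw [kap, map_mul, map_inv₀, map_natCast, map_add, map_one, map_sum]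
  congr 2
  refine Finset.sum_congr rfl fun j _ => ?_
  rw [map_mul, map_add, map_pow, map_pow, map_pow, map_mul, map_mul, Complex.conj_conj,
    Complex.conj_conj]
  have hbb : starRingEnd ℂ bb = bb := by
    rw [bb, map_inv₀, map_ofNat]
  rw [hbb]
  ring

private lemma geom_third (m : ℕ) :
    ∑ j ∈ Finset.Icc 1 m, ((3:ℝ)⁻¹) ^ j ≤ 1/2 - (1/2) * (3⁻¹:ℝ) ^ m := by
  induction m with
  | zero => simp
  | succ m ih =>
    rw [Finset.sum_Icc_succ_top (by omega : 1 ≤ m + 1)]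
    have : ((3:ℝ)⁻¹) ^ (m+1) = (3⁻¹:ℝ) * (3⁻¹:ℝ)^m := by ring
    rw [this]
    nlinarith [pow_nonneg (by norm_num : (0:ℝ) ≤ 3⁻¹) m]

private lemma kap_re_nonneg {K : ℕ} (hK : 2 ≤ K) {y w : ℂ} (hy : ‖y‖ ≤ 1)
    (hw : ‖w‖ = 1) : 0 ≤ (kap K y w).re := by
  rw [kap]
  set S : ℂ := ∑ j ∈ Finset.Icc 1 (K - 1),
    bb ^ j * ((y * starRingEnd ℂ w) ^ j + (starRingEnd ℂ y * w) ^ j) with hS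
  have hSb : ‖S‖ ≤ 1 := by
    calc ‖S‖ ≤ ∑ j ∈ Finset.Icc 1 (K - 1),
        ‖bb ^ j * ((y * starRingEnd ℂ w) ^ j + (starRingEnd ℂ y * w) ^ j)‖ := by
          exact norm_sum_le _ _
      _ ≤ ∑ j ∈ Finset.Icc 1 (K - 1), 2 * ((3:ℝ)⁻¹) ^ j := by
          refine Finset.sum_le_sum fun j _ => ?_
          rw [norm_mul, norm_pow]
          have h1 : ‖bb‖ = 3⁻¹ := by
            rw [bb, norm_inv]
            norm_num
          have h2 : ‖(y * starRingEnd ℂ w) ^ j + (starRingEnd ℂ y * w) ^ j‖ ≤ 2 := by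
            refine le_trans (norm_add_le _ _) ?_
            simp only [norm_pow, norm_mul, Complex.norm_conj, hw, mul_one, one_mul]
            have : ‖y‖ ^ j ≤ 1 := pow_le_one₀ (norm_nonneg y) hy
            linarith
          rw [h1]
          calc (3⁻¹:ℝ) ^ j * ‖_‖ ≤ (3⁻¹:ℝ)^j * 2 := by
                refine mul_le_mul_of_nonneg_left h2 (by positivity)
            _ = 2 * (3⁻¹:ℝ)^j := by ring
      _ = 2 * ∑ j ∈ Finset.Icc 1 (K - 1), ((3:ℝ)⁻¹) ^ j := by rw [Finset.mul_sum]
      _ ≤ 2 * (1/2 - (1/2) * (3⁻¹:ℝ) ^ (K-1)) := by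
          have := geom_third (K-1)
          linarith
      _ ≤ 1 := by
        nlinarith [pow_nonneg (by norm_num : (0:ℝ) ≤ 3⁻¹) (K-1)]
  have hKinv : ((K : ℂ))⁻¹ = (((K:ℝ)⁻¹ : ℝ) : ℂ) := by push_cast; ring
  rw [hKinv, Complex.re_ofReal_mul]
  have : (1 + S).re = 1 + S.re := by simp
  rw [this]
  have hre : -1 ≤ S.re := by
    have := Complex.abs_re_le_norm S
    have h2 := neg_abs_le S.re
    linarith
  have : (0:ℝ) ≤ (K:ℝ)⁻¹ := by positivity
  nlinarith

private lemma kap_real {K : ℕ} (hK : 2 ≤ K) {y w : ℂ} (hy : ‖y‖ ≤ 1)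
    (hw : ‖w‖ = 1) : ‖kap K y w‖ = (kap K y w).re := by
  have h1 := kap_conj K y w
  rw [Complex.conj_eq_iff_re] at h1
  rw [← h1, Complex.norm_real, Real.norm_eq_abs, abs_of_nonneg (kap_re_nonneg hK hy hw)]
  rw [← h1]
  simp

private lemma kap_sum_eq_one {K : ℕ} (hK : 2 ≤ K) {ω : ℂ} (hω : IsPrimitiveRoot ω K)
    (hconj : starRingEnd ℂ ω = ω⁻¹) (y : ℂ) :
    ∑ k ∈ Finset.range K, kap K y (ω ^ k) = 1 := by
  have h := kap_moment hK hω hconj y (l := 0) (by omega)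
  rw [mom, if_pos rfl] at h
  simpa using h

private lemma Phi_bound {n K : ℕ} (hK : 2 ≤ K) {ω : ℂ} (hω : IsPrimitiveRoot ω K)
    (hconj : starRingEnd ℂ ω = ω⁻¹) (hωa : ‖ω‖ = 1)
    (A : Finset (Fin n → Fin K)) (a : (Fin n → Fin K) → ℂ) (M : ℝ)
    (hM : ∀ kv : Fin n → ℕ, (∀ i, kv i < K) →
      ‖∑ α ∈ A, a α * ∏ i, (ω ^ kv i) ^ (α i : ℕ)‖ ≤ M)
    (y : Fin n → ℂ) (hy : ∀ i, ‖y i‖ ≤ 1) :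
    ‖∑ α ∈ A, a α * ∏ i, mom K (α i : ℕ) (y i)‖ ≤ M := by
  classical
  have habsk : ∀ k : ℕ, ‖ω ^ k‖ = 1 := by
    intro k
    rw [norm_pow, hωa, one_pow]
  have momeq : ∀ (i : Fin n) (α : Fin n → Fin K), mom K (α i : ℕ) (y i)
      = ∑ k ∈ Finset.range K, kap K (y i) (ω ^ k) * (ω ^ k) ^ (α i : ℕ) := by
    intro i α
    rw [kap_moment hK hω hconj (y i) (by have := (α i).isLt; omega)]
  have step1 : (∑ α ∈ A, a α * ∏ i, mom K (α i : ℕ) (y i))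
      = ∑ kv ∈ Fintype.piFinset (fun _ : Fin n => Finset.range K),
          ((∏ i, kap K (y i) (ω ^ kv i)) * ∑ α ∈ A, a α * ∏ i, (ω ^ kv i) ^ (α i : ℕ)) := by
    have e1 : ∀ α ∈ A, a α * ∏ i, mom K (α i : ℕ) (y i)
        = ∑ kv ∈ Fintype.piFinset (fun _ : Fin n => Finset.range K),
            a α * ∏ i, (kap K (y i) (ω ^ kv i) * (ω ^ kv i) ^ (α i : ℕ)) := by
      intro α _
      rw [← Finset.mul_sum]
      congr 1
      calc ∏ i, mom K (α i : ℕ) (y i)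
          = ∏ i, ∑ k ∈ Finset.range K, kap K (y i) (ω ^ k) * (ω ^ k) ^ (α i : ℕ) := by
            exact Finset.prod_congr rfl fun i _ => momeq i α
        _ = _ := by
            rw [Finset.prod_univ_sum]
    rw [Finset.sum_congr rfl e1, Finset.sum_comm]
    refine Finset.sum_congr rfl fun kv _ => ?_
    rw [Finset.mul_sum]
    refine Finset.sum_congr rfl fun α _ => ?_
    rw [Finset.prod_mul_distrib]
    ring
  rw [step1]
  calc ‖_‖ ≤ ∑ kv ∈ Fintype.piFinset (fun _ : Fin n => Finset.range K),
        ‖(∏ i, kap K (y i) (ω ^ kv i)) *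
          ∑ α ∈ A, a α * ∏ i, (ω ^ kv i) ^ (α i : ℕ)‖ := norm_sum_le _ _
    _ ≤ ∑ kv ∈ Fintype.piFinset (fun _ : Fin n => Finset.range K),
        (∏ i, ‖kap K (y i) (ω ^ kv i)‖) * M := by
        refine Finset.sum_le_sum fun kv hkv => ?_
        rw [norm_mul, norm_prod]
        refine mul_le_mul_of_nonneg_left ?_ (Finset.prod_nonneg fun i _ => norm_nonneg _)
        refine hM kv fun i => ?_
        have := (Fintype.mem_piFinset.mp hkv) i
        simpa using this
    _ = (∏ i : Fin n, ∑ k ∈ Finset.range K, ‖kap K (y i) (ω ^ k)‖) * M := by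
        rw [← Finset.sum_mul]
        congr 1
        rw [Finset.prod_univ_sum]
    _ = M := by
        have : ∀ i : Fin n, ∑ k ∈ Finset.range K, ‖kap K (y i) (ω ^ k)‖ = 1 := by
          intro i
          have e : ∀ k ∈ Finset.range K, ‖kap K (y i) (ω ^ k)‖
              = (kap K (y i) (ω ^ k)).re := fun k _ => kap_real hK (hy i) (habsk k)
          rw [Finset.sum_congr rfl e, ← Complex.re_sum, kap_sum_eq_one hK hω hconj]
          simp
        rw [Finset.prod_congr rfl fun i _ => this i]
        simp

private lemma coeff_one_abs (k : ℕ) : |(1 : ℝ[X]).coeff k| ≤ 1 := by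
  rw [Polynomial.coeff_one]
  split <;> norm_num

private lemma coeff_prod_bound {t : Finset ℕ} {c : ℕ → ℝ} (hc : ∀ l ∈ t, |c l| ≤ 1) :
    ∀ k, |(∏ l ∈ t, (Polynomial.X - Polynomial.C (c l))).coeff k| ≤ 2 ^ t.card := by
  classical
  induction t using Finset.induction_on with
  | empty =>
    intro k
    simpa using coeff_one_abs k
  | @insert a t ha ih =>
    intro k
    rw [Finset.prod_insert ha, Finset.card_insert_of_notMem ha]
    have hca : |c a| ≤ 1 := hc a (Finset.mem_insert_self a t)
    have ih' := ih (fun l hl => hc l (Finset.mem_insert_of_mem hl))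
    have expand : ((Polynomial.X - Polynomial.C (c a)) * ∏ l ∈ t, (Polynomial.X - Polynomial.C (c l))).coeff k
        = (Polynomial.X * ∏ l ∈ t, (Polynomial.X - Polynomial.C (c l))).coeff k
          - c a * (∏ l ∈ t, (Polynomial.X - Polynomial.C (c l))).coeff k := by
      rw [sub_mul, Polynomial.coeff_sub, Polynomial.coeff_C_mul]
    rw [expand]
    have hX : |(Polynomial.X * ∏ l ∈ t, (Polynomial.X - Polynomial.C (c l))).coeff k| ≤ 2 ^ t.card := by
      cases k with
      | zero =>
        rw [Polynomial.mul_coeff_zero, Polynomial.coeff_X_zero, zero_mul, abs_zero]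
        positivity
      | succ k =>
        rw [Polynomial.coeff_X_mul]
        exact ih' k
    have h2 : |c a * (∏ l ∈ t, (Polynomial.X - Polynomial.C (c l))).coeff k| ≤ 2 ^ t.card := by
      rw [abs_mul]
      calc |c a| * |(∏ l ∈ t, (Polynomial.X - Polynomial.C (c l))).coeff k|
          ≤ 1 * 2 ^ t.card := by
            refine mul_le_mul hca (ih' k) (abs_nonneg _) (by norm_num)
        _ = 2 ^ t.card := by ring
    calc |_ - _| ≤ |(Polynomial.X * ∏ l ∈ t, (Polynomial.X - Polynomial.C (c l))).coeff k|
          + |c a * (∏ l ∈ t, (Polynomial.X - Polynomial.C (c l))).coeff k| := abs_sub _ _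
      _ ≤ 2 ^ t.card + 2 ^ t.card := add_le_add hX h2
      _ = 2 ^ (t.card + 1) := by ring

private lemma pow_le_three_pow_factorial : ∀ D : ℕ, (D : ℝ) ^ D ≤ 3 ^ D * (Nat.factorial D : ℝ) := by
  intro D
  induction D with
  | zero => norm_num
  | succ n ih =>
    have key : ((n : ℝ) + 1) ^ n ≤ 3 * (n : ℝ) ^ n := by
      rcases Nat.eq_zero_or_pos n with h | h
      · subst h; norm_num
      · have hn0 : (n : ℝ) ≠ 0 := Nat.cast_ne_zero.mpr (by omega)
        have hsplit : ((n : ℝ) + 1) = (n : ℝ) * (1 + 1 / (n : ℝ)) := by field_simp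
        rw [hsplit, mul_pow]
        have h1 : (1 + 1 / (n : ℝ)) ≤ Real.exp (1 / (n : ℝ)) := by
          have := Real.add_one_le_exp (1 / (n : ℝ))
          linarith
        have h2 : (1 + 1 / (n : ℝ)) ^ n ≤ Real.exp (1 / (n : ℝ)) ^ n := by
          refine pow_le_pow_left₀ ?_ h1 n
          positivity
        have h3 : Real.exp (1 / (n : ℝ)) ^ n = Real.exp 1 := by
          rw [← Real.exp_nat_mul]
          congr 1
          field_simp
        have h4 : Real.exp 1 ≤ 3 := by
          have := Real.exp_one_lt_d9
          linarith
        have hnn : (0:ℝ) ≤ (n:ℝ) ^ n := by positivity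
        calc (n:ℝ)^n * (1 + 1/(n:ℝ))^n ≤ (n:ℝ)^n * 3 := by
              refine mul_le_mul_of_nonneg_left ?_ hnn
              calc (1 + 1/(n:ℝ))^n ≤ Real.exp (1/(n:ℝ)) ^ n := h2
                _ = Real.exp 1 := h3
                _ ≤ 3 := h4
          _ = 3 * (n:ℝ)^n := by ring
    have hfact : (Nat.factorial (n+1) : ℝ) = ((n:ℝ)+1) * (Nat.factorial n : ℝ) := by
      rw [Nat.factorial_succ]
      push_cast
      ring
    have hcast : ((n+1 : ℕ) : ℝ) = (n : ℝ) + 1 := by push_cast; ring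
    rw [hcast, hfact]
    calc ((n:ℝ)+1) ^ (n+1) = ((n:ℝ)+1) * ((n:ℝ)+1)^n := by ring
      _ ≤ ((n:ℝ)+1) * (3 * (n:ℝ)^n) := by
          refine mul_le_mul_of_nonneg_left key (by positivity)
      _ ≤ ((n:ℝ)+1) * (3 * (3^n * (Nat.factorial n : ℝ))) := by
          refine mul_le_mul_of_nonneg_left (mul_le_mul_of_nonneg_left ih (by norm_num)) (by positivity)
      _ = 3 ^ (n+1) * (((n:ℝ)+1) * (Nat.factorial n : ℝ)) := by ring

private lemma erase_split {D j : ℕ} (hj : j ≤ D) :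
    (Finset.range (D+1)).erase j = Finset.range j ∪ Finset.Ico (j+1) (D+1) := by
  ext l
  simp only [Finset.mem_erase, Finset.mem_range, Finset.mem_union, Finset.mem_Ico]
  omega

private lemma factprod {D j : ℕ} (hj : j ≤ D) :
    ∏ l ∈ (Finset.range (D+1)).erase j, |(j:ℝ) - (l:ℝ)|
      = (Nat.factorial j : ℝ) * (Nat.factorial (D - j) : ℝ) := by
  rw [erase_split hj, Finset.prod_union]
  · congr 1
    · have e : ∀ l ∈ Finset.range j, |(j:ℝ) - (l:ℝ)| = ((j - l : ℕ) : ℝ) := by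
        intro l hl
        rw [Finset.mem_range] at hl
        have : (j:ℝ) - (l:ℝ) = ((j - l : ℕ) : ℝ) := by
          push_cast [Nat.cast_sub (le_of_lt hl)]
          ring
        rw [this, abs_of_nonneg (by positivity)]
      rw [Finset.prod_congr rfl e, ← Nat.cast_prod]
      congr 1
      calc ∏ l ∈ Finset.range j, (j - l) = ∏ l ∈ Finset.range j, (l + 1) := by
            rw [← Finset.prod_range_reflect (fun l => l + 1) j]
            refine Finset.prod_congr rfl fun l hl => ?_
            rw [Finset.mem_range] at hl
            omega
        _ = Nat.factorial j := Finset.prod_range_add_one_eq_factorial j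
    · have e : ∀ l ∈ Finset.Ico (j+1) (D+1), |(j:ℝ) - (l:ℝ)| = ((l - j : ℕ) : ℝ) := by
        intro l hl
        rw [Finset.mem_Ico] at hl
        have : (j:ℝ) - (l:ℝ) = -(((l - j : ℕ) : ℝ)) := by
          push_cast [Nat.cast_sub (by omega : j ≤ l)]
          ring
        rw [this, abs_neg, abs_of_nonneg (by positivity)]
      rw [Finset.prod_congr rfl e, ← Nat.cast_prod]
      congr 1
      rw [Finset.prod_Ico_eq_prod_range]
      have : D + 1 - (j + 1) = D - j := by omega
      rw [this]
      calc ∏ k ∈ Finset.range (D - j), (j + 1 + k - j) = ∏ k ∈ Finset.range (D - j), (k + 1) := by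
            refine Finset.prod_congr rfl fun k _ => by omega
        _ = Nat.factorial (D - j) := Finset.prod_range_add_one_eq_factorial (D - j)
  · rw [Finset.disjoint_left]
    intro l hl hl'
    rw [Finset.mem_range] at hl
    rw [Finset.mem_Ico] at hl'
    omega

private lemma fact_ge {D j : ℕ} (hj : j ≤ D) :
    (Nat.factorial D : ℝ) ≤ 2 ^ D * ((Nat.factorial j : ℝ) * (Nat.factorial (D - j) : ℝ)) := by
  have h1 : Nat.choose D j * Nat.factorial j * Nat.factorial (D - j) = Nat.factorial D :=
    Nat.choose_mul_factorial_mul_factorial hj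
  have h2 : Nat.choose D j ≤ 2 ^ D := by
    calc Nat.choose D j ≤ ∑ m ∈ Finset.range (D + 1), Nat.choose D m := by
          refine Finset.single_le_sum (fun m _ => Nat.zero_le _) ?_
          rw [Finset.mem_range]
          omega
      _ = 2 ^ D := Nat.sum_range_choose D
  calc (Nat.factorial D : ℝ) = (Nat.choose D j : ℝ) * ((Nat.factorial j : ℝ) * (Nat.factorial (D - j) : ℝ)) := by
        rw [← h1]; push_cast; ring
    _ ≤ 2 ^ D * ((Nat.factorial j : ℝ) * (Nat.factorial (D - j) : ℝ)) := by
        refine mul_le_mul_of_nonneg_right ?_ (by positivity)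
        exact_mod_cast h2

private lemma lagrange_weights (D q : ℕ) (hD : 1 ≤ D) (hq : q ≤ D) :
    ∃ w : ℕ → ℝ,
      (∀ p : ℕ, p ≤ D → ∑ j ∈ Finset.range (D+1), w j * (-1 + 2*(j:ℝ)/(D:ℝ))^p
          = if p = q then 1 else 0) ∧
      (∑ j ∈ Finset.range (D+1), |w j| ≤ (D+1) * 6^D) := by
  classical
  set v : ℕ → ℝ := fun j => -1 + 2*(j:ℝ)/(D:ℝ) with hv
  have hD0 : (D:ℝ) ≠ 0 := Nat.cast_ne_zero.mpr (by omega)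
  have hDpos : (0:ℝ) < D := by positivity
  have hInj : Set.InjOn v (Finset.range (D+1)) := by
    intro j _ l _ h
    simp only [hv] at h
    field_simp at h
    have h' : (j:ℝ) = l := by linarith
    exact_mod_cast h'
  have hnode : ∀ l : ℕ, l ≤ D → |v l| ≤ 1 := by
    intro l hl
    have hcast : (l:ℝ) ≤ (D:ℝ) := Nat.cast_le.mpr hl
    have h0 : (0:ℝ) ≤ 2*(l:ℝ)/(D:ℝ) := by positivity
    have h2 : 2*(l:ℝ)/(D:ℝ) ≤ 2 := by
      rw [div_le_iff₀ hDpos]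
      linarith
    rw [abs_le]
    constructor
    · simp only [hv]
      linarith
    · simp only [hv]
      linarith
  refine ⟨fun j => (Lagrange.basis (Finset.range (D+1)) v j).coeff q, ?_, ?_⟩
  · intro p hp
    have hdeg : ((Polynomial.X : ℝ[X]) ^ p).degree < (Finset.range (D+1)).card := by
      rw [Polynomial.degree_X_pow, Finset.card_range]
      exact_mod_cast (by omega : p < D + 1)
    have hXp := Lagrange.eq_interpolate hInj hdeg
    have heval : (fun i => Polynomial.eval (v i) ((Polynomial.X : ℝ[X]) ^ p)) = fun i => (v i)^p := by
      funext i
      simp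
    rw [heval] at hXp
    have hcoeff := congrArg (fun P => Polynomial.coeff P q) hXp
    simp only [Lagrange.interpolate_apply] at hcoeff
    rw [Polynomial.coeff_X_pow, Polynomial.finset_sum_coeff] at hcoeff
    simp only [Polynomial.coeff_C_mul] at hcoeff
    rw [show ((if q = p then (1:ℝ) else 0) = if p = q then 1 else 0) by
      by_cases h : p = q
      · simp [h]
      · rw [if_neg (fun hh => h hh.symm), if_neg h]] at hcoeff
    calc ∑ j ∈ Finset.range (D+1),
          (fun j => (Lagrange.basis (Finset.range (D+1)) v j).coeff q) j * (-1 + 2*(j:ℝ)/(D:ℝ))^p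
        = ∑ x ∈ Finset.range (D+1), v x ^ p * (Lagrange.basis (Finset.range (D+1)) v x).coeff q := by
          refine Finset.sum_congr rfl fun j _ => ?_
          simp only [hv]
          ring
      _ = if p = q then 1 else 0 := hcoeff.symm
  · have hwj : ∀ j ∈ Finset.range (D+1),
        |(Lagrange.basis (Finset.range (D+1)) v j).coeff q| ≤ 6^D := by
      intro j hjmem
      have hjD : j ≤ D := by
        rw [Finset.mem_range] at hjmem
        omega
      have hbasis : Lagrange.basis (Finset.range (D+1)) v j
          = Polynomial.C (∏ l ∈ (Finset.range (D+1)).erase j, (v j - v l)⁻¹) *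
            ∏ l ∈ (Finset.range (D+1)).erase j, (Polynomial.X - Polynomial.C (v l)) := by
        unfold Lagrange.basis Lagrange.basisDivisor
        rw [Finset.prod_mul_distrib]
        congr 1
        exact (map_prod (Polynomial.C : ℝ →+* ℝ[X]) (fun l => (v j - v l)⁻¹)
          ((Finset.range (D+1)).erase j)).symm
      have hcard : ((Finset.range (D+1)).erase j).card = D := by
        rw [Finset.card_erase_of_mem hjmem, Finset.card_range]
        omega
      have hcb : |(∏ l ∈ (Finset.range (D+1)).erase j,
          (Polynomial.X - Polynomial.C (v l))).coeff q| ≤ 2 ^ D := by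
        have := coeff_prod_bound (t := (Finset.range (D+1)).erase j) (c := v)
          (fun l hl => hnode l (by
            have := Finset.mem_of_mem_erase hl
            rw [Finset.mem_range] at this
            omega)) q
        rwa [hcard] at this
      have hprodabs : ∏ l ∈ (Finset.range (D+1)).erase j, |v j - v l|
          = (2/(D:ℝ))^D * ((Nat.factorial j : ℝ) * (Nat.factorial (D-j) : ℝ)) := by
        have e : ∀ l ∈ (Finset.range (D+1)).erase j,
            |v j - v l| = (2/(D:ℝ)) * |(j:ℝ) - (l:ℝ)| := by
          intro l _
          have : v j - v l = (2/(D:ℝ)) * ((j:ℝ) - (l:ℝ)) := by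
            simp only [hv]
            field_simp
            ring
          rw [this, abs_mul, abs_of_pos (by positivity : (0:ℝ) < 2/(D:ℝ))]
        rw [Finset.prod_congr rfl e, Finset.prod_mul_distrib, Finset.prod_const, hcard,
          factprod hjD]
      set F : ℝ := (Nat.factorial j : ℝ) * (Nat.factorial (D-j) : ℝ) with hF
      have hFpos : 0 < F := by
        rw [hF]
        have := Nat.factorial_pos j
        have := Nat.factorial_pos (D-j)
        positivity
      have habs : |(Lagrange.basis (Finset.range (D+1)) v j).coeff q|
          = (∏ l ∈ (Finset.range (D+1)).erase j, |v j - v l|)⁻¹ *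
            |(∏ l ∈ (Finset.range (D+1)).erase j,
              (Polynomial.X - Polynomial.C (v l))).coeff q| := by
        rw [hbasis, Polynomial.coeff_C_mul, abs_mul]
        congr 1
        rw [abs_prod, ← Finset.prod_inv_distrib]
        refine Finset.prod_congr rfl fun l _ => ?_
        rw [abs_inv]
      rw [habs, hprodabs]
      have hineq : ((2/(D:ℝ))^D * F)⁻¹ * |(∏ l ∈ (Finset.range (D+1)).erase j,
          (Polynomial.X - Polynomial.C (v l))).coeff q| ≤ ((2/(D:ℝ))^D * F)⁻¹ * 2^D := by
        refine mul_le_mul_of_nonneg_left hcb (by positivity)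
      refine hineq.trans ?_
      have heq : ((2/(D:ℝ))^D * F)⁻¹ * 2^D = (D:ℝ)^D / F := by
        rw [div_pow]
        field_simp
      rw [heq, div_le_iff₀ hFpos]
      calc (D:ℝ)^D ≤ 3^D * (Nat.factorial D : ℝ) := pow_le_three_pow_factorial D
        _ ≤ 3^D * (2^D * F) := by
            refine mul_le_mul_of_nonneg_left (fact_ge hjD) (by positivity)
        _ = 6^D * F := by
            rw [show (6:ℝ) = 2*3 by norm_num, mul_pow]
            ring
    calc ∑ j ∈ Finset.range (D+1), |(Lagrange.basis (Finset.range (D+1)) v j).coeff q|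
        ≤ ∑ _j ∈ Finset.range (D+1), (6:ℝ)^D := Finset.sum_le_sum hwj
      _ = (D+1) * 6^D := by
          rw [Finset.sum_const, Finset.card_range, nsmul_eq_mul]
          push_cast
          ring

private def uu {n K : ℕ} (α : Fin n → Fin K) (T : Finset (Fin n)) : ℕ :=
  ∑ i ∈ Finset.univ \ T, (α i : ℕ)

private def vv {n K : ℕ} (α : Fin n → Fin K) (T : Finset (Fin n)) : ℕ :=
  ∑ i ∈ T, (K - (α i : ℕ))

private def gg {n K : ℕ} (x : Fin n → ℂ) (α : Fin n → Fin K) (T : Finset (Fin n)) : ℂ :=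
  (∏ i ∈ Finset.univ \ T, (bb ^ (α i : ℕ) * x i ^ (α i : ℕ))) *
  ∏ i ∈ T, (if (α i : ℕ) = 0 then (0:ℂ)
    else bb ^ (K - (α i : ℕ)) * (starRingEnd ℂ (x i)) ^ (K - (α i : ℕ)))

private lemma mom_scale {K : ℕ} {j : ℕ} (y c : ℂ) :
    mom K j (c * y) = ((if j = 0 then (0:ℂ) else bb ^ (K - j) * (starRingEnd ℂ y) ^ (K - j)) *
        (starRingEnd ℂ c) ^ (K - j)) + (bb ^ j * y ^ j) * c ^ j := by
  by_cases h : j = 0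
  · subst h
    simp [mom]
  · rw [mom, if_neg h, if_neg h, map_mul, mul_pow, mul_pow]
    ring

/-- Expansion of the smoothed polynomial at a scaled point. -/
private lemma expand_lemma {n K : ℕ} (A : Finset (Fin n → Fin K)) (a : (Fin n → Fin K) → ℂ)
    (x : Fin n → ℂ) (c : ℂ) :
    (∑ α ∈ A, a α * ∏ i, mom K (α i : ℕ) (c * x i))
      = ∑ α ∈ A, ∑ T ∈ (Finset.univ : Finset (Fin n)).powerset,
          a α * (gg x α T * (c ^ uu α T * (starRingEnd ℂ c) ^ vv α T)) := by
  refine Finset.sum_congr rfl fun α _ => ?_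
  rw [← Finset.mul_sum]
  congr 1
  calc ∏ i, mom K (α i : ℕ) (c * x i)
      = ∏ i, (((if (α i : ℕ) = 0 then (0:ℂ)
          else bb ^ (K - (α i : ℕ)) * (starRingEnd ℂ (x i)) ^ (K - (α i : ℕ))) *
            (starRingEnd ℂ c) ^ (K - (α i : ℕ)))
          + (bb ^ (α i : ℕ) * x i ^ (α i : ℕ)) * c ^ (α i : ℕ)) := by
        exact Finset.prod_congr rfl fun i _ => mom_scale (x i) c
    _ = ∑ T ∈ (Finset.univ : Finset (Fin n)).powerset,
          (∏ i ∈ T, ((if (α i : ℕ) = 0 then (0:ℂ)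
            else bb ^ (K - (α i : ℕ)) * (starRingEnd ℂ (x i)) ^ (K - (α i : ℕ))) *
              (starRingEnd ℂ c) ^ (K - (α i : ℕ)))) *
          ∏ i ∈ Finset.univ \ T, ((bb ^ (α i : ℕ) * x i ^ (α i : ℕ)) * c ^ (α i : ℕ)) :=
        Finset.prod_add _ _ _
    _ = _ := by
        refine Finset.sum_congr rfl fun T _ => ?_
        rw [Finset.prod_mul_distrib, Finset.prod_mul_distrib,
          Finset.prod_pow_eq_pow_sum, Finset.prod_pow_eq_pow_sum]
        rw [gg, uu, vv]
        ring

/-- The main extraction lemma. -/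
private lemma extraction {n K d q : ℕ} (hK : 2 ≤ K) (hd : 1 ≤ d) (hq : q ≤ d)
    (A : Finset (Fin n → Fin K)) (hA : ∀ α ∈ A, ∑ i, (α i : ℕ) ≤ d)
    (a : (Fin n → Fin K) → ℂ) (x : Fin n → ℂ) (M : ℝ)
    (hΦ : ∀ y : Fin n → ℂ, (∀ i, ‖y i‖ ≤ 1) →
          ‖∑ α ∈ A, a α * ∏ i, mom K (α i : ℕ) (y i)‖ ≤ M)
    (hx : ∀ i, ‖x i‖ ≤ 1) :
    ‖∑ α ∈ A.filter (fun α => ∑ i, (α i:ℕ) = q), a α * ∏ i, x i ^ (α i : ℕ)‖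
      ≤ 3 ^ q * ((2*(d:ℝ)+1) * 6 ^ (2*d)) * M := by
  classical
  set D := 2 * d with hD
  set N := (K + 2) * d + 1 with hN
  have hN0 : N ≠ 0 := by omega
  have hNpos : 0 < N := by omega
  have hM0 : 0 ≤ M := le_trans (norm_nonneg _) (hΦ (fun _ => 0) (fun i => by simp))
  set ζ : ℂ := Complex.exp (2 * (Real.pi : ℂ) * Complex.I / (N : ℂ)) with hζdef
  have hζ : IsPrimitiveRoot ζ N := Complex.isPrimitiveRoot_exp N hN0
  have hζ0 : ζ ≠ 0 := hζ.ne_zero hN0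
  have hζconj : starRingEnd ℂ ζ = ζ⁻¹ := by
    rw [hζdef, ← Complex.exp_conj]
    rw [show starRingEnd ℂ (2 * (Real.pi : ℂ) * Complex.I / (N : ℂ))
        = -(2 * (Real.pi : ℂ) * Complex.I / (N : ℂ)) by
      simp [map_div₀, Complex.conj_I, map_ofNat]
      ring]
    rw [Complex.exp_neg]
  have hζabs : ‖ζ‖ = 1 := by
    rw [hζdef, show 2 * (Real.pi : ℂ) * Complex.I / (N : ℂ)
        = ((2 * Real.pi / (N : ℝ) : ℝ) : ℂ) * Complex.I by push_cast; ring]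
    exact Complex.norm_exp_ofReal_mul_I _
  obtain ⟨w, hw1, hw2⟩ := lagrange_weights D q (by omega) (by omega)
  set r : ℕ → ℝ := fun j => -1 + 2*(j:ℝ)/(D:ℝ) with hr
  have hDpos : (0:ℝ) < D := by
    have h1 : (0:ℕ) < D := by omega
    exact_mod_cast h1
  have hrb : ∀ j, j ≤ D → |r j| ≤ 1 := by
    intro j hj
    have hcast : (j:ℝ) ≤ (D:ℝ) := Nat.cast_le.mpr hj
    have h0 : (0:ℝ) ≤ 2*(j:ℝ)/(D:ℝ) := by positivity
    have h2 : 2*(j:ℝ)/(D:ℝ) ≤ 2 := by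
      rw [div_le_iff₀ hDpos]
      linarith
    rw [hr, abs_le]
    constructor
    · simp only []
      linarith
    · simp only []
      linarith
  -- the extraction functional
  set E : ℂ := ∑ j ∈ Finset.range (D+1), ∑ m ∈ Finset.range N,
      (w j : ℂ) * (starRingEnd ℂ (ζ ^ m)) ^ q *
      (∑ α ∈ A, a α * ∏ i, mom K (α i : ℕ) ((((r j : ℝ) : ℂ) * ζ ^ m) * x i)) with hE
  -- zpow identity for the phases
  have hpowζ : ∀ (m : ℕ) (t : ℤ), (ζ ^ m) ^ t = ζ ^ ((m : ℤ) * t) := by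
    intro m t
    rw [← zpow_natCast ζ m, ← zpow_mul]
  have hzpow : ∀ (m u v : ℕ), (starRingEnd ℂ (ζ ^ m)) ^ q *
      ((ζ ^ m) ^ u * (starRingEnd ℂ (ζ ^ m)) ^ v) = ζ ^ ((m : ℤ) * ((u : ℤ) - (v : ℤ) - (q : ℤ))) := by
    intro m u v
    have hW0 : ζ ^ m ≠ 0 := pow_ne_zero _ hζ0
    rw [map_pow, hζconj, inv_pow]
    rw [inv_pow, inv_pow]
    rw [← zpow_natCast (ζ ^ m) q, ← zpow_natCast (ζ ^ m) u, ← zpow_natCast (ζ ^ m) v,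
      ← zpow_neg, ← zpow_neg, ← zpow_add₀ hW0, ← zpow_add₀ hW0, hpowζ]
    congr 1
    ring
  -- first: the grand rearrangement
  have step1 : E = ∑ α ∈ A, ∑ T ∈ (Finset.univ : Finset (Fin n)).powerset,
      (a α * gg x α T) *
        ((∑ j ∈ Finset.range (D+1), (w j : ℂ) * ((r j : ℝ) : ℂ) ^ (uu α T + vv α T)) *
         (∑ m ∈ Finset.range N, ζ ^ ((m : ℤ) * ((uu α T : ℤ) - (vv α T : ℤ) - (q : ℤ))))) := by
    rw [hE]
    have inner : ∀ j ∈ Finset.range (D+1), ∀ m ∈ Finset.range N,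
        (w j : ℂ) * (starRingEnd ℂ (ζ ^ m)) ^ q *
          (∑ α ∈ A, a α * ∏ i, mom K (α i : ℕ) ((((r j : ℝ) : ℂ) * ζ ^ m) * x i))
        = ∑ α ∈ A, ∑ T ∈ (Finset.univ : Finset (Fin n)).powerset,
            (a α * gg x α T) * (((w j : ℂ) * ((r j : ℝ) : ℂ) ^ (uu α T + vv α T)) *
              ζ ^ ((m : ℤ) * ((uu α T : ℤ) - (vv α T : ℤ) - (q : ℤ)))) := by
      intro j _ m _
      rw [expand_lemma A a x (((r j : ℝ) : ℂ) * ζ ^ m), Finset.mul_sum]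
      refine Finset.sum_congr rfl fun α _ => ?_
      rw [Finset.mul_sum]
      refine Finset.sum_congr rfl fun T _ => ?_
      have hcc : starRingEnd ℂ (((r j : ℝ) : ℂ) * ζ ^ m)
          = ((r j : ℝ) : ℂ) * (starRingEnd ℂ (ζ ^ m)) := by
        rw [map_mul, Complex.conj_ofReal]
      rw [hcc, mul_pow, mul_pow, ← hzpow m (uu α T) (vv α T), pow_add]
      ring
    calc (∑ j ∈ Finset.range (D+1), ∑ m ∈ Finset.range N,
          (w j : ℂ) * (starRingEnd ℂ (ζ ^ m)) ^ q *
          (∑ α ∈ A, a α * ∏ i, mom K (α i : ℕ) ((((r j : ℝ) : ℂ) * ζ ^ m) * x i)))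
        = ∑ j ∈ Finset.range (D+1), ∑ m ∈ Finset.range N, ∑ α ∈ A,
            ∑ T ∈ (Finset.univ : Finset (Fin n)).powerset,
            (a α * gg x α T) * (((w j : ℂ) * ((r j : ℝ) : ℂ) ^ (uu α T + vv α T)) *
              ζ ^ ((m : ℤ) * ((uu α T : ℤ) - (vv α T : ℤ) - (q : ℤ)))) := by
          exact Finset.sum_congr rfl fun j hj => Finset.sum_congr rfl fun m hm => inner j hj m hm
      _ = ∑ α ∈ A, ∑ T ∈ (Finset.univ : Finset (Fin n)).powerset,
            ∑ j ∈ Finset.range (D+1), ∑ m ∈ Finset.range N,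
            (a α * gg x α T) * (((w j : ℂ) * ((r j : ℝ) : ℂ) ^ (uu α T + vv α T)) *
              ζ ^ ((m : ℤ) * ((uu α T : ℤ) - (vv α T : ℤ) - (q : ℤ)))) := by
          have swap4 : ∀ (f : ℕ → ℕ → (Fin n → Fin K) → Finset (Fin n) → ℂ),
              (∑ j ∈ Finset.range (D+1), ∑ m ∈ Finset.range N, ∑ α ∈ A,
                ∑ T ∈ (Finset.univ : Finset (Fin n)).powerset, f j m α T)
              = ∑ α ∈ A, ∑ T ∈ (Finset.univ : Finset (Fin n)).powerset,
                ∑ j ∈ Finset.range (D+1), ∑ m ∈ Finset.range N, f j m α T := by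
            intro f
            calc (∑ j ∈ Finset.range (D+1), ∑ m ∈ Finset.range N, ∑ α ∈ A,
                  ∑ T ∈ (Finset.univ : Finset (Fin n)).powerset, f j m α T)
                = ∑ j ∈ Finset.range (D+1), ∑ α ∈ A, ∑ m ∈ Finset.range N,
                  ∑ T ∈ (Finset.univ : Finset (Fin n)).powerset, f j m α T :=
                  Finset.sum_congr rfl fun j _ => Finset.sum_comm
              _ = ∑ α ∈ A, ∑ j ∈ Finset.range (D+1), ∑ m ∈ Finset.range N,
                  ∑ T ∈ (Finset.univ : Finset (Fin n)).powerset, f j m α T :=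
                  Finset.sum_comm
              _ = ∑ α ∈ A, ∑ j ∈ Finset.range (D+1),
                  ∑ T ∈ (Finset.univ : Finset (Fin n)).powerset,
                  ∑ m ∈ Finset.range N, f j m α T :=
                  Finset.sum_congr rfl fun α _ => Finset.sum_congr rfl fun j _ =>
                    Finset.sum_comm
              _ = ∑ α ∈ A, ∑ T ∈ (Finset.univ : Finset (Fin n)).powerset,
                  ∑ j ∈ Finset.range (D+1), ∑ m ∈ Finset.range N, f j m α T :=
                  Finset.sum_congr rfl fun α _ => Finset.sum_comm
          exact swap4 _
      _ = _ := by
          refine Finset.sum_congr rfl fun α _ => Finset.sum_congr rfl fun T _ => ?_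
          rw [Finset.sum_mul_sum, Finset.mul_sum]
          refine Finset.sum_congr rfl fun j _ => ?_
          rw [Finset.mul_sum]
  -- evaluate the Lagrange sums and phase sums
  have hRS : ∀ p : ℕ, p ≤ D → (∑ j ∈ Finset.range (D+1), (w j : ℂ) * ((r j : ℝ) : ℂ) ^ p)
      = if p = q then 1 else 0 := by
    intro p hp
    have h := hw1 p hp
    have hcast : (∑ j ∈ Finset.range (D+1), (w j : ℂ) * ((r j : ℝ) : ℂ) ^ p)
        = (((∑ j ∈ Finset.range (D+1), w j * (r j) ^ p : ℝ)) : ℂ) := by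
      push_cast
      rfl
    rw [hcast, h]
    split <;> simp
  have hZS : ∀ t : ℤ, (∑ m ∈ Finset.range N, ζ ^ ((m : ℤ) * t))
      = if (N:ℤ) ∣ t then (N:ℂ) else 0 := fun t => geom_orthog hζ t
  have key : ∀ α ∈ A, ∀ T ∈ (Finset.univ : Finset (Fin n)).powerset,
      (a α * gg x α T) *
        ((∑ j ∈ Finset.range (D+1), (w j : ℂ) * ((r j : ℝ) : ℂ) ^ (uu α T + vv α T)) *
         (∑ m ∈ Finset.range N, ζ ^ ((m : ℤ) * ((uu α T : ℤ) - (vv α T : ℤ) - (q : ℤ)))))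
      = if (∑ i, (α i : ℕ)) = q ∧ T = ∅
          then (N : ℂ) * (a α * ∏ i, (bb ^ (α i : ℕ) * x i ^ (α i : ℕ))) else 0 := by
    intro α hα T hT
    by_cases hzero : ∃ i ∈ T, (α i : ℕ) = 0
    · obtain ⟨i, hiT, hi0⟩ := hzero
      have hgz : gg x α T = 0 := by
        rw [gg]
        have hz : (∏ i ∈ T, (if (α i : ℕ) = 0 then (0:ℂ)
            else bb ^ (K - (α i:ℕ)) * (starRingEnd ℂ (x i)) ^ (K - (α i:ℕ)))) = 0 :=
          Finset.prod_eq_zero hiT (by rw [if_pos hi0])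
        rw [hz, mul_zero]
      have hcond : ¬ ((∑ i, (α i : ℕ)) = q ∧ T = ∅) := by
        rintro ⟨-, hT0⟩
        exact (Finset.ne_empty_of_mem hiT) hT0
      rw [hgz, mul_zero, zero_mul, if_neg hcond]
    · push_neg at hzero
      have hsum_le : ∑ i, (α i : ℕ) ≤ d := hA α hα
      have hu : uu α T ≤ d := by
        refine le_trans ?_ hsum_le
        rw [uu]
        exact Finset.sum_le_sum_of_subset (Finset.sdiff_subset)
      have hTsum : ∑ i ∈ T, (α i : ℕ) ≤ d :=
        le_trans (Finset.sum_le_sum_of_subset (Finset.subset_univ T)) hsum_le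
      have hcardT : T.card ≤ ∑ i ∈ T, (α i : ℕ) := by
        rw [Finset.card_eq_sum_ones]
        exact Finset.sum_le_sum fun i hi => Nat.one_le_iff_ne_zero.mpr (hzero i hi)
      have hv : vv α T ≤ (K - 1) * d := by
        rw [vv]
        calc ∑ i ∈ T, (K - (α i : ℕ)) ≤ ∑ _i ∈ T, (K - 1) := by
              refine Finset.sum_le_sum fun i hi => ?_
              have := hzero i hi
              omega
          _ = (K - 1) * T.card := by rw [Finset.sum_const, smul_eq_mul, mul_comm]
          _ ≤ (K - 1) * d := Nat.mul_le_mul_left _ (le_trans hcardT hTsum)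
      have hvZ : (vv α T : ℤ) ≤ (K : ℤ) * (d : ℤ) - (d : ℤ) := by
        calc (vv α T : ℤ) ≤ (((K - 1) * d : ℕ) : ℤ) := by exact_mod_cast hv
          _ = (K : ℤ) * d - d := by
              push_cast [Nat.cast_sub (by omega : 1 ≤ K)]
              ring
      have hNZ : (N : ℤ) = (K : ℤ) * d + 2 * d + 1 := by
        rw [hN]
        push_cast
        ring
      have hKd0 : (0:ℤ) ≤ (K : ℤ) * (d : ℤ) := by positivity
      by_cases hc0 : (uu α T : ℤ) - (vv α T : ℤ) - (q : ℤ) = 0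
      · have huv : uu α T = vv α T + q := by omega
        have huvD : uu α T + vv α T ≤ D := by omega
        rw [hc0, hZS 0, if_pos (dvd_zero _), hRS _ huvD]
        by_cases huvq : uu α T + vv α T = q
        · have hv0 : vv α T = 0 := by omega
          have hT0 : T = ∅ := by
            by_contra hTne
            obtain ⟨i, hiT⟩ := Finset.nonempty_iff_ne_empty.mpr hTne
            have h1 : 1 ≤ K - (α i : ℕ) := by
              have := (α i).isLt
              omega
            have h2 : K - (α i : ℕ) ≤ vv α T := by
              rw [vv]
              exact Finset.single_le_sum (f := fun i => K - (α i : ℕ))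
                (fun _ _ => Nat.zero_le _) hiT
            omega
          subst hT0
          have huniv : uu α ∅ = ∑ i, (α i : ℕ) := by rw [uu, Finset.sdiff_empty]
          have hsq : (∑ i, (α i : ℕ)) = q := by omega
          rw [if_pos huvq, if_pos ⟨hsq, rfl⟩, gg, Finset.sdiff_empty, Finset.prod_empty]
          ring
        · rw [if_neg huvq]
          have hcond : ¬ ((∑ i, (α i : ℕ)) = q ∧ T = ∅) := by
            rintro ⟨hsq, hT0⟩
            subst hT0
            have huniv : uu α ∅ = ∑ i, (α i : ℕ) := by rw [uu, Finset.sdiff_empty]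
            have hv0 : vv α ∅ = 0 := by rw [vv, Finset.sum_empty]
            omega
          rw [if_neg hcond]
          ring
      · have hnd : ¬ ((N:ℤ) ∣ ((uu α T : ℤ) - (vv α T : ℤ) - (q : ℤ))) := by
          intro hdvd
          refine hc0 (int_dvd_small hNpos ?_ ?_ hdvd)
          · have h1 : (0:ℤ) ≤ (uu α T : ℤ) := Int.ofNat_nonneg _
            have h2 : (q : ℤ) ≤ (d : ℤ) := by exact_mod_cast hq
            have h3 : (0:ℤ) ≤ (q : ℤ) := Int.ofNat_nonneg _
            linarith
          · have h1 : (uu α T : ℤ) ≤ (d : ℤ) := by exact_mod_cast hu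
            have h2 : (0:ℤ) ≤ (vv α T : ℤ) := Int.ofNat_nonneg _
            have h3 : (0:ℤ) ≤ (q : ℤ) := Int.ofNat_nonneg _
            have h4 : (1:ℤ) ≤ (d:ℤ) := by exact_mod_cast hd
            linarith
        rw [hZS, if_neg hnd, mul_zero, mul_zero]
        have hcond : ¬ ((∑ i, (α i : ℕ)) = q ∧ T = ∅) := by
          rintro ⟨hsq, hT0⟩
          subst hT0
          have huniv : uu α ∅ = ∑ i, (α i : ℕ) := by rw [uu, Finset.sdiff_empty]
          have hv0 : vv α ∅ = 0 := by rw [vv, Finset.sum_empty]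
          apply hc0
          omega
        rw [if_neg hcond]
  -- collapse the double sum
  have step2 : E = (N : ℂ) * (bb ^ q * ∑ α ∈ A.filter (fun α => ∑ i, (α i:ℕ) = q),
      a α * ∏ i, x i ^ (α i : ℕ)) := by
    rw [step1, Finset.sum_congr rfl (fun α hα => Finset.sum_congr rfl (fun T hT => key α hα T hT))]
    have hTsum' : ∀ α : Fin n → Fin K, (∑ T ∈ (Finset.univ : Finset (Fin n)).powerset,
        if (∑ i, (α i : ℕ)) = q ∧ T = ∅
          then (N:ℂ) * (a α * ∏ i, (bb ^(α i:ℕ) * x i ^(α i:ℕ))) else 0)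
        = if (∑ i, (α i : ℕ)) = q
            then (N:ℂ) * (a α * ∏ i, (bb ^(α i:ℕ) * x i ^(α i:ℕ))) else 0 := by
      intro α
      have e : ∀ T ∈ (Finset.univ : Finset (Fin n)).powerset,
          (if (∑ i, (α i : ℕ)) = q ∧ T = ∅
            then (N:ℂ) * (a α * ∏ i, (bb ^(α i:ℕ) * x i ^(α i:ℕ))) else 0)
          = if T = ∅ then (if (∑ i, (α i : ℕ)) = q
              then (N:ℂ) * (a α * ∏ i, (bb ^(α i:ℕ) * x i ^(α i:ℕ))) else 0) else 0 := by
        intro T _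
        by_cases h1 : T = ∅ <;> by_cases h2 : (∑ i, (α i : ℕ)) = q <;> simp [h1, h2]
      rw [Finset.sum_congr rfl e, Finset.sum_ite_eq' _ ∅ _,
        if_pos (Finset.empty_mem_powerset _)]
    rw [Finset.sum_congr rfl (fun α _ => hTsum' α), ← Finset.sum_filter, Finset.mul_sum,
      Finset.mul_sum]
    refine Finset.sum_congr rfl fun α hα => ?_
    have hq' : (∑ i, (α i : ℕ)) = q := (Finset.mem_filter.mp hα).2
    rw [Finset.prod_mul_distrib, Finset.prod_pow_eq_pow_sum, hq']
    ring
  -- the upper bound on |E|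
  have hEabs : ‖E‖ ≤ (N : ℝ) * ((∑ j ∈ Finset.range (D+1), |w j|) * M) := by
    rw [hE]
    calc ‖∑ j ∈ Finset.range (D+1), ∑ m ∈ Finset.range N,
          (w j : ℂ) * (starRingEnd ℂ (ζ ^ m)) ^ q *
          (∑ α ∈ A, a α * ∏ i, mom K (α i : ℕ) ((((r j : ℝ) : ℂ) * ζ ^ m) * x i))‖
        ≤ ∑ j ∈ Finset.range (D+1), ‖∑ m ∈ Finset.range N,
          (w j : ℂ) * (starRingEnd ℂ (ζ ^ m)) ^ q *
          (∑ α ∈ A, a α * ∏ i, mom K (α i : ℕ) ((((r j : ℝ) : ℂ) * ζ ^ m) * x i))‖ :=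
          norm_sum_le _ _
      _ ≤ ∑ j ∈ Finset.range (D+1), ∑ m ∈ Finset.range N, ‖
          (w j : ℂ) * (starRingEnd ℂ (ζ ^ m)) ^ q *
          (∑ α ∈ A, a α * ∏ i, mom K (α i : ℕ) ((((r j : ℝ) : ℂ) * ζ ^ m) * x i))‖ :=
          Finset.sum_le_sum fun j _ => norm_sum_le _ _
      _ ≤ ∑ j ∈ Finset.range (D+1), ∑ _m ∈ Finset.range N, |w j| * M := by
          refine Finset.sum_le_sum fun j hj => Finset.sum_le_sum fun m _ => ?_
          have hjD : j ≤ D := by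
            have := Finset.mem_range.mp hj
            omega
          have habsζm : ‖ζ ^ m‖ = 1 := by
            rw [norm_pow, hζabs, one_pow]
          have habsconj : ‖(starRingEnd ℂ (ζ ^ m)) ^ q‖ = 1 := by
            rw [norm_pow, Complex.norm_conj, habsζm, one_pow]
          rw [norm_mul, norm_mul, Complex.norm_real, Real.norm_eq_abs, habsconj, mul_one]
          refine mul_le_mul_of_nonneg_left ?_ (abs_nonneg _)
          refine hΦ _ fun i => ?_
          rw [norm_mul, norm_mul, Complex.norm_real, Real.norm_eq_abs, habsζm, mul_one]
          calc |r j| * ‖x i‖ ≤ 1 * 1 := by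
                refine mul_le_mul (hrb j hjD) (hx i) (norm_nonneg _) (by norm_num)
            _ = 1 := by norm_num
      _ = (N : ℝ) * ((∑ j ∈ Finset.range (D+1), |w j|) * M) := by
          simp only [Finset.sum_const, Finset.card_range, nsmul_eq_mul]
          rw [← Finset.mul_sum, ← Finset.sum_mul]
  -- conclude
  set Sq : ℂ := ∑ α ∈ A.filter (fun α => ∑ i, (α i:ℕ) = q), a α * ∏ i, x i ^ (α i : ℕ)
    with hSq
  have hNR : (0:ℝ) < (N:ℝ) := by exact_mod_cast hNpos
  have habs1 : (N:ℝ) * ‖bb ^ q * Sq‖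
      ≤ (N:ℝ) * ((∑ j ∈ Finset.range (D+1), |w j|) * M) := by
    have hNabs : ‖(N:ℂ) * (bb ^ q * Sq)‖ = (N:ℝ) * ‖bb ^ q * Sq‖ := by
      rw [norm_mul, Complex.norm_natCast]
    calc (N:ℝ) * ‖bb ^ q * Sq‖
        = ‖(N:ℂ) * (bb ^ q * Sq)‖ := hNabs.symm
      _ = ‖E‖ := by rw [step2]
      _ ≤ _ := hEabs
  have habs2 : ‖bb ^ q * Sq‖ ≤ (∑ j ∈ Finset.range (D+1), |w j|) * M :=
    le_of_mul_le_mul_left habs1 hNR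
  have habs3 : ‖bb ^ q * Sq‖ = (3:ℝ)⁻¹ ^ q * ‖Sq‖ := by
    rw [norm_mul, norm_pow]
    congr 2
    rw [bb, norm_inv]
    norm_num
  rw [habs3] at habs2
  have hfinal : ‖Sq‖ ≤ 3^q * ((∑ j ∈ Finset.range (D+1), |w j|) * M) := by
    calc ‖Sq‖ = 3^q * ((3:ℝ)⁻¹^q * ‖Sq‖) := by
          rw [← mul_assoc, ← mul_pow]
          norm_num
      _ ≤ 3^q * ((∑ j ∈ Finset.range (D+1), |w j|) * M) :=
          mul_le_mul_of_nonneg_left habs2 (by positivity)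
  refine le_trans hfinal ?_
  have hσ : (∑ j ∈ Finset.range (D+1), |w j|) ≤ (2*(d:ℝ)+1) * 6^(2*d) := by
    refine le_trans hw2 (le_of_eq ?_)
    rw [hD]
    push_cast
    ring
  rw [mul_assoc]
  refine mul_le_mul_of_nonneg_left (mul_le_mul_of_nonneg_right hσ hM0) (by positivity)

/-- There is a universal constant `C > 0` such that for all `n ≥ 1`, `K ≥ 2`, `d ≥ 1`
and every analytic polynomial `f` on `𝔻^n` of degree at most `d` and individual degree
at most `K − 1`, `‖f‖_{𝔻^n} ≤ (C log K)^{2d} ‖f‖_{Ω_K^n}`, where `Ω_K` is the set of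
`K`-th roots of unity. -/
theorem stmt1 :
    ∃ C : ℝ, 0 < C ∧
      ∀ (n K d : ℕ), 1 ≤ n → 2 ≤ K → 1 ≤ d →
      ∀ (a : (Fin n → Fin K) → ℂ) (f : (Fin n → ℂ) → ℂ),
        (∀ z : Fin n → ℂ, f z =
          ∑ α ∈ Finset.univ.filter (fun α : Fin n → Fin K => ∑ i, (α i : ℕ) ≤ d),
            a α * ∏ i, z i ^ (α i : ℕ)) →
      ∀ x : Fin n → ℂ, (∀ i, ‖x i‖ ≤ 1) →
        ‖f x‖ ≤ (C * Real.log K) ^ (2 * d) *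
          ⨆ ξ : {ξ : Fin n → ℂ // ∀ j, ξ j ^ K = 1}, ‖f ξ.1‖ := by
  classical
  refine ⟨100, by norm_num, ?_⟩
  intro n K d hn hK hd a f hf x hx
  set A : Finset (Fin n → Fin K) := Finset.univ.filter (fun α => ∑ i, (α i : ℕ) ≤ d) with hA
  set M : ℝ := ⨆ ξ : {ξ : Fin n → ℂ // ∀ j, ξ j ^ K = 1}, ‖f ξ.1‖ with hM
  have hK0 : K ≠ 0 := by omega
  set ω : ℂ := Complex.exp (2 * (Real.pi : ℂ) * Complex.I / (K : ℂ)) with hωdef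
  have hωprim : IsPrimitiveRoot ω K := Complex.isPrimitiveRoot_exp K hK0
  have hωconj : starRingEnd ℂ ω = ω⁻¹ := by
    rw [hωdef, ← Complex.exp_conj]
    rw [show starRingEnd ℂ (2 * (Real.pi : ℂ) * Complex.I / (K : ℂ))
        = -(2 * (Real.pi : ℂ) * Complex.I / (K : ℂ)) by
      simp [map_div₀, Complex.conj_I, map_ofNat]
      ring]
    rw [Complex.exp_neg]
  have hωabs : ‖ω‖ = 1 := by
    rw [hωdef, show 2 * (Real.pi : ℂ) * Complex.I / (K : ℂ)
        = ((2 * Real.pi / (K : ℝ) : ℝ) : ℂ) * Complex.I by push_cast; ring]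
    exact Complex.norm_exp_ofReal_mul_I _
  -- finiteness of the root set and boundedness of the sup
  have hroots : {z : ℂ | z ^ K = 1}.Finite := by
    refine Set.Finite.subset (Polynomial.nthRoots K (1:ℂ)).toFinset.finite_toSet ?_
    intro z hz
    simp only [Finset.mem_coe, Multiset.mem_toFinset,
      Polynomial.mem_nthRoots (show 0 < K by omega)]
    exact hz
  have hsub : Finite {ξ : Fin n → ℂ // ∀ j, ξ j ^ K = 1} := by
    have hpi : {ξ : Fin n → ℂ | ∀ j, ξ j ^ K = 1}.Finite := by
      refine Set.Finite.subset (Set.Finite.pi (fun _ : Fin n => hroots)) ?_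
      intro ξ hξ
      rw [Set.mem_pi]
      intro i _
      exact hξ i
    exact hpi.to_subtype
  have hBdd : BddAbove (Set.range
      (fun ξ : {ξ : Fin n → ℂ // ∀ j, ξ j ^ K = 1} => ‖f ξ.1‖)) :=
    (Set.finite_range _).bddAbove
  have hMnn : 0 ≤ M := by
    have h1 : ∀ j : Fin n, (fun _ : Fin n => (1:ℂ)) j ^ K = 1 := fun j => one_pow K
    have := le_ciSup hBdd (⟨fun _ => (1:ℂ), h1⟩ : {ξ : Fin n → ℂ // ∀ j, ξ j ^ K = 1})
    exact le_trans (norm_nonneg _) this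
  -- grid bound
  have hMgrid : ∀ kv : Fin n → ℕ, (∀ i, kv i < K) →
      ‖∑ α ∈ A, a α * ∏ i, (ω ^ kv i) ^ (α i : ℕ)‖ ≤ M := by
    intro kv hkv
    have hξ : ∀ j : Fin n, (fun i => ω ^ kv i) j ^ K = 1 := by
      intro j
      rw [← pow_mul, mul_comm, pow_mul, hωprim.pow_eq_one, one_pow]
    have hle : ‖f (fun i => ω ^ kv i)‖ ≤ M :=
      le_ciSup hBdd (⟨fun i => ω ^ kv i, hξ⟩ : {ξ : Fin n → ℂ // ∀ j, ξ j ^ K = 1})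
    rw [hf] at hle
    exact hle
  have hΦ : ∀ y : Fin n → ℂ, (∀ i, ‖y i‖ ≤ 1) →
      ‖∑ α ∈ A, a α * ∏ i, mom K (α i : ℕ) (y i)‖ ≤ M :=
    fun y hy => Phi_bound hK hωprim hωconj hωabs A a M hMgrid y hy
  have hAdeg : ∀ α ∈ A, ∑ i, (α i : ℕ) ≤ d := by
    intro α hα
    rw [hA, Finset.mem_filter] at hα
    exact hα.2
  -- decompose into homogeneous layers
  rw [hf x]
  have hsplit : (∑ α ∈ A, a α * ∏ i, x i ^ (α i:ℕ))
      = ∑ q ∈ Finset.range (d+1),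
          ∑ α ∈ A.filter (fun α => ∑ i, (α i:ℕ) = q), a α * ∏ i, x i ^ (α i:ℕ) := by
    refine (Finset.sum_fiberwise_of_maps_to ?_ _).symm
    intro α hα
    rw [Finset.mem_range]
    have := hAdeg α hα
    omega
  rw [hsplit]
  have hlayer : ∀ q ∈ Finset.range (d+1),
      ‖∑ α ∈ A.filter (fun α => ∑ i, (α i:ℕ) = q), a α * ∏ i, x i ^ (α i : ℕ)‖
      ≤ 3 ^ q * ((2*(d:ℝ)+1) * 6 ^ (2*d)) * M := by
    intro q hq
    exact extraction hK hd (by rw [Finset.mem_range] at hq; omega) A hAdeg a x M hΦ hx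
  calc ‖∑ q ∈ Finset.range (d+1),
        ∑ α ∈ A.filter (fun α => ∑ i, (α i:ℕ) = q), a α * ∏ i, x i ^ (α i : ℕ)‖
      ≤ ∑ q ∈ Finset.range (d+1), ‖∑ α ∈ A.filter (fun α => ∑ i, (α i:ℕ) = q), a α * ∏ i, x i ^ (α i : ℕ)‖ :=
        norm_sum_le _ _
    _ ≤ ∑ q ∈ Finset.range (d+1), 3 ^ q * ((2*(d:ℝ)+1) * 6 ^ (2*d)) * M :=
        Finset.sum_le_sum hlayer
    _ = (∑ q ∈ Finset.range (d+1), (3:ℝ) ^ q) * (((2*(d:ℝ)+1) * 6 ^ (2*d)) * M) := by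
        rw [Finset.sum_mul]
        refine Finset.sum_congr rfl fun q _ => ?_
        ring
    _ ≤ (2 * 3^d) * (((2*(d:ℝ)+1) * 6 ^ (2*d)) * M) := by
        refine mul_le_mul_of_nonneg_right ?_ (by positivity)
        have hgeom : (∑ q ∈ Finset.range (d+1), (3:ℝ) ^ q) = ((3:ℝ)^(d+1) - 1)/(3-1) :=
          geom_sum_eq (by norm_num) (d+1)
        rw [hgeom]
        have h3d : (0:ℝ) < 3^d := by positivity
        rw [div_le_iff₀ (by norm_num : (0:ℝ) < 3-1)]
        have hps : (3:ℝ)^(d+1) = 3^d * 3 := pow_succ 3 d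
        nlinarith [h3d]
    _ ≤ (100 * Real.log K) ^ (2*d) * M := by
        rw [show (2 * 3^d) * (((2*(d:ℝ)+1) * 6 ^ (2*d)) * M)
              = (2 * 3^d * ((2*(d:ℝ)+1) * 6 ^ (2*d))) * M by ring]
        refine mul_le_mul_of_nonneg_right ?_ hMnn
        -- numeric: 2 * 3^d * ((2d+1) * 36^d) ≤ ((100 log K)^2)^d
        have hlog2 : (0.6931471803:ℝ) < Real.log 2 := Real.log_two_gt_d9
        have hlogK : Real.log 2 ≤ Real.log K := by
          refine Real.log_le_log (by norm_num) ?_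
          exact_mod_cast hK
        have h69 : (69:ℝ) ≤ 100 * Real.log K := by nlinarith
        have hsq : (4761:ℝ) ≤ (100 * Real.log K)^2 := by nlinarith
        have hpow : ((4761:ℝ))^d ≤ ((100 * Real.log K)^2)^d := by
          refine pow_le_pow_left₀ (by norm_num) hsq d
        have hdbound : (2*(d:ℝ)+1) ≤ 4^d := by
          have hnat : 2*d + 1 ≤ 2^(2*d) := Nat.lt_two_pow_self (n := 2*d)
          have hcast : ((2*d+1 : ℕ):ℝ) ≤ ((2:ℝ))^(2*d) := by exact_mod_cast hnat
          have h4 : ((2:ℝ))^(2*d) = 4^d := by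
            rw [pow_mul]
            norm_num
          rw [h4] at hcast
          push_cast at hcast
          linarith
        have h2d : (2:ℝ) ≤ 2^d := by
          calc (2:ℝ) = 2^1 := by norm_num
            _ ≤ 2^d := pow_le_pow_right₀ (by norm_num) hd
        have h36 : (6:ℝ)^(2*d) = 36^d := by
          rw [pow_mul]
          norm_num
        calc 2 * 3^d * ((2*(d:ℝ)+1) * 6 ^ (2*d))
            = (2*(2*(d:ℝ)+1)) * (3^d * 36^d) := by
              rw [h36]
              ring
          _ ≤ ((2:ℝ)^d * 4^d) * (3^d * 36^d) := by
              refine mul_le_mul_of_nonneg_right ?_ (by positivity)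
              exact mul_le_mul h2d hdbound (by positivity) (by positivity)
          _ = (864:ℝ)^d := by
              rw [← mul_pow, ← mul_pow, ← mul_pow]
              norm_num
          _ ≤ (4761:ℝ)^d := pow_le_pow_left₀ (by norm_num) (by norm_num) d
          _ ≤ ((100 * Real.log K)^2)^d := hpow
          _ = (100 * Real.log K) ^ (2*d) := by rw [← pow_mul]

end
end

section
/- For every integer K ≥ 2 and every η > 0 there exists a constant C(K,η) > 0 with the following property. Let n, d ≥ 1, let Z_1, …, Z_n ⊂ 𝔻 be sets with |Z_j| = K for every j and minimum pairwise distance at least η within each Z_j, and set Y_n = ∏_{j=1}^n Z_j. Then for every point z ∈ 𝔻^n there exist complex coefficients (c_ξ)_{ξ ∈ Y_n} with Σ_{ξ ∈ Y_n} |c_ξ| ≤ C(K,η)^d such that for every analytic polynomial f on 𝔻^n of degree at most d and individual degree at most K−1 one has f(z) = Σ_{ξ ∈ Y_n} c_ξ · f(ξ). -/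
open Finset Polynomial

lemma nat_prod_range_sub (l : ℕ) : ∏ m ∈ range l, (l - m) = l.factorial := by
  induction l with
  | zero => simp
  | succ n ih =>
    rw [Finset.prod_range_succ']
    simp only [Nat.succ_sub_succ_eq_sub, Nat.sub_zero]
    rw [ih, Nat.factorial_succ, mul_comm]

lemma pow_self_le_three_pow_mul_factorial (N : ℕ) : (N:ℝ)^N ≤ 3^N * N.factorial := by
  induction N with
  | zero => simp
  | succ n ih =>
    have key : ((n:ℝ)+1)^n ≤ 3 * (n:ℝ)^n := by
      rcases Nat.eq_zero_or_pos n with h0 | hpos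
      · subst h0; norm_num
      · have hn : (0:ℝ) < n := by exact_mod_cast hpos
        have h1 : ((n:ℝ)+1) ≤ n * Real.exp (1/n) := by
          have := Real.add_one_le_exp (1/n)
          have h2 : (n:ℝ) * (1/n + 1) ≤ n * Real.exp (1/n) := by
            apply mul_le_mul_of_nonneg_left this hn.le
          calc ((n:ℝ)+1) = n * (1/n + 1) := by field_simp; ring
            _ ≤ n * Real.exp (1/n) := h2
        have h2 : ((n:ℝ)+1)^n ≤ ((n:ℝ) * Real.exp (1/n))^n := by
          apply pow_le_pow_left₀ (by positivity) h1
        have h3 : ((n:ℝ) * Real.exp (1/n))^n = (n:ℝ)^n * Real.exp 1 := by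
          rw [mul_pow, ← Real.exp_nat_mul]
          congr 2
          field_simp
        have h4 : Real.exp 1 ≤ 3 := by
          have := Real.exp_one_lt_d9
          linarith
        calc ((n:ℝ)+1)^n ≤ (n:ℝ)^n * Real.exp 1 := by rw [← h3]; exact h2
          _ ≤ (n:ℝ)^n * 3 := by
              apply mul_le_mul_of_nonneg_left h4 (by positivity)
          _ = 3 * (n:ℝ)^n := by ring
    have hnn : (0:ℝ) ≤ (n:ℝ)^n := by positivity
    calc ((n+1 : ℕ):ℝ)^(n+1) = ((n:ℝ)+1) * ((n:ℝ)+1)^n := by push_cast; ring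
      _ ≤ ((n:ℝ)+1) * (3 * (n:ℝ)^n) := by
          apply mul_le_mul_of_nonneg_left key (by positivity)
      _ ≤ ((n:ℝ)+1) * (3 * (3^n * n.factorial)) := by
          apply mul_le_mul_of_nonneg_left (by nlinarith [ih]) (by positivity)
      _ = 3^(n+1) * ((n+1) * n.factorial : ℕ) := by push_cast; ring
      _ = 3^(n+1) * (n+1).factorial := by rw [Nat.factorial_succ]

lemma prod_abs_sub_eq (N l : ℕ) (hl : l ∈ range (N+1)) :
    ∏ m ∈ (range (N+1)).erase l, |(l:ℝ) - (m:ℝ)| =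
      (l.factorial : ℝ) * ((N - l).factorial : ℝ) := by
  rw [Finset.mem_range] at hl
  have hlN : l ≤ N := by omega
  have hsplit : (range (N+1)).erase l = range l ∪ Ico (l+1) (N+1) := by
    ext m
    simp only [Finset.mem_erase, Finset.mem_range, Finset.mem_union, Finset.mem_Ico]
    omega
  have hdisj : Disjoint (range l) (Ico (l+1) (N+1)) := by
    rw [Finset.disjoint_left]
    intro m hm hm'
    simp only [Finset.mem_range] at hm
    simp only [Finset.mem_Ico] at hm'
    omega
  rw [hsplit, Finset.prod_union hdisj]
  have h1 : ∏ m ∈ range l, |(l:ℝ) - (m:ℝ)| = (l.factorial : ℝ) := by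
    have hcongr : ∀ m ∈ range l, |(l:ℝ) - (m:ℝ)| = ((l - m : ℕ) : ℝ) := by
      intro m hm
      rw [Finset.mem_range] at hm
      rw [Nat.cast_sub hm.le, abs_of_nonneg]
      have : (m:ℝ) < l := by exact_mod_cast hm
      linarith
    rw [Finset.prod_congr rfl hcongr, ← Nat.cast_prod, nat_prod_range_sub]
  have h2 : ∏ m ∈ Ico (l+1) (N+1), |(l:ℝ) - (m:ℝ)| = ((N - l).factorial : ℝ) := by
    have hcongr : ∀ m ∈ Ico (l+1) (N+1), |(l:ℝ) - (m:ℝ)| = ((m - l : ℕ) : ℝ) := by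
      intro m hm
      rw [Finset.mem_Ico] at hm
      rw [abs_sub_comm, Nat.cast_sub (by omega), abs_of_nonneg]
      have : (l:ℝ) < m := by exact_mod_cast (by omega : l < m)
      linarith
    rw [Finset.prod_congr rfl hcongr, ← Nat.cast_prod]
    congr 1
    rw [Finset.prod_Ico_eq_prod_range]
    have : N + 1 - (l+1) = N - l := by omega
    rw [this]
    calc ∏ i ∈ range (N-l), (l + 1 + i - l) = ∏ i ∈ range (N-l), (i+1) := by
          apply Finset.prod_congr rfl; intro i _; omega
      _ = (N-l).factorial := Finset.prod_range_add_one_eq_factorial _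
  rw [h1, h2]


lemma extrap (N : ℕ) (hN : 1 ≤ N) :
    ∃ (t : ℕ → ℝ) (e : ℕ → ℂ),
      (∀ l ∈ range (N+1), t l ∈ Set.Icc (-1:ℝ) 1) ∧
      (∑ l ∈ range (N+1), ‖e l‖) ≤ 12^N ∧
      ∀ h : Polynomial ℂ, h.natDegree ≤ N →
        h.eval Complex.I = ∑ l ∈ range (N+1), e l * h.eval ((t l : ℝ) : ℂ) := by
  have hNR : (0:ℝ) < N := by exact_mod_cast hN
  set t : ℕ → ℝ := fun l => -1 + 2*l/N with ht
  set v : ℕ → ℂ := fun l => ((t l : ℝ) : ℂ) with hv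
  have htinj : ∀ a b : ℕ, t a = t b → a = b := by
    intro a b hab
    simp only [ht] at hab
    have : (a:ℝ) = b := by
      field_simp at hab
      push_cast at hab
      linarith
    exact_mod_cast this
  have hinj : Set.InjOn v ↑(range (N+1)) := by
    intro a _ b _ hab
    exact htinj a b (Complex.ofReal_inj.mp hab)
  have htmem : ∀ l ∈ range (N+1), t l ∈ Set.Icc (-1:ℝ) 1 := by
    intro l hl
    rw [Finset.mem_range] at hl
    have h1 : (0:ℝ) ≤ l := by positivity
    have h2 : (l:ℝ) ≤ N := by exact_mod_cast (by omega : l ≤ N)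
    constructor
    · simp only [ht]
      have : 0 ≤ 2*(l:ℝ)/N := by positivity
      linarith
    · simp only [ht]
      have : 2*(l:ℝ)/N ≤ 2 := by
        rw [div_le_iff₀ hNR]
        linarith
      linarith
  set e : ℕ → ℂ := fun l => Polynomial.eval Complex.I (Lagrange.basis (range (N+1)) v l) with he
  refine ⟨t, e, htmem, ?_, ?_⟩
  · -- the ℓ¹ bound
    have hbound : ∀ l ∈ range (N+1), ‖e l‖ ≤
        (N:ℝ)^N / ((l.factorial : ℝ) * ((N - l).factorial : ℝ)) := by
      intro l hl
      have hlN : l ≤ N := by rw [Finset.mem_range] at hl; omega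
      have heval : e l = ∏ m ∈ (range (N+1)).erase l,
          ((v l - v m)⁻¹ * (Complex.I - v m)) := by
        rw [he]
        show Polynomial.eval Complex.I (Lagrange.basis (range (N+1)) v l) = _
        rw [Lagrange.basis, eval_prod]
        apply Finset.prod_congr rfl
        intro m _
        rw [Lagrange.basisDivisor]
        simp [eval_mul, eval_C, eval_sub, eval_X]
      rw [heval, norm_prod]
      have hfac : ∀ m ∈ (range (N+1)).erase l,
          ‖(v l - v m)⁻¹ * (Complex.I - v m)‖ ≤ (N:ℝ) / |(l:ℝ) - m| := by
        intro m hm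
        have hmne : m ≠ l := (Finset.mem_erase.mp hm).1
        have hmr : m ∈ range (N+1) := (Finset.mem_erase.mp hm).2
        have habs : (0:ℝ) < |(l:ℝ) - m| :=
          abs_pos.mpr (sub_ne_zero.mpr (fun hc => hmne (Nat.cast_inj.mp hc).symm))
        have hnum : ‖Complex.I - v m‖ ≤ 2 := by
          calc ‖Complex.I - v m‖ ≤ ‖Complex.I‖ + ‖v m‖ :=
                norm_sub_le _ _
            _ ≤ 1 + 1 := by
                rw [Complex.norm_I]
                simp only [hv, Complex.norm_real, Real.norm_eq_abs]
                have := htmem m hmr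
                rw [Set.mem_Icc] at this
                have : |t m| ≤ 1 := abs_le.mpr this
                linarith
            _ = 2 := by norm_num
        have hden : ‖v l - v m‖ = 2 * |(l:ℝ) - m| / N := by
          simp only [hv]
          rw [← Complex.ofReal_sub, Complex.norm_real, Real.norm_eq_abs]
          have : t l - t m = 2 * ((l:ℝ) - m) / N := by
            simp only [ht]; field_simp; ring
          rw [this, abs_div, abs_of_pos hNR, abs_mul]
          norm_num
        rw [norm_mul, norm_inv, hden]
        have hd0 : (0:ℝ) < 2 * |(l:ℝ) - m| / N := by positivity
        calc (2 * |(l:ℝ) - m| / N)⁻¹ * ‖Complex.I - v m‖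
            ≤ (2 * |(l:ℝ) - m| / N)⁻¹ * 2 := by
              apply mul_le_mul_of_nonneg_left hnum (by positivity)
          _ = (N:ℝ) / |(l:ℝ) - m| := by field_simp
      calc ∏ m ∈ (range (N+1)).erase l, ‖(v l - v m)⁻¹ * (Complex.I - v m)‖
          ≤ ∏ m ∈ (range (N+1)).erase l, ((N:ℝ) / |(l:ℝ) - m|) := by
            apply Finset.prod_le_prod
            · intro m _; positivity
            · exact hfac
        _ = (N:ℝ)^N / ((l.factorial : ℝ) * ((N - l).factorial : ℝ)) := by
            rw [Finset.prod_div_distrib, Finset.prod_const, prod_abs_sub_eq N l hl,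
              Finset.card_erase_of_mem hl, Finset.card_range]
            norm_num
    have hchoose : ∀ l ∈ range (N+1),
        (N:ℝ)^N / ((l.factorial : ℝ) * ((N - l).factorial : ℝ)) =
        (N:ℝ)^N * (N.choose l) / (N.factorial : ℝ) := by
      intro l hl
      have hlN : l ≤ N := by rw [Finset.mem_range] at hl; omega
      have := Nat.choose_mul_factorial_mul_factorial hlN
      have hreal : ((N.choose l : ℝ)) * (l.factorial : ℝ) * ((N-l).factorial : ℝ)
          = (N.factorial : ℝ) := by exact_mod_cast congrArg (Nat.cast (R := ℝ)) this
      have h1 : (0:ℝ) < (l.factorial : ℝ) := by exact_mod_cast Nat.factorial_pos l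
      have h2 : (0:ℝ) < ((N-l).factorial : ℝ) := by exact_mod_cast Nat.factorial_pos (N-l)
      have h3 : (0:ℝ) < (N.factorial : ℝ) := by exact_mod_cast Nat.factorial_pos N
      field_simp
      linear_combination (-1:ℝ) * hreal
    calc ∑ l ∈ range (N+1), ‖e l‖
        ≤ ∑ l ∈ range (N+1), (N:ℝ)^N * (N.choose l) / (N.factorial : ℝ) := by
          apply Finset.sum_le_sum
          intro l hl
          rw [← hchoose l hl]
          exact hbound l hl
      _ = (N:ℝ)^N / (N.factorial : ℝ) * ∑ l ∈ range (N+1), (N.choose l : ℝ) := by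
          rw [Finset.mul_sum]
          apply Finset.sum_congr rfl
          intro l _; ring
      _ = (N:ℝ)^N / (N.factorial : ℝ) * 2^N := by
          congr 1
          rw [← Nat.cast_sum]
          rw [Nat.sum_range_choose]
          push_cast; ring
      _ ≤ 3^N * 2^N := by
          have h3 : (0:ℝ) < (N.factorial : ℝ) := by exact_mod_cast Nat.factorial_pos N
          have := pow_self_le_three_pow_mul_factorial N
          apply mul_le_mul_of_nonneg_right _ (by positivity)
          rw [div_le_iff₀ h3]
          linarith
      _ = 6^N := by rw [← mul_pow]; norm_num
      _ ≤ 12^N := by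
          apply pow_le_pow_left₀ (by norm_num)
          norm_num
  · -- exactness
    intro h hdeg
    have hdeg' : h.degree < #(range (N+1)) := by
      rw [Finset.card_range]
      calc h.degree ≤ (h.natDegree : WithBot ℕ) := Polynomial.degree_le_natDegree
        _ < ((N+1 : ℕ) : WithBot ℕ) := by exact_mod_cast Nat.lt_succ_of_le hdeg
    have hinterp := Lagrange.eq_interpolate hinj hdeg'
    conv_lhs => rw [hinterp]
    rw [Lagrange.interpolate_apply, eval_finset_sum]
    apply Finset.sum_congr rfl
    intro l _
    rw [eval_mul, eval_C]
    simp only [he, hv]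
    ring


/-- Theorem 1.2 (interpolation formula): for every `K ≥ 2` and `η > 0` there is a
constant `C = C(K, η) > 0` such that for all `n, d ≥ 1`, all sets `Z j ⊂ 𝔻` of
cardinality `K` with pairwise distances at least `η`, and every `z ∈ 𝔻^n`, there are
coefficients `(c_ξ)_{ξ ∈ ∏ Z j}` with `Σ_ξ |c_ξ| ≤ C^d` such that every analytic
polynomial `f` of degree at most `d` and individual degree at most `K − 1` satisfies
`f(z) = Σ_ξ c_ξ f(ξ)`. -/
theorem stmt2 (K : ℕ) (hK : 2 ≤ K) (η : ℝ) (hη : 0 < η) :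
    ∃ C : ℝ, 0 < C ∧
      ∀ (n d : ℕ), 1 ≤ n → 1 ≤ d →
      ∀ Z : Fin n → Finset ℂ,
        (∀ j, ∀ z ∈ Z j, ‖z‖ ≤ 1) →
        (∀ j, (Z j).card = K) →
        (∀ j, ∀ z ∈ Z j, ∀ z' ∈ Z j, z ≠ z' → η ≤ ‖z - z'‖) →
      ∀ x : Fin n → ℂ, (∀ i, ‖x i‖ ≤ 1) →
      ∃ c : (∀ j, {z : ℂ // z ∈ Z j}) → ℂ,
        (∑ ξ, ‖c ξ‖) ≤ C ^ d ∧
        ∀ (a : (Fin n → Fin K) → ℂ) (f : (Fin n → ℂ) → ℂ),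
          (∀ z : Fin n → ℂ, f z =
            ∑ α ∈ Finset.univ.filter (fun α : Fin n → Fin K => ∑ i, (α i : ℕ) ≤ d),
              a α * ∏ i, z i ^ (α i : ℕ)) →
          f x = ∑ ξ, c ξ * f (fun j => (ξ j : ℂ)) := by
  classical
  obtain ⟨m, hm⟩ := pow_unbounded_of_one_lt (2*(K:ℝ)*((2/η)^(K-1)+1)) (by norm_num : (1:ℝ) < 3)
  refine ⟨12^(2*m+1), by positivity, ?_⟩
  intro n d hn hd Z hZ1 hcard hsep x hx
  set D := 2*m+1 with hD
  set B : ℝ := (2/η)^(K-1) with hB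
  have hB0 : (0:ℝ) ≤ B := by rw [hB]; positivity
  have hKpos : 0 < K := by omega
  have hKR : (0:ℝ) < K := by exact_mod_cast hKpos
  have h3m : (0:ℝ) < 3^m := by positivity
  -- Lagrange coefficients of x j on Z j
  set lam : ∀ j : Fin n, {z : ℂ // z ∈ Z j} → ℂ :=
    fun j k => Polynomial.eval (x j) (Lagrange.basis (Z j) id (k : ℂ)) with hlamdef
  have factA : ∀ (j : Fin n) (q : ℕ), q < K →
      ∑ k : {z : ℂ // z ∈ Z j}, lam j k * (k : ℂ)^q = (x j)^q := by
    intro j q hq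
    have hinj : Set.InjOn (id : ℂ → ℂ) ↑(Z j) := Set.injOn_id _
    have hdeg : ((Polynomial.X : Polynomial ℂ)^q).degree < #(Z j) := by
      rw [Polynomial.degree_X_pow, hcard j]
      exact_mod_cast hq
    have hinterp := Lagrange.eq_interpolate hinj hdeg
    rw [Finset.univ_eq_attach]
    simp only [hlamdef]
    calc ∑ k ∈ (Z j).attach, Polynomial.eval (x j) (Lagrange.basis (Z j) id (k : ℂ)) * (k : ℂ)^q
        = ∑ z ∈ Z j, Polynomial.eval (x j) (Lagrange.basis (Z j) id z) * z^q :=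
          Finset.sum_attach (Z j) (fun z => Polynomial.eval (x j) (Lagrange.basis (Z j) id z) * z^q)
      _ = Polynomial.eval (x j) (Lagrange.interpolate (Z j) id
            (fun i => Polynomial.eval (id i) ((Polynomial.X : Polynomial ℂ)^q))) := by
          rw [Lagrange.interpolate_apply, Polynomial.eval_finset_sum]
          apply Finset.sum_congr rfl
          intro z _
          rw [Polynomial.eval_mul, Polynomial.eval_C, Polynomial.eval_pow, Polynomial.eval_X]
          simp [mul_comm]
      _ = Polynomial.eval (x j) ((Polynomial.X : Polynomial ℂ)^q) := by rw [← hinterp]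
      _ = (x j)^q := by rw [Polynomial.eval_pow, Polynomial.eval_X]
  have factB : ∀ (j : Fin n) (k : {z : ℂ // z ∈ Z j}), ‖lam j k‖ ≤ B := by
    intro j k
    simp only [hlamdef]
    rw [Lagrange.basis, Polynomial.eval_prod, norm_prod]
    have hcard' : ((Z j).erase (k:ℂ)).card = K - 1 := by
      rw [Finset.card_erase_of_mem k.2, hcard j]
    calc ∏ z ∈ (Z j).erase (k:ℂ),
          ‖Polynomial.eval (x j) (Lagrange.basisDivisor (id (k:ℂ)) (id z))‖
        ≤ ∏ _z ∈ (Z j).erase (k:ℂ), (2/η) := by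
          apply Finset.prod_le_prod (fun _ _ => norm_nonneg _)
          intro z hz
          have hzZ : z ∈ Z j := Finset.mem_of_mem_erase hz
          have hzk : z ≠ (k:ℂ) := Finset.ne_of_mem_erase hz
          have hsep' : η ≤ ‖(k:ℂ) - z‖ :=
            hsep j (k:ℂ) k.2 z hzZ (fun hc => hzk hc.symm)
          have hk0 : (0:ℝ) < ‖(k:ℂ) - z‖ := lt_of_lt_of_le hη hsep'
          have hnum : ‖x j - z‖ ≤ 2 := by
            calc ‖x j - z‖ ≤ ‖x j‖ + ‖z‖ := by
                  exact norm_sub_le _ _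
              _ ≤ 1 + 1 := add_le_add (hx j) (hZ1 j z hzZ)
              _ = 2 := by norm_num
          rw [Lagrange.basisDivisor]
          simp only [id_eq, Polynomial.eval_mul, Polynomial.eval_C, Polynomial.eval_sub,
            Polynomial.eval_X, norm_mul, norm_inv]
          rw [inv_mul_eq_div]
          exact div_le_div₀ (by norm_num) hnum hη hsep'
        _ = B := by rw [Finset.prod_const, hcard', hB]
  have hsumlam : ∀ j, ∑ k : {z : ℂ // z ∈ Z j}, lam j k = 1 := by
    intro j
    have := factA j 0 hKpos
    simpa using this
  have hcardsub : ∀ j : Fin n, Fintype.card {z : ℂ // z ∈ Z j} = K := by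
    intro j
    rw [Fintype.card_coe, hcard j]
  set nu : ∀ j : Fin n, {z : ℂ // z ∈ Z j} → ℂ := fun j k => lam j k - 1/K with hnudef
  have hsumnu : ∀ j, ∑ k : {z : ℂ // z ∈ Z j}, nu j k = 0 := by
    intro j
    simp only [hnudef]
    rw [Finset.sum_sub_distrib, hsumlam j, Finset.sum_const, Finset.card_univ, hcardsub j,
      nsmul_eq_mul]
    have hK0 : (K:ℂ) ≠ 0 := by exact_mod_cast hKpos.ne'
    field_simp
    simp
  have hnuabs : ∀ j k, ‖nu j k‖ ≤ B + 1 := by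
    intro j k
    simp only [hnudef]
    calc ‖lam j k - 1/K‖
        ≤ ‖lam j k‖ + ‖1/(K:ℂ)‖ := by
          exact norm_sub_le _ _
      _ ≤ B + 1 := by
          apply add_le_add (factB j k)
          rw [norm_div, norm_one, Complex.norm_natCast]
          rw [div_le_one hKR]
          exact_mod_cast hKpos
  set U : Polynomial ℝ :=
    Polynomial.C ((1:ℝ)/3^m) * ((1:Polynomial ℝ) - Polynomial.C 2 * Polynomial.X^2)^m with hUdef
  set V : Polynomial ℝ := Polynomial.X * U with hVdef
  set P : ∀ j : Fin n, {z : ℂ // z ∈ Z j} → Polynomial ℝ :=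
    fun j k => Polynomial.C ((1:ℝ)/K) + Polynomial.C ((nu j k).re) * U
      + Polynomial.C ((nu j k).im) * V with hPdef
  set pC : ∀ j : Fin n, {z : ℂ // z ∈ Z j} → Polynomial ℂ :=
    fun j k => (P j k).map Complex.ofRealHom with hpCdef
  have hUbound : ∀ s : ℝ, s ∈ Set.Icc (-1:ℝ) 1 → |U.eval s| ≤ 1/3^m ∧ |V.eval s| ≤ 1/3^m := by
    intro s hs
    rw [Set.mem_Icc] at hs
    have hs2 : |(1:ℝ) - 2*s^2| ≤ 1 := by
      rw [abs_le]
      constructor <;> nlinarith [hs.1, hs.2]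
    have hU : U.eval s = (1/3^m) * ((1:ℝ) - 2*s^2)^m := by simp [hUdef]
    have hUb : |U.eval s| ≤ 1/3^m := by
      rw [hU, abs_mul, abs_pow]
      have h1 : |(1:ℝ)/3^m| = 1/3^m := abs_of_pos (by positivity)
      rw [h1]
      have h2 : |(1:ℝ) - 2*s^2|^m ≤ 1 := pow_le_one₀ (abs_nonneg _) hs2
      nlinarith [h2, (by positivity : (0:ℝ) < 1/3^m)]
    refine ⟨hUb, ?_⟩
    have hV : V.eval s = s * U.eval s := by simp [hVdef]
    rw [hV, abs_mul]
    have hsabs : |s| ≤ 1 := abs_le.mpr hs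
    calc |s| * |U.eval s| ≤ 1 * (1/3^m) := by
          apply mul_le_mul hsabs hUb (abs_nonneg _) (by norm_num)
      _ = 1/3^m := one_mul _
  have hPnonneg : ∀ (j) (k) (s:ℝ), s ∈ Set.Icc (-1:ℝ) 1 → 0 ≤ (P j k).eval s := by
    intro j k s hs
    obtain ⟨hU1, hV1⟩ := hUbound s hs
    have hre : |(nu j k).re| ≤ B+1 := le_trans (Complex.abs_re_le_norm _) (hnuabs j k)
    have him : |(nu j k).im| ≤ B+1 := le_trans (Complex.abs_im_le_norm _) (hnuabs j k)
    have hPe : (P j k).eval s = 1/K + (nu j k).re * U.eval s + (nu j k).im * V.eval s := by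
      simp [hPdef]
    rw [hPe]
    have h1 : |(nu j k).re * U.eval s| ≤ (B+1) * (1/3^m) := by
      rw [abs_mul]
      apply mul_le_mul hre hU1 (abs_nonneg _) (by linarith)
    have h2 : |(nu j k).im * V.eval s| ≤ (B+1) * (1/3^m) := by
      rw [abs_mul]
      apply mul_le_mul him hV1 (abs_nonneg _) (by linarith)
    have h3 : 2*((B+1) * (1/3^m)) ≤ 1/K := by
      have h4 : (2*(B+1))/3^m ≤ 1/K := by
        rw [div_le_div_iff₀ h3m hKR]
        nlinarith [hm]
      calc 2*((B+1) * (1/3^m)) = (2*(B+1))/3^m := by ring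
        _ ≤ 1/K := h4
    have e1 := neg_abs_le ((nu j k).re * U.eval s)
    have e2 := neg_abs_le ((nu j k).im * V.eval s)
    linarith
  have hPsum : ∀ j, ∑ k : {z : ℂ // z ∈ Z j}, P j k = 1 := by
    intro j
    have hre : ∑ k : {z : ℂ // z ∈ Z j}, (nu j k).re = 0 := by
      rw [← Complex.re_sum, hsumnu j, Complex.zero_re]
    have him : ∑ k : {z : ℂ // z ∈ Z j}, (nu j k).im = 0 := by
      rw [← Complex.im_sum, hsumnu j, Complex.zero_im]
    have hKne : (K:ℝ) ≠ 0 := ne_of_gt hKR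
    calc ∑ k : {z : ℂ // z ∈ Z j}, P j k
        = (∑ k : {z : ℂ // z ∈ Z j}, Polynomial.C ((1:ℝ)/K))
          + (∑ k : {z : ℂ // z ∈ Z j}, Polynomial.C ((nu j k).re)) * U
          + (∑ k : {z : ℂ // z ∈ Z j}, Polynomial.C ((nu j k).im)) * V := by
          simp only [hPdef]
          rw [Finset.sum_add_distrib, Finset.sum_add_distrib, Finset.sum_mul, Finset.sum_mul]
      _ = (∑ k : {z : ℂ // z ∈ Z j}, Polynomial.C ((1:ℝ)/K)) := by
          rw [← map_sum Polynomial.C (fun k : {z : ℂ // z ∈ Z j} => (nu j k).re) Finset.univ,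
            ← map_sum Polynomial.C (fun k : {z : ℂ // z ∈ Z j} => (nu j k).im) Finset.univ,
            hre, him]
          simp
      _ = 1 := by
          rw [Finset.sum_const, Finset.card_univ, hcardsub j, nsmul_eq_mul,
            ← Polynomial.C_eq_natCast, ← Polynomial.C_mul, mul_one_div, div_self hKne,
            Polynomial.C_1]
  have hbridge : ∀ (Q : Polynomial ℝ) (s : ℝ),
      (Q.map Complex.ofRealHom).eval ((s : ℝ) : ℂ) = ((Q.eval s : ℝ) : ℂ) := by
    intro Q s
    rw [Polynomial.eval_map]
    exact Polynomial.eval₂_at_apply Complex.ofRealHom s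
  have h3mC : ((3:ℂ))^m ≠ 0 := by
    apply pow_ne_zero
    norm_num
  have hUI : (U.map Complex.ofRealHom).eval Complex.I = 1 := by
    simp only [hUdef, Polynomial.map_mul, Polynomial.map_pow, Polynomial.map_sub,
      Polynomial.map_one, Polynomial.map_C, Polynomial.map_X]
    rw [Polynomial.eval_mul, Polynomial.eval_C, Polynomial.eval_pow]
    have hI : Polynomial.eval Complex.I
        ((1:Polynomial ℂ) - Polynomial.C (Complex.ofRealHom 2) * Polynomial.X^2) = 3 := by
      simp only [Polynomial.eval_sub, Polynomial.eval_one, Polynomial.eval_mul,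
        Polynomial.eval_C, Polynomial.eval_pow, Polynomial.eval_X, Complex.I_sq]
      simp only [Complex.ofRealHom_eq_coe]
      norm_num
    rw [hI]
    simp only [Complex.ofRealHom_eq_coe]
    push_cast
    field_simp
  have hVI : (V.map Complex.ofRealHom).eval Complex.I = Complex.I := by
    simp only [hVdef, Polynomial.map_mul, Polynomial.map_X]
    rw [Polynomial.eval_mul, Polynomial.eval_X, hUI, mul_one]
  have hpCI : ∀ j k, (pC j k).eval Complex.I = lam j k := by
    intro j k
    simp only [hpCdef, hPdef, Polynomial.map_add, Polynomial.map_mul, Polynomial.map_C]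
    rw [Polynomial.eval_add, Polynomial.eval_add, Polynomial.eval_mul, Polynomial.eval_mul,
      Polynomial.eval_C, Polynomial.eval_C, Polynomial.eval_C, hUI, hVI, mul_one]
    simp only [Complex.ofRealHom_eq_coe]
    rw [add_assoc, Complex.re_add_im]
    have h3 : nu j k = lam j k - 1/(K:ℂ) := by simp [hnudef]
    rw [h3]
    push_cast
    ring
  set mu : Fin n → ℕ → Polynomial ℂ :=
    fun j q => ∑ k : {z : ℂ // z ∈ Z j}, Polynomial.C ((k:ℂ)^q) * pC j k with hmudef
  have hmueval : ∀ (j) (q:ℕ) (w:ℂ),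
      (mu j q).eval w = ∑ k : {z : ℂ // z ∈ Z j}, ((k:ℂ)^q) * (pC j k).eval w := by
    intro j q w
    simp only [hmudef]
    rw [Polynomial.eval_finset_sum]
    apply Finset.sum_congr rfl
    intro k _
    rw [Polynomial.eval_mul, Polynomial.eval_C]
  have hmu0 : ∀ j, mu j 0 = 1 := by
    intro j
    simp only [hmudef, pow_zero, map_one, one_mul, hpCdef]
    have hms : ∑ k : {z : ℂ // z ∈ Z j}, (P j k).map Complex.ofRealHom
        = ((∑ k : {z : ℂ // z ∈ Z j}, P j k)).map Complex.ofRealHom := by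
      simp only [← Polynomial.coe_mapRingHom]
      exact (map_sum (Polynomial.mapRingHom Complex.ofRealHom) _ _).symm
    rw [hms, hPsum j, Polynomial.map_one]
  have hXD : (((1:Polynomial ℝ) - Polynomial.C 2 * Polynomial.X^2)).natDegree ≤ 2 := by
    refine le_trans (Polynomial.natDegree_sub_le _ _) ?_
    rw [Polynomial.natDegree_one]
    simp only [max_le_iff]
    refine ⟨by omega, ?_⟩
    refine le_trans Polynomial.natDegree_mul_le ?_
    rw [Polynomial.natDegree_C, Polynomial.natDegree_X_pow]
  have hUD : U.natDegree ≤ 2*m := by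
    simp only [hUdef]
    refine le_trans Polynomial.natDegree_mul_le ?_
    rw [Polynomial.natDegree_C]
    have h1 : ((((1:Polynomial ℝ) - Polynomial.C 2 * Polynomial.X^2))^m).natDegree ≤ m*2 :=
      le_trans Polynomial.natDegree_pow_le (Nat.mul_le_mul_left m hXD)
    omega
  have hVD : V.natDegree ≤ D := by
    simp only [hVdef]
    refine le_trans Polynomial.natDegree_mul_le ?_
    rw [Polynomial.natDegree_X]
    omega
  have hPD : ∀ j k, (P j k).natDegree ≤ D := by
    intro j k
    simp only [hPdef]
    refine le_trans (Polynomial.natDegree_add_le _ _) ?_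
    simp only [max_le_iff]
    constructor
    · refine le_trans (Polynomial.natDegree_add_le _ _) ?_
      simp only [max_le_iff]
      constructor
      · rw [Polynomial.natDegree_C]; omega
      · refine le_trans Polynomial.natDegree_mul_le ?_
        rw [Polynomial.natDegree_C]
        omega
    · refine le_trans Polynomial.natDegree_mul_le ?_
      rw [Polynomial.natDegree_C]
      omega
  have hmuD : ∀ j q, (mu j q).natDegree ≤ D := by
    intro j q
    simp only [hmudef]
    apply Polynomial.natDegree_sum_le_of_forall_le
    intro k _
    refine le_trans Polynomial.natDegree_mul_le ?_
    rw [Polynomial.natDegree_C]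
    simp only [hpCdef]
    refine le_trans ?_ (hPD j k)
    simpa using Polynomial.natDegree_map_le (f := Complex.ofRealHom) (p := P j k)
  have hmuI : ∀ (j) (q : ℕ), q < K → (mu j q).eval Complex.I = (x j)^q := by
    intro j q hq
    rw [hmueval j q Complex.I]
    rw [← factA j q hq]
    apply Finset.sum_congr rfl
    intro k _
    rw [hpCI j k]
    ring
  have hN1 : 1 ≤ D*d := by
    have := Nat.mul_le_mul (show 1 ≤ D by omega) hd
    simpa using this
  obtain ⟨t, e, htmem, hebound, hexact⟩ := extrap (D*d) hN1
  set c : (∀ j, {z : ℂ // z ∈ Z j}) → ℂ :=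
    fun ξ => ∑ l ∈ range (D*d+1), e l * ∏ j, (pC j (ξ j)).eval ((t l : ℝ) : ℂ) with hcdef
  have hsumabs : ∀ l ∈ range (D*d+1), ∀ j,
      ∑ k : {z : ℂ // z ∈ Z j}, ‖(pC j k).eval ((t l : ℝ) : ℂ)‖ = 1 := by
    intro l hl j
    have heq : ∀ k : {z : ℂ // z ∈ Z j},
        ‖(pC j k).eval ((t l : ℝ):ℂ)‖ = (P j k).eval (t l) := by
      intro k
      simp only [hpCdef]
      rw [hbridge, Complex.norm_real, Real.norm_eq_abs, abs_of_nonneg (hPnonneg j k (t l) (htmem l hl))]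
    rw [Finset.sum_congr rfl (fun k _ => heq k), ← Polynomial.eval_finset_sum, hPsum j,
      Polynomial.eval_one]
  refine ⟨c, ?_, ?_⟩
  · -- ℓ¹ norm bound
    calc ∑ ξ, ‖c ξ‖
        ≤ ∑ ξ : (∀ j, {z : ℂ // z ∈ Z j}), ∑ l ∈ range (D*d+1),
            ‖e l‖ * ∏ j, ‖(pC j (ξ j)).eval ((t l : ℝ) : ℂ)‖ := by
          apply Finset.sum_le_sum
          intro ξ _
          simp only [hcdef]
          refine le_trans (norm_sum_le _ _) ?_
          apply Finset.sum_le_sum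
          intro l _
          rw [norm_mul, norm_prod]
      _ = ∑ l ∈ range (D*d+1), ‖e l‖ *
            ∑ ξ : (∀ j, {z : ℂ // z ∈ Z j}), ∏ j, ‖(pC j (ξ j)).eval ((t l : ℝ) : ℂ)‖ := by
          rw [Finset.sum_comm]
          apply Finset.sum_congr rfl
          intro l _
          rw [Finset.mul_sum]
      _ = ∑ l ∈ range (D*d+1), ‖e l‖ := by
          apply Finset.sum_congr rfl
          intro l hl
          have hsum1 : ∑ ξ : (∀ j, {z : ℂ // z ∈ Z j}),
              ∏ j, ‖(pC j (ξ j)).eval ((t l : ℝ) : ℂ)‖ = 1 := by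
            rw [← Fintype.prod_sum
              (fun j (k : {z : ℂ // z ∈ Z j}) => ‖(pC j k).eval ((t l : ℝ) : ℂ)‖)]
            rw [Finset.prod_congr rfl (fun j _ => hsumabs l hl j), Finset.prod_const_one]
          rw [hsum1, mul_one]
      _ ≤ 12^(D*d) := hebound
      _ = (12^D : ℝ)^d := by rw [← pow_mul]
  · -- exact interpolation
    intro a f hf
    set A := Finset.univ.filter (fun α : Fin n → Fin K => ∑ i, ((α i : ℕ)) ≤ d) with hA
    set g : Polynomial ℂ := ∑ α ∈ A, Polynomial.C (a α) * ∏ j, mu j ((α j : ℕ)) with hg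
    have hgeval : ∀ w : ℂ, g.eval w = ∑ α ∈ A, a α * ∏ j, (mu j ((α j : ℕ))).eval w := by
      intro w
      rw [hg, Polynomial.eval_finset_sum]
      apply Finset.sum_congr rfl
      intro α _
      rw [Polynomial.eval_mul, Polynomial.eval_C, Polynomial.eval_prod]
    have hkey : ∀ w : ℂ,
        (∑ ξ : (∀ j, {z : ℂ // z ∈ Z j}),
          (∏ j, (pC j (ξ j)).eval w) * f (fun j => (ξ j : ℂ))) = g.eval w := by
      intro w
      rw [hgeval w]
      calc ∑ ξ : (∀ j, {z : ℂ // z ∈ Z j}), (∏ j, (pC j (ξ j)).eval w) * f (fun j => (ξ j : ℂ))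
          = ∑ ξ : (∀ j, {z : ℂ // z ∈ Z j}), ∑ α ∈ A,
              a α * ∏ j, ((pC j (ξ j)).eval w * ((ξ j : ℂ))^((α j : ℕ))) := by
            apply Finset.sum_congr rfl
            intro ξ _
            rw [hf (fun j => (ξ j : ℂ)), Finset.mul_sum]
            apply Finset.sum_congr rfl
            intro α _
            rw [Finset.prod_mul_distrib]
            ring
        _ = ∑ α ∈ A, a α * ∑ ξ : (∀ j, {z : ℂ // z ∈ Z j}),
              ∏ j, ((pC j (ξ j)).eval w * ((ξ j : ℂ))^((α j : ℕ))) := by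
            rw [Finset.sum_comm]
            apply Finset.sum_congr rfl
            intro α _
            rw [Finset.mul_sum]
        _ = ∑ α ∈ A, a α * ∏ j, (mu j ((α j : ℕ))).eval w := by
            apply Finset.sum_congr rfl
            intro α _
            congr 1
            rw [← Fintype.prod_sum
              (fun j (k : {z : ℂ // z ∈ Z j}) => (pC j k).eval w * ((k : ℂ))^((α j : ℕ)))]
            apply Finset.prod_congr rfl
            intro j _
            rw [hmueval j ((α j : ℕ)) w]
            apply Finset.sum_congr rfl
            intro k _
            ring
    have hdegg : g.natDegree ≤ D*d := by
      rw [hg]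
      apply Polynomial.natDegree_sum_le_of_forall_le
      intro α hα
      have hαd : ∑ i, ((α i : ℕ)) ≤ d := by
        rw [hA] at hα
        exact (Finset.mem_filter.mp hα).2
      refine le_trans Polynomial.natDegree_mul_le ?_
      rw [Polynomial.natDegree_C, zero_add]
      refine le_trans (Polynomial.natDegree_prod_le _ _) ?_
      calc ∑ j, (mu j ((α j : ℕ))).natDegree ≤ ∑ j, D * (α j : ℕ) := by
            apply Finset.sum_le_sum
            intro j _
            by_cases h0 : ((α j : ℕ)) = 0
            · rw [h0, Nat.mul_zero, hmu0 j, Polynomial.natDegree_one]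
            · have h1 : 1 ≤ ((α j : ℕ)) := Nat.one_le_iff_ne_zero.mpr h0
              calc (mu j ((α j : ℕ))).natDegree ≤ D := hmuD j _
                _ = D * 1 := (Nat.mul_one D).symm
                _ ≤ D * ((α j : ℕ)) := Nat.mul_le_mul_left D h1
        _ = D * ∑ j, ((α j : ℕ)) := (Finset.mul_sum _ _ _).symm
        _ ≤ D * d := Nat.mul_le_mul_left D hαd
    have hgI : g.eval Complex.I = f x := by
      rw [hgeval, hf x]
      apply Finset.sum_congr rfl
      intro α _
      congr 1
      apply Finset.prod_congr rfl
      intro j _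
      exact hmuI j ((α j : ℕ)) (α j).isLt
    calc f x = g.eval Complex.I := hgI.symm
      _ = ∑ l ∈ range (D*d+1), e l * g.eval ((t l : ℝ):ℂ) := hexact g hdegg
      _ = ∑ l ∈ range (D*d+1), e l * ∑ ξ : (∀ j, {z : ℂ // z ∈ Z j}),
            (∏ j, (pC j (ξ j)).eval ((t l : ℝ):ℂ)) * f (fun j => (ξ j : ℂ)) := by
          apply Finset.sum_congr rfl
          intro l _
          rw [hkey]
      _ = ∑ ξ : (∀ j, {z : ℂ // z ∈ Z j}), ∑ l ∈ range (D*d+1),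
            e l * ((∏ j, (pC j (ξ j)).eval ((t l : ℝ):ℂ)) * f (fun j => (ξ j : ℂ))) := by
          rw [Finset.sum_congr rfl (fun l _ => Finset.mul_sum _ _ _), Finset.sum_comm]
      _ = ∑ ξ, c ξ * f (fun j => (ξ j : ℂ)) := by
          apply Finset.sum_congr rfl
          intro ξ _
          simp only [hcdef]
          rw [Finset.sum_mul]
          apply Finset.sum_congr rfl
          intro l _
          ring
end

section
/- Let n ≥ 1, let V_n ⊆ 𝔻^n be a finite set, and let C₀ ≥ 1. Suppose that every polynomial of degree at most 1, i.e. every function f(x) = c_0 + Σ_{j=1}^n c_j x_j with c_0, …, c_n ∈ ℂ, satisfies ‖f‖_{𝔻^n} ≤ C₀ · max_{v ∈ V_n} |f(v)|. Then |V_n| ≥ (1/4) · exp( n / (8 C₀²) ). In particular, the cardinality of any such sampling set grows exponentially in the dimension n. -/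
open Finset


noncomputable def sg (b : Bool) : ℝ := if b then 1 else -1

lemma sg_sq (b : Bool) : sg b * sg b = 1 := by cases b <;> simp [sg]

lemma abs_sg (b : Bool) : |sg b| = 1 := by cases b <;> simp [sg]

/-- one-sided Hoeffding-type counting bound over the Boolean cube -/
lemma lemA (n : ℕ) (hn : 1 ≤ n) (a : Fin n → ℝ) (ha : ∀ j, |a j| ≤ 1) (s : ℝ) (hs : 0 ≤ s) :
    ((univ.filter (fun σ : Fin n → Bool => s ≤ ∑ j, sg (σ j) * a j)).card : ℝ)
      ≤ 2 ^ n * Real.exp (-(s ^ 2) / (2 * n)) := by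
  have hn0 : (0:ℝ) < n := by exact_mod_cast hn
  set l : ℝ := s / n with hl
  have hl0 : 0 ≤ l := div_nonneg hs hn0.le
  set F := univ.filter (fun σ : Fin n → Bool => s ≤ ∑ j, sg (σ j) * a j) with hF
  have key : (F.card : ℝ) * Real.exp (l * s) ≤ 2 ^ n * Real.exp (n * l ^ 2 / 2) := by
    have h1 : (F.card : ℝ) * Real.exp (l * s)
        ≤ ∑ σ ∈ F, Real.exp (l * ∑ j, sg (σ j) * a j) := by
      calc (F.card : ℝ) * Real.exp (l * s) = ∑ _σ ∈ F, Real.exp (l * s) := by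
            rw [Finset.sum_const, nsmul_eq_mul]
        _ ≤ _ := Finset.sum_le_sum fun σ hσ => Real.exp_le_exp.2
          (mul_le_mul_of_nonneg_left (Finset.mem_filter.1 hσ).2 hl0)
    have h2 : ∑ σ ∈ F, Real.exp (l * ∑ j, sg (σ j) * a j)
        ≤ ∑ σ : Fin n → Bool, Real.exp (l * ∑ j, sg (σ j) * a j) :=
      Finset.sum_le_sum_of_subset_of_nonneg (Finset.filter_subset _ _)
        (fun _ _ _ => (Real.exp_pos _).le)
    have h3 : ∑ σ : Fin n → Bool, Real.exp (l * ∑ j, sg (σ j) * a j)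
        = ∏ j, (Real.exp (l * a j) + Real.exp (-(l * a j))) := by
      have : ∀ σ : Fin n → Bool, Real.exp (l * ∑ j, sg (σ j) * a j)
          = ∏ j, Real.exp (l * (sg (σ j) * a j)) := by
        intro σ
        rw [← Real.exp_sum, Finset.mul_sum]
      simp_rw [this]
      have hps : (∏ j : Fin n, ∑ b : Bool, Real.exp (l * (sg b * a j)))
          = ∑ x : Fin n → Bool, ∏ j, Real.exp (l * (sg (x j) * a j)) := Fintype.prod_sum _
      rw [← hps]
      apply Finset.prod_congr rfl
      intro j _
      rw [Fintype.sum_bool]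
      simp [sg]
    have h4 : ∏ j, (Real.exp (l * a j) + Real.exp (-(l * a j)))
        ≤ ∏ _j : Fin n, (2 * Real.exp (l ^ 2 / 2)) := by
      apply Finset.prod_le_prod
      · intro j _; positivity
      · intro j _
        have := Real.cosh_le_exp_half_sq (l * a j)
        rw [Real.cosh_eq] at this
        have h5 : Real.exp ((l * a j) ^ 2 / 2) ≤ Real.exp (l ^ 2 / 2) := by
          apply Real.exp_le_exp.2
          have : (l * a j) ^ 2 ≤ l ^ 2 := by
            have h6 : |l * a j| ≤ |l| := by
              rw [abs_mul]
              calc |l| * |a j| ≤ |l| * 1 := by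
                    exact mul_le_mul_of_nonneg_left (ha j) (abs_nonneg _)
                _ = |l| := mul_one _
            calc (l * a j) ^ 2 = |l * a j| ^ 2 := (sq_abs _).symm
              _ ≤ |l| ^ 2 := by exact pow_le_pow_left₀ (abs_nonneg _) h6 2
              _ = l ^ 2 := sq_abs _
          linarith
        have h7 : (Real.exp (l * a j) + Real.exp (-(l * a j))) / 2 ≤ Real.exp (l ^ 2 / 2) :=
          this.trans h5
        linarith
    have h8 : ∏ j : Fin n, (2 * Real.exp (l ^ 2 / 2)) = 2 ^ n * Real.exp (n * l ^ 2 / 2) := by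
      rw [Finset.prod_const, Finset.card_univ, Fintype.card_fin, mul_pow, ← Real.exp_nat_mul]
      ring_nf
    calc (F.card : ℝ) * Real.exp (l * s) ≤ _ := h1
      _ ≤ _ := h2
      _ = _ := h3
      _ ≤ _ := h4
      _ = _ := h8
  have hexp : Real.exp (l * s) > 0 := Real.exp_pos _
  have : (F.card : ℝ) ≤ 2 ^ n * Real.exp (n * l ^ 2 / 2) * Real.exp (-(l * s)) := by
    rw [← le_div_iff₀ hexp] at key
    rwa [div_eq_mul_inv, ← Real.exp_neg] at key
  calc (F.card : ℝ) ≤ _ := this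
    _ = 2 ^ n * Real.exp (n * l ^ 2 / 2 + -(l * s)) := by rw [mul_assoc, ← Real.exp_add]
    _ = 2 ^ n * Real.exp (-(s ^ 2) / (2 * n)) := by
        congr 2
        rw [hl]
        field_simp
        ring

/-- two-sided version -/
lemma lemB (n : ℕ) (hn : 1 ≤ n) (a : Fin n → ℝ) (ha : ∀ j, |a j| ≤ 1) (s : ℝ) (hs : 0 ≤ s) :
    ((univ.filter (fun σ : Fin n → Bool => s ≤ |∑ j, sg (σ j) * a j|)).card : ℝ)
      ≤ 2 * 2 ^ n * Real.exp (-(s ^ 2) / (2 * n)) := by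
  have hsub : univ.filter (fun σ : Fin n → Bool => s ≤ |∑ j, sg (σ j) * a j|)
      ⊆ (univ.filter (fun σ : Fin n → Bool => s ≤ ∑ j, sg (σ j) * a j))
        ∪ (univ.filter (fun σ : Fin n → Bool => s ≤ ∑ j, sg (σ j) * (-a) j)) := by
    intro σ hσ
    rw [Finset.mem_filter] at hσ
    rcases le_abs.mp hσ.2 with h1 | h1
    · exact Finset.mem_union_left _ (Finset.mem_filter.2 ⟨Finset.mem_univ _, h1⟩)
    · refine Finset.mem_union_right _ (Finset.mem_filter.2 ⟨Finset.mem_univ _, ?_⟩)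
      simpa [Finset.sum_neg_distrib, mul_neg, ← Finset.sum_neg_distrib] using h1
  have hcard := Finset.card_le_card hsub
  have hun := Finset.card_union_le
    (univ.filter (fun σ : Fin n → Bool => s ≤ ∑ j, sg (σ j) * a j))
    (univ.filter (fun σ : Fin n → Bool => s ≤ ∑ j, sg (σ j) * (-a) j))
  have hA := lemA n hn a ha s hs
  have hA' := lemA n hn (-a) (fun j => by simpa using ha j) s hs
  have : ((univ.filter (fun σ : Fin n → Bool => s ≤ |∑ j, sg (σ j) * a j|)).card : ℝ)
      ≤ ((univ.filter (fun σ : Fin n → Bool => s ≤ ∑ j, sg (σ j) * a j)).card : ℝ)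
        + ((univ.filter (fun σ : Fin n → Bool => s ≤ ∑ j, sg (σ j) * (-a) j)).card : ℝ) := by
    exact_mod_cast hcard.trans hun
  linarith

/-- complex version -/
lemma lemC (n : ℕ) (hn : 1 ≤ n) (v : Fin n → ℂ) (hv : ∀ j, ‖v j‖ ≤ 1)
    (t : ℝ) (ht : 0 ≤ t) :
    ((univ.filter (fun σ : Fin n → Bool =>
        t ≤ ‖∑ j, (sg (σ j) : ℂ) * v j‖)).card : ℝ)
      ≤ 4 * 2 ^ n * Real.exp (-(t ^ 2 / 2) / (2 * n)) := by
  set s : ℝ := t / Real.sqrt 2 with hsdef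
  have hs0 : 0 ≤ s := div_nonneg ht (Real.sqrt_nonneg _)
  have hs2 : s ^ 2 = t ^ 2 / 2 := by
    rw [hsdef, div_pow, Real.sq_sqrt (by norm_num : (2:ℝ) ≥ 0)]
  have hre : ∀ σ : Fin n → Bool, (∑ j, (sg (σ j) : ℂ) * v j).re = ∑ j, sg (σ j) * (v j).re := by
    intro σ
    rw [Complex.re_sum]
    exact Finset.sum_congr rfl fun j _ => Complex.re_ofReal_mul _ _
  have him : ∀ σ : Fin n → Bool, (∑ j, (sg (σ j) : ℂ) * v j).im = ∑ j, sg (σ j) * (v j).im := by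
    intro σ
    rw [Complex.im_sum]
    exact Finset.sum_congr rfl fun j _ => Complex.im_ofReal_mul _ _
  have hsub : univ.filter (fun σ : Fin n → Bool =>
        t ≤ ‖∑ j, (sg (σ j) : ℂ) * v j‖)
      ⊆ (univ.filter (fun σ : Fin n → Bool => s ≤ |∑ j, sg (σ j) * (v j).re|))
        ∪ (univ.filter (fun σ : Fin n → Bool => s ≤ |∑ j, sg (σ j) * (v j).im|)) := by
    intro σ hσ
    rw [Finset.mem_filter] at hσ
    set z := ∑ j, (sg (σ j) : ℂ) * v j with hz
    by_contra hcon
    simp only [Finset.mem_union, Finset.mem_filter, Finset.mem_univ, true_and, not_or,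
      not_le] at hcon
    have h1 : |z.re| < s := by rw [hre σ] at *; exact hcon.1
    have h2 : |z.im| < s := by rw [him σ] at *; exact hcon.2
    have hzabs : t ≤ ‖z‖ := hσ.2
    have : (‖z‖) ^ 2 = z.re ^ 2 + z.im ^ 2 := by
      rw [Complex.sq_norm, Complex.normSq_apply]; ring
    have ht2 : t ^ 2 ≤ z.re ^ 2 + z.im ^ 2 := by
      rw [← this]
      exact pow_le_pow_left₀ ht hzabs 2
    have hr2 : z.re ^ 2 < s ^ 2 := by
      rw [← sq_abs z.re]
      exact pow_lt_pow_left₀ h1 (abs_nonneg _) (by norm_num)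
    have hi2 : z.im ^ 2 < s ^ 2 := by
      rw [← sq_abs z.im]
      exact pow_lt_pow_left₀ h2 (abs_nonneg _) (by norm_num)
    rw [hs2] at hr2 hi2
    linarith
  have hBre := lemB n hn (fun j => (v j).re)
    (fun j => (Complex.abs_re_le_norm _).trans (hv j)) s hs0
  have hBim := lemB n hn (fun j => (v j).im)
    (fun j => (Complex.abs_im_le_norm _).trans (hv j)) s hs0
  rw [hs2] at hBre hBim
  have hcard := Finset.card_le_card hsub
  have hun := Finset.card_union_le
    (univ.filter (fun σ : Fin n → Bool => s ≤ |∑ j, sg (σ j) * (v j).re|))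
    (univ.filter (fun σ : Fin n → Bool => s ≤ |∑ j, sg (σ j) * (v j).im|))
  have : ((univ.filter (fun σ : Fin n → Bool =>
        t ≤ ‖∑ j, (sg (σ j) : ℂ) * v j‖)).card : ℝ)
      ≤ ((univ.filter (fun σ : Fin n → Bool => s ≤ |∑ j, sg (σ j) * (v j).re|)).card : ℝ)
        + ((univ.filter (fun σ : Fin n → Bool => s ≤ |∑ j, sg (σ j) * (v j).im|)).card : ℝ) := by
    exact_mod_cast hcard.trans hun
  linarith


/-- Theorem 1.5 (no sub-exponential sampling sets): if `V ⊆ 𝔻^n` is a finite sampling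
set for degree-1 polynomials with constant `C₀ ≥ 1`, i.e. every affine function
`f(x) = c₀ + Σ c_j x_j` satisfies `‖f‖_{𝔻^n} ≤ C₀ max_{v ∈ V} |f(v)|`, then
`|V| ≥ (1/4) exp(n / (8 C₀²))`. -/
theorem stmt4 (n : ℕ) (hn : 1 ≤ n) (V : Finset (Fin n → ℂ))
    (hV : ∀ v ∈ V, ∀ j, ‖v j‖ ≤ 1)
    (C₀ : ℝ) (hC₀ : 1 ≤ C₀)
    (h : ∀ (c₀ : ℂ) (c : Fin n → ℂ),
      ∀ x : Fin n → ℂ, (∀ i, ‖x i‖ ≤ 1) →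
        ‖c₀ + ∑ j, c j * x j‖ ≤
          C₀ * ⨆ v : {v : Fin n → ℂ // v ∈ V}, ‖c₀ + ∑ j, c j * v.1 j‖) :
    (1 / 4 : ℝ) * Real.exp ((n : ℝ) / (8 * C₀ ^ 2)) ≤ V.card := by
  have hC0 : (0:ℝ) < C₀ := lt_of_lt_of_le one_pos hC₀
  have hn0 : (0:ℝ) < n := by exact_mod_cast hn
  set t : ℝ := n / C₀ with htdef
  have ht0 : 0 ≤ t := le_of_lt (div_pos hn0 hC0)
  -- Step 1: every sign pattern is witnessed by some v ∈ V
  have step1 : ∀ σ : Fin n → Bool, ∃ v ∈ V,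
      t ≤ ‖∑ j, (sg (σ j) : ℂ) * v j‖ := by
    intro σ
    have hx : ∀ i, ‖(fun j => (sg (σ j) : ℂ)) i‖ ≤ 1 := by
      intro i
      simp [Complex.norm_real, abs_sg]
    have hmain := h 0 (fun j => (sg (σ j) : ℂ)) (fun j => (sg (σ j) : ℂ)) hx
    have hval : ‖(0:ℂ) + ∑ j, (sg (σ j) : ℂ) * (sg (σ j) : ℂ)‖ = n := by
      have : ∀ j : Fin n, (sg (σ j) : ℂ) * (sg (σ j) : ℂ) = 1 := by
        intro j
        rw [← Complex.ofReal_mul, sg_sq]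
        norm_num
      simp [this]
    rw [hval] at hmain
    -- V must be nonempty
    rcases V.eq_empty_or_nonempty with hVe | hVne
    · exfalso
      have : IsEmpty {v : Fin n → ℂ // v ∈ V} := by
        subst hVe; simp [isEmpty_subtype]
      rw [iSup_of_empty', Real.sSup_empty, mul_zero] at hmain
      linarith
    · have : Nonempty {v : Fin n → ℂ // v ∈ V} := by
        obtain ⟨v, hv⟩ := hVne; exact ⟨⟨v, hv⟩⟩
      obtain ⟨v₀, hv₀⟩ := Finite.exists_max
        (fun v : {v : Fin n → ℂ // v ∈ V} =>
          ‖(0:ℂ) + ∑ j, (sg (σ j) : ℂ) * v.1 j‖)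
      have hle : (⨆ v : {v : Fin n → ℂ // v ∈ V},
          ‖(0:ℂ) + ∑ j, (sg (σ j) : ℂ) * v.1 j‖)
          ≤ ‖(0:ℂ) + ∑ j, (sg (σ j) : ℂ) * v₀.1 j‖ := ciSup_le hv₀
      refine ⟨v₀.1, v₀.2, ?_⟩
      have h2 : (n:ℝ) ≤ C₀ * ‖(0:ℂ) + ∑ j, (sg (σ j) : ℂ) * v₀.1 j‖ :=
        hmain.trans (mul_le_mul_of_nonneg_left hle hC0.le)
      rw [zero_add] at h2
      rw [htdef, div_le_iff₀ hC0]
      linarith [h2, mul_comm C₀ (‖∑ j, (sg (σ j) : ℂ) * v₀.1 j‖)]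
  -- Step 2: counting
  have hcover : (univ : Finset (Fin n → Bool)) ⊆
      V.biUnion (fun v => univ.filter (fun σ : Fin n → Bool =>
        t ≤ ‖∑ j, (sg (σ j) : ℂ) * v j‖)) := by
    intro σ _
    obtain ⟨v, hvV, hv⟩ := step1 σ
    exact Finset.mem_biUnion.2 ⟨v, hvV, Finset.mem_filter.2 ⟨Finset.mem_univ _, hv⟩⟩
  have hcount : ((2:ℝ) ^ n) ≤ ∑ v ∈ V,
      ((univ.filter (fun σ : Fin n → Bool =>
        t ≤ ‖∑ j, (sg (σ j) : ℂ) * v j‖)).card : ℝ) := by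
    have h1 := (Finset.card_le_card hcover).trans (Finset.card_biUnion_le)
    have h2 : (univ : Finset (Fin n → Bool)).card = 2 ^ n := by
      simp [Finset.card_univ]
    rw [h2] at h1
    exact_mod_cast h1
  have hbound : ∀ v ∈ V,
      ((univ.filter (fun σ : Fin n → Bool =>
        t ≤ ‖∑ j, (sg (σ j) : ℂ) * v j‖)).card : ℝ)
      ≤ 4 * 2 ^ n * Real.exp (-(t ^ 2 / 2) / (2 * n)) := by
    intro v hvV
    exact lemC n hn v (hV v hvV) t ht0
  have htotal : ((2:ℝ) ^ n) ≤ V.card * (4 * 2 ^ n * Real.exp (-(t ^ 2 / 2) / (2 * n))) := by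
    calc ((2:ℝ) ^ n) ≤ _ := hcount
      _ ≤ ∑ _v ∈ V, (4 * 2 ^ n * Real.exp (-(t ^ 2 / 2) / (2 * n))) :=
        Finset.sum_le_sum hbound
      _ = V.card * (4 * 2 ^ n * Real.exp (-(t ^ 2 / 2) / (2 * n))) := by
        rw [Finset.sum_const, nsmul_eq_mul]
  -- Step 3: algebra
  have hexparg : -(t ^ 2 / 2) / (2 * n) = -(n / (4 * C₀ ^ 2)) := by
    rw [htdef]
    field_simp
    ring
  rw [hexparg] at htotal
  have hmono : Real.exp (-(n / (4 * C₀ ^ 2))) ≤ Real.exp (-((n:ℝ) / (8 * C₀ ^ 2))) := by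
    apply Real.exp_le_exp.2
    have hC2 : (0:ℝ) < C₀ ^ 2 := by positivity
    rw [neg_le_neg_iff]
    apply div_le_div_of_nonneg_left hn0.le (by positivity) (by linarith)
  have htotal2 : ((2:ℝ) ^ n) ≤ V.card * (4 * 2 ^ n * Real.exp (-((n:ℝ) / (8 * C₀ ^ 2)))) := by
    calc ((2:ℝ) ^ n) ≤ _ := htotal
      _ ≤ _ := by
        apply mul_le_mul_of_nonneg_left _ (Nat.cast_nonneg _)
        apply mul_le_mul_of_nonneg_left hmono (by positivity)
  have h2n : (0:ℝ) < 2 ^ n := by positivity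
  have hone : (1:ℝ) ≤ V.card * (4 * Real.exp (-((n:ℝ) / (8 * C₀ ^ 2)))) := by
    have : (2:ℝ)^n / 2^n ≤ V.card * (4 * 2 ^ n * Real.exp (-((n:ℝ) / (8 * C₀ ^ 2)))) / 2^n := by gcongr
    rw [div_self h2n.ne'] at this
    calc (1:ℝ) ≤ V.card * (4 * 2 ^ n * Real.exp (-((n:ℝ) / (8 * C₀ ^ 2)))) / 2 ^ n := this
      _ = V.card * (4 * Real.exp (-((n:ℝ) / (8 * C₀ ^ 2)))) := by
        field_simp
  have hE : (0:ℝ) < Real.exp (((n:ℝ) / (8 * C₀ ^ 2))) := Real.exp_pos _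
  rw [Real.exp_neg] at hone
  have := mul_le_mul_of_nonneg_left hone (le_of_lt (mul_pos (by norm_num : (0:ℝ) < 1/4) hE))
  calc (1/4:ℝ) * Real.exp ((n:ℝ) / (8 * C₀ ^ 2))
      = 1/4 * Real.exp ((n:ℝ) / (8 * C₀ ^ 2)) * 1 := by ring
    _ ≤ 1/4 * Real.exp ((n:ℝ) / (8 * C₀ ^ 2)) *
        (V.card * (4 * (Real.exp ((n:ℝ) / (8 * C₀ ^ 2)))⁻¹)) := this
    _ = V.card * (Real.exp ((n:ℝ) / (8 * C₀ ^ 2)) * (Real.exp ((n:ℝ) / (8 * C₀ ^ 2)))⁻¹) := by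
        ring
    _ = V.card := by rw [mul_inv_cancel₀ hE.ne', mul_one]
end

section
/- For all integers d ≥ 1 and K ≥ 2 there exists a constant C(d,K) > 0 with the following property. Let n ≥ 1 and let f : [−1,1]^n → ℝ be a real polynomial of degree at most d and individual degree at most K−1, i.e. f(x) = Σ_{α ∈ {0,…,K−1}^n, |α| ≤ d} a_α x^α with a_α ∈ ℝ. Let G_K = {−1 + 2k/(K−1) : k = 0, 1, …, K−1} be the grid of K equally spaced points in [−1,1]. Then sup_{x ∈ [−1,1]^n} |f(x)| ≤ C(d,K) · max_{x ∈ G_K^n} |f(x)|. -/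
open Finset Polynomial

noncomputable def gridPt (K : ℕ) (k : Fin K) : ℝ := -1 + 2 * ((k : ℕ) : ℝ) / ((K : ℝ) - 1)

lemma natcast_abs_ge_one {a b : ℕ} (h : a ≠ b) : (1:ℝ) ≤ |(a:ℝ) - (b:ℝ)| := by
  rcases lt_or_gt_of_ne h with h' | h'
  · rw [abs_sub_comm, le_abs]
    left
    have : a + 1 ≤ b := h'
    have := (Nat.cast_le (α := ℝ)).2 this
    push_cast at this ⊢
    linarith
  · rw [le_abs]
    left
    have : b + 1 ≤ a := h'
    have := (Nat.cast_le (α := ℝ)).2 this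
    push_cast at this ⊢
    linarith

section
variable {K : ℕ}

lemma Kr_pos (hK : 2 ≤ K) : (0:ℝ) < (K:ℝ) - 1 := by
  have : (2:ℝ) ≤ (K:ℝ) := by exact_mod_cast hK
  linarith

lemma gridPt_mem (hK : 2 ≤ K) (k : Fin K) : gridPt K k ∈ Set.Icc (-1:ℝ) 1 := by
  have hpos := Kr_pos hK
  have hk : ((k:ℕ):ℝ) ≤ (K:ℝ) - 1 := by
    have : (k:ℕ) ≤ K - 1 := Nat.le_sub_one_of_lt k.2
    have := (Nat.cast_le (α := ℝ)).2 this
    have hK1 : ((K - 1 : ℕ) : ℝ) = (K:ℝ) - 1 := by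
      have : 1 ≤ K := by omega
      push_cast [this]
      ring
    linarith [hK1 ▸ this]
  have hk0 : (0:ℝ) ≤ ((k:ℕ):ℝ) := by positivity
  constructor
  · have : 0 ≤ 2 * ((k:ℕ):ℝ) / ((K:ℝ) - 1) := by positivity
    simp only [gridPt]; linarith
  · simp only [gridPt]
    have h2 : 2 * ((k:ℕ):ℝ) / ((K:ℝ) - 1) ≤ 2 := by
      rw [div_le_iff₀ hpos]
      nlinarith
    linarith

lemma gridPt_inj (hK : 2 ≤ K) : Function.Injective (gridPt K) := by
  intro k l h
  have hpos := Kr_pos hK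
  simp only [gridPt] at h
  have : ((k:ℕ):ℝ) = ((l:ℕ):ℝ) := by
    have hne : ((K:ℝ) - 1) ≠ 0 := ne_of_gt hpos
    field_simp at h
    linarith
  exact Fin.ext (by exact_mod_cast this)

lemma gridPt_gap (hK : 2 ≤ K) {k l : Fin K} (h : k ≠ l) : 2/((K:ℝ)-1) ≤ |gridPt K k - gridPt K l| := by
  have hpos := Kr_pos hK
  have habs : (1:ℝ) ≤ |((k:ℕ):ℝ) - ((l:ℕ):ℝ)| := natcast_abs_ge_one (by simpa [Fin.ext_iff] using h)
  have hdiff : gridPt K k - gridPt K l = 2 * (((k:ℕ):ℝ) - ((l:ℕ):ℝ)) / ((K:ℝ)-1) := by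
    simp only [gridPt]; field_simp; ring
  rw [hdiff, abs_div, abs_of_pos hpos, abs_mul]
  rw [div_le_div_iff₀ hpos hpos]
  have : |(2:ℝ)| = 2 := by norm_num
  rw [this]
  nlinarith

end

noncomputable def LB (K : ℕ) (k : Fin K) : Polynomial ℝ :=
  Lagrange.basis Finset.univ (gridPt K) k

lemma gridPt_injOn {K : ℕ} (hK : 2 ≤ K) :
    Set.InjOn (gridPt K) ↑(Finset.univ : Finset (Fin K)) :=
  fun a _ b _ h => gridPt_inj hK h

lemma moment {K : ℕ} (hK : 2 ≤ K) {m : ℕ} (hm : m < K) (y : ℝ) :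
    ∑ k : Fin K, gridPt K k ^ m * (LB K k).eval y = y ^ m := by
  have hdeg : (Polynomial.X ^ m : Polynomial ℝ).degree < (Finset.univ : Finset (Fin K)).card := by
    rw [Polynomial.degree_X_pow, card_univ, Fintype.card_fin]
    exact_mod_cast hm
  have h := Lagrange.eq_interpolate (v := gridPt K) (gridPt_injOn hK) hdeg
  have h2 := congrArg (Polynomial.eval y) h
  rw [Polynomial.eval_pow, Polynomial.eval_X, Lagrange.interpolate_apply,
    Polynomial.eval_finset_sum] at h2
  rw [h2]
  apply Finset.sum_congr rfl
  intro k _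
  rw [Polynomial.eval_mul, Polynomial.eval_C, Polynomial.eval_pow, Polynomial.eval_X]
  rfl

lemma LB_bound {K : ℕ} (hK : 2 ≤ K) (k : Fin K) {y : ℝ} (hy : y ∈ Set.Icc (-1:ℝ) 1) :
    |(LB K k).eval y| ≤ ((K:ℝ)-1)^(K-1) := by
  have hpos := Kr_pos hK
  rw [LB, Lagrange.basis, Polynomial.eval_prod, Finset.abs_prod]
  have hcard : (Finset.univ.erase k).card = K - 1 := by
    rw [Finset.card_erase_of_mem (Finset.mem_univ k), card_univ, Fintype.card_fin]
  calc ∏ l ∈ Finset.univ.erase k, |(Lagrange.basisDivisor (gridPt K k) (gridPt K l)).eval y|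
      ≤ ∏ l ∈ Finset.univ.erase k, ((K:ℝ)-1) := by
        apply Finset.prod_le_prod (fun _ _ => abs_nonneg _)
        intro l hl
        have hne : k ≠ l := fun h => (Finset.mem_erase.1 hl).1 h.symm
        rw [Lagrange.basisDivisor, Polynomial.eval_mul, Polynomial.eval_C,
          Polynomial.eval_sub, Polynomial.eval_X, Polynomial.eval_C, abs_mul, abs_inv]
        have hgap := gridPt_gap hK hne
        have hgap0 : (0:ℝ) < |gridPt K k - gridPt K l| :=
          lt_of_lt_of_le (by positivity) hgap
        have hyl : |y - gridPt K l| ≤ 2 := by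
          have h1 := gridPt_mem hK l
          rw [abs_le]
          constructor <;> [skip; skip] <;>
          · simp only [Set.mem_Icc] at hy h1; cases hy; cases h1; linarith
        have : |gridPt K k - gridPt K l|⁻¹ ≤ ((K:ℝ)-1)/2 := by
          rw [inv_le_comm₀ hgap0 (by positivity)]
          calc (((K:ℝ)-1)/2)⁻¹ = 2/((K:ℝ)-1) := by field_simp
          _ ≤ _ := hgap
        calc |gridPt K k - gridPt K l|⁻¹ * |y - gridPt K l|
            ≤ (((K:ℝ)-1)/2) * 2 := by
              apply mul_le_mul this hyl (abs_nonneg _) (by positivity)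
          _ = (K:ℝ)-1 := by ring
  _ = ((K:ℝ)-1)^(K-1) := by rw [Finset.prod_const, hcard]

lemma LB_sum {K : ℕ} (hK : 2 ≤ K) (y : ℝ) : ∑ k : Fin K, (LB K k).eval y = 1 := by
  have := moment hK (m := 0) (by omega) y
  simpa using this


lemma evalZero_eq_sum {ι : Type} [Fintype ι] [DecidableEq ι] (v : ι → ℝ)
    (hv : Set.InjOn v ↑(Finset.univ : Finset ι)) (P : Polynomial ℝ)
    (hdeg : P.degree < ((Finset.univ : Finset ι).card : WithBot ℕ)) :
    P.eval 0 = ∑ j : ι, P.eval (v j) * (Lagrange.basis Finset.univ v j).eval 0 := by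
  conv_lhs => rw [Lagrange.eq_interpolate hv hdeg]
  rw [Lagrange.interpolate_apply, Polynomial.eval_finset_sum]
  exact Finset.sum_congr rfl fun j _ => by rw [Polynomial.eval_mul, Polynomial.eval_C]

/-- Corollary 2.4 (real discrete Remez-type inequality): for all `d ≥ 1`, `K ≥ 2`
there is `C = C(d, K) > 0` such that for every `n ≥ 1` and every real polynomial `f` on
`[-1,1]^n` of degree at most `d` and individual degree at most `K − 1`,
`sup_{x ∈ [-1,1]^n} |f(x)| ≤ C max_{x ∈ G_K^n} |f(x)|`, where `G_K` is the grid of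
`K` equally spaced points `-1 + 2k/(K-1)`, `k = 0, …, K−1`, in `[-1,1]`. -/
theorem stmt8 (d K : ℕ) (hd : 1 ≤ d) (hK : 2 ≤ K) :
    ∃ C : ℝ, 0 < C ∧
      ∀ n : ℕ, 1 ≤ n →
      ∀ (a : (Fin n → Fin K) → ℝ) (f : (Fin n → ℝ) → ℝ),
        (∀ x : Fin n → ℝ, f x =
          ∑ α ∈ Finset.univ.filter (fun α : Fin n → Fin K => ∑ i, (α i : ℕ) ≤ d),
            a α * ∏ i, x i ^ (α i : ℕ)) →
      ∀ x : Fin n → ℝ, (∀ i, x i ∈ Set.Icc (-1 : ℝ) 1) →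
        |f x| ≤ C * ⨆ k : Fin n → Fin K,
          |f fun j => -1 + 2 * ((k j : ℕ) : ℝ) / ((K : ℝ) - 1)| := by
  have hKr := Kr_pos hK
  have hK0 : (0:ℝ) < K := by positivity
  set Λ : ℝ := ((K:ℝ)-1)^(K-1) with hΛdef
  have h2K : (2:ℝ) ≤ (K:ℝ) := by exact_mod_cast hK
  have hΛ1 : 1 ≤ Λ := one_le_pow₀ (by linarith)
  set τ : ℝ := (Λ * K)/(1 + Λ * K) with hτdef
  have hΛK : (0:ℝ) < Λ * K := by positivity
  have hτ0 : 0 < τ := by positivity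
  have hτ1 : τ < 1 := by
    rw [hτdef, div_lt_one (by positivity)]; linarith
  have hd0 : (0:ℝ) < d := by exact_mod_cast hd
  set v : Fin (d+1) → ℝ := fun j => τ + (1-τ) * ((j:ℕ):ℝ)/(d:ℝ) with hvdef
  have hv_injOn : Set.InjOn v ↑(Finset.univ : Finset (Fin (d+1))) := by
    intro j _ j' _ h
    simp only [hvdef] at h
    have h2 : ((j:ℕ):ℝ) = ((j':ℕ):ℝ) := by
      have h1τ : (0:ℝ) < 1 - τ := by linarith
      field_simp at h
      have h3 : (1-τ) * ((j:ℕ):ℝ) = (1-τ) * ((j':ℕ):ℝ) := by linarith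
      exact mul_left_cancel₀ (ne_of_gt h1τ) h3
    exact Fin.ext (by exact_mod_cast h2)
  have hv_mem : ∀ j : Fin (d+1), τ ≤ v j ∧ v j ≤ 1 := by
    intro j
    have hj0 : (0:ℝ) ≤ ((j:ℕ):ℝ) := by positivity
    have hjd : ((j:ℕ):ℝ) ≤ (d:ℝ) := by
      exact_mod_cast Nat.lt_succ_iff.1 j.2
    have h1τ : (0:ℝ) ≤ 1 - τ := by linarith
    constructor
    · have : 0 ≤ (1-τ) * ((j:ℕ):ℝ)/(d:ℝ) := by positivity
      simp only [hvdef]; linarith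
    · have hstep : (1-τ) * ((j:ℕ):ℝ)/(d:ℝ) ≤ (1-τ) := by
        rw [div_le_iff₀ hd0]
        nlinarith
      simp only [hvdef]
      linarith
  set C : ℝ := (∑ j : Fin (d+1), |(Lagrange.basis Finset.univ v j).eval 0|) + 1 with hCdef
  have hC : 0 < C := by
    have : 0 ≤ ∑ j : Fin (d+1), |(Lagrange.basis Finset.univ v j).eval 0| :=
      Finset.sum_nonneg fun _ _ => abs_nonneg _
    linarith
  refine ⟨C, hC, ?_⟩
  intro n hn a f hf x hx
  set M : ℝ := ⨆ k : Fin n → Fin K,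
      |f fun j => -1 + 2 * ((k j : ℕ) : ℝ) / ((K : ℝ) - 1)| with hMdef
  have hMle : ∀ κ : Fin n → Fin K, |f fun j => gridPt K (κ j)| ≤ M := by
    intro κ
    exact le_ciSup (f := fun k : Fin n → Fin K =>
      |f fun j => -1 + 2 * ((k j : ℕ) : ℝ) / ((K : ℝ) - 1)|)
      (Set.Finite.bddAbove (Set.finite_range _)) κ
  have hM0 : 0 ≤ M := le_trans (abs_nonneg _) (hMle (fun _ => ⟨0, by omega⟩))
  set u : ℕ → ℝ := fun m => (∑ k : Fin K, gridPt K k ^ m) / K with hudef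
  have hu1 : u 0 = 1 := by
    simp only [hudef, pow_zero]
    rw [Finset.sum_const, card_univ, Fintype.card_fin]
    field_simp
    simp
  set A : Finset (Fin n → Fin K) :=
    Finset.univ.filter (fun α : Fin n → Fin K => ∑ i, (α i : ℕ) ≤ d) with hAdef
  set P : Polynomial ℝ := ∑ α ∈ A, Polynomial.C (a α) *
      ∏ i, (Polynomial.C ((x i)^(α i : ℕ)) +
        Polynomial.C (u (α i : ℕ) - (x i)^(α i : ℕ)) * Polynomial.X) with hPdef
  have hPeval : ∀ t : ℝ, P.eval t =
      ∑ α ∈ A, a α * ∏ i, ((1-t) * (x i)^(α i : ℕ) + t * u (α i : ℕ)) := by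
    intro t
    rw [hPdef, Polynomial.eval_finset_sum]
    refine Finset.sum_congr rfl fun α _ => ?_
    rw [Polynomial.eval_mul, Polynomial.eval_C, Polynomial.eval_prod]
    congr 1
    refine Finset.prod_congr rfl fun i _ => ?_
    simp only [Polynomial.eval_add, Polynomial.eval_mul, Polynomial.eval_C, Polynomial.eval_X]
    ring
  have hP0 : P.eval 0 = f x := by
    rw [hPeval 0, hf x]
    refine Finset.sum_congr rfl fun α _ => ?_
    congr 1
    refine Finset.prod_congr rfl fun i _ => ?_
    ring
  have hPdeg : P.degree < ((Finset.univ : Finset (Fin (d+1))).card : WithBot ℕ) := by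
    have hnat : P.natDegree ≤ d := by
      rw [hPdef]
      apply Polynomial.natDegree_sum_le_of_forall_le
      intro α hα
      have hαd : ∑ i, (α i : ℕ) ≤ d := (Finset.mem_filter.1 hα).2
      refine le_trans (Polynomial.natDegree_mul_le) ?_
      rw [Polynomial.natDegree_C, zero_add]
      set S : Finset (Fin n) := Finset.univ.filter (fun i => (α i : ℕ) ≠ 0) with hSdef
      have hprod : ∏ i, (Polynomial.C ((x i)^(α i : ℕ)) +
          Polynomial.C (u (α i : ℕ) - (x i)^(α i : ℕ)) * Polynomial.X) =
          ∏ i ∈ S, (Polynomial.C ((x i)^(α i : ℕ)) +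
          Polynomial.C (u (α i : ℕ) - (x i)^(α i : ℕ)) * Polynomial.X) := by
        refine (Finset.prod_subset (Finset.subset_univ S) fun i _ hi => ?_).symm
        have h0 : (α i : ℕ) = 0 := by
          by_contra hne
          exact hi (Finset.mem_filter.2 ⟨Finset.mem_univ i, hne⟩)
        rw [h0]
        simp [hu1]
      rw [hprod]
      refine le_trans (Polynomial.natDegree_prod_le _ _) ?_
      have hcard : ∑ i ∈ S, (Polynomial.C ((x i)^(α i : ℕ)) +
          Polynomial.C (u (α i : ℕ) - (x i)^(α i : ℕ)) * Polynomial.X).natDegree ≤ S.card := by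
        have h1 : ∀ i ∈ S, (Polynomial.C ((x i)^(α i : ℕ)) +
            Polynomial.C (u (α i : ℕ) - (x i)^(α i : ℕ)) * Polynomial.X).natDegree ≤ 1 := by
          intro i _
          have h2 : (Polynomial.C (u (α i : ℕ) - (x i)^(α i : ℕ)) * Polynomial.X).natDegree ≤ 1 :=
            le_trans (Polynomial.natDegree_C_mul_le _ _) (le_of_eq Polynomial.natDegree_X)
          exact le_trans (Polynomial.natDegree_add_le _ _)
            (by simp only [Polynomial.natDegree_C, max_le_iff]; exact ⟨by omega, h2⟩)
        have hc2 : ∑ i ∈ S, (Polynomial.C ((x i)^(α i : ℕ)) +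
            Polynomial.C (u (α i : ℕ) - (x i)^(α i : ℕ)) * Polynomial.X).natDegree
            ≤ ∑ _i ∈ S, (1:ℕ) := Finset.sum_le_sum h1
        simpa using hc2
      refine le_trans hcard ?_
      calc S.card = ∑ _i ∈ S, 1 := Finset.card_eq_sum_ones S
        _ ≤ ∑ i ∈ S, (α i : ℕ) := by
            refine Finset.sum_le_sum fun i hi => ?_
            have : (α i : ℕ) ≠ 0 := (Finset.mem_filter.1 hi).2
            omega
        _ ≤ ∑ i, (α i : ℕ) := Finset.sum_le_sum_of_subset (Finset.subset_univ S)
        _ ≤ d := hαd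
    have hdeg' : P.degree ≤ (d : WithBot ℕ) :=
      le_trans Polynomial.degree_le_natDegree (by exact_mod_cast hnat)
    rw [card_univ, Fintype.card_fin]
    refine lt_of_le_of_lt hdeg' ?_
    exact_mod_cast Nat.lt_succ_self d
  have hPt : ∀ t : ℝ, τ ≤ t → t ≤ 1 → |P.eval t| ≤ M := by
    intro t ht0 ht1
    set w : ℝ → Fin K → ℝ := fun z k => (1-t) * (LB K k).eval z + t/K with hwdef
    have h1t : (0:ℝ) ≤ 1 - t := by linarith
    have hwnn : ∀ i : Fin n, ∀ k : Fin K, 0 ≤ w (x i) k := by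
      intro i k
      have hb := LB_bound hK k (hx i)
      have hL : -Λ ≤ (LB K k).eval (x i) := (abs_le.1 hb).1
      have hτt : Λ * (1 - t) ≤ t / K := by
        have h1 : Λ * K ≤ t * (1 + Λ * K) := by
          rw [hτdef, div_le_iff₀ (by positivity)] at ht0
          linarith
        rw [le_div_iff₀ hK0]
        nlinarith
      have h3 : -((1-t) * Λ) ≤ (1-t) * (LB K k).eval (x i) := by nlinarith
      simp only [hwdef]
      nlinarith
    have hwsum : ∀ z : ℝ, ∑ k : Fin K, w z k = 1 := by
      intro z
      simp only [hwdef]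
      rw [Finset.sum_add_distrib, ← Finset.mul_sum, LB_sum hK z, Finset.sum_const,
        card_univ, Fintype.card_fin, mul_one]
      have hKne : (K:ℝ) ≠ 0 := ne_of_gt hK0
      rw [nsmul_eq_mul]
      field_simp
      ring
    have hwmom : ∀ (z : ℝ) (m : ℕ), m < K →
        ∑ k : Fin K, w z k * gridPt K k ^ m = (1-t) * z ^ m + t * u m := by
      intro z m hm
      have hmom := moment hK hm z
      have hterm : ∀ k : Fin K, w z k * gridPt K k ^ m
          = (1-t) * (gridPt K k ^ m * (LB K k).eval z) + (t/K) * gridPt K k ^ m := by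
        intro k; simp only [hwdef]; ring
      rw [Finset.sum_congr rfl (fun k _ => hterm k), Finset.sum_add_distrib,
        ← Finset.mul_sum, ← Finset.mul_sum, hmom]
      have hKne : (K:ℝ) ≠ 0 := ne_of_gt hK0
      simp only [hudef]
      field_simp
    have hswap : P.eval t = ∑ κ : Fin n → Fin K,
        (∏ i, w (x i) (κ i)) * f (fun j => gridPt K (κ j)) := by
      rw [hPeval t]
      have h1 : ∀ α ∈ A, a α * ∏ i, ((1-t) * (x i)^(α i:ℕ) + t * u (α i:ℕ))
          = ∑ κ : Fin n → Fin K,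
              a α * ∏ i, (w (x i) (κ i) * gridPt K (κ i) ^ (α i : ℕ)) := by
        intro α _
        rw [← Finset.mul_sum]
        congr 1
        calc ∏ i, ((1-t) * (x i)^(α i:ℕ) + t * u (α i:ℕ))
            = ∏ i, ∑ k : Fin K, w (x i) k * gridPt K k ^ (α i : ℕ) := by
              refine Finset.prod_congr rfl fun i _ => ?_
              rw [hwmom (x i) (α i : ℕ) (α i).isLt]
          _ = ∑ κ ∈ Fintype.piFinset (fun _ : Fin n => (Finset.univ : Finset (Fin K))),
                ∏ i, w (x i) (κ i) * gridPt K (κ i) ^ (α i : ℕ) :=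
              Finset.prod_univ_sum _ _
          _ = ∑ κ : Fin n → Fin K,
                ∏ i, w (x i) (κ i) * gridPt K (κ i) ^ (α i : ℕ) := by
              rw [Fintype.piFinset_univ]
      rw [Finset.sum_congr rfl h1, Finset.sum_comm]
      refine Finset.sum_congr rfl fun κ _ => ?_
      rw [hf (fun j => gridPt K (κ j)), Finset.mul_sum]
      refine Finset.sum_congr rfl fun α _ => ?_
      rw [Finset.prod_mul_distrib]
      ring
    have hsum1 : ∑ κ : Fin n → Fin K, ∏ i, w (x i) (κ i) = 1 := by
      have h2 : ∏ i : Fin n, (∑ k : Fin K, w (x i) k)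
          = ∑ κ ∈ Fintype.piFinset (fun _ : Fin n => (Finset.univ : Finset (Fin K))),
            ∏ i, w (x i) (κ i) := Finset.prod_univ_sum _ _
      rw [Fintype.piFinset_univ] at h2
      rw [← h2]
      rw [Finset.prod_congr rfl (fun i _ => hwsum (x i)), Finset.prod_const_one]
    rw [hswap]
    calc |∑ κ : Fin n → Fin K, (∏ i, w (x i) (κ i)) * f (fun j => gridPt K (κ j))|
        ≤ ∑ κ : Fin n → Fin K, |(∏ i, w (x i) (κ i)) * f (fun j => gridPt K (κ j))| :=
          Finset.abs_sum_le_sum_abs _ _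
      _ ≤ ∑ κ : Fin n → Fin K, (∏ i, w (x i) (κ i)) * M := by
          refine Finset.sum_le_sum fun κ _ => ?_
          have hp0 : 0 ≤ ∏ i, w (x i) (κ i) :=
            Finset.prod_nonneg fun i _ => hwnn i (κ i)
          rw [abs_mul, abs_of_nonneg hp0]
          exact mul_le_mul_of_nonneg_left (hMle κ) hp0
      _ = M := by rw [← Finset.sum_mul, hsum1, one_mul]
  have hev := evalZero_eq_sum v hv_injOn P hPdeg
  rw [hP0] at hev
  calc |f x| = |∑ j : Fin (d+1),
        P.eval (v j) * (Lagrange.basis Finset.univ v j).eval 0| := by rw [hev]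
    _ ≤ ∑ j : Fin (d+1),
        |P.eval (v j) * (Lagrange.basis Finset.univ v j).eval 0| :=
          Finset.abs_sum_le_sum_abs _ _
    _ ≤ ∑ j : Fin (d+1), M * |(Lagrange.basis Finset.univ v j).eval 0| := by
        refine Finset.sum_le_sum fun j _ => ?_
        rw [abs_mul]
        exact mul_le_mul_of_nonneg_right
          (hPt (v j) (hv_mem j).1 (hv_mem j).2) (abs_nonneg _)
    _ = M * ∑ j : Fin (d+1), |(Lagrange.basis Finset.univ v j).eval 0| := by
        rw [Finset.mul_sum]
    _ ≤ M * C := by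
        refine mul_le_mul_of_nonneg_left ?_ hM0
        rw [hCdef]
        linarith
    _ = C * M := mul_comm _ _
end

section
/- Let d ≥ 1 and let x_0, …, x_{d−1} ∈ ℂ be distinct points satisfying max_{0≤j≤d−1} |x_j| ≤ M and min_{0≤j<k≤d−1} |x_j − x_k| ≥ η, for some 0 < η, M < ∞. Let V = [x_k^j]_{j,k=0}^{d−1} be the d×d Vandermonde matrix (rows indexed by the power j, columns by the node k). Then V is invertible and the entries b_{jk} of its inverse V^{−1} satisfy |b_{jk}| ≤ M^{d−1−k} · binomial(d−1, k) / η^{d−1} for all 0 ≤ j, k ≤ d−1. -/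
open Polynomial Finset

open Polynomial Finset in
lemma multiset_prod_le_pow (s : Multiset ℝ) (M : ℝ) (hM : 0 ≤ M)
    (h : ∀ a ∈ s, 0 ≤ a ∧ a ≤ M) : s.prod ≤ M ^ Multiset.card s := by
  induction s using Multiset.induction_on with
  | empty => simp
  | cons a s ih =>
    simp only [Multiset.prod_cons, Multiset.card_cons, pow_succ']
    have hprod : 0 ≤ s.prod := Multiset.prod_nonneg fun b hb => (h b (by simp [hb])).1
    exact mul_le_mul (h a (by simp)).2 (ih fun b hb => h b (by simp [hb])) hprod hM

lemma multiset_abs_sum_le (S : Multiset ℂ) :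
    ‖S.sum‖ ≤ (S.map norm).sum := by
  induction S using Multiset.induction_on with
  | empty => simp
  | cons a s ih =>
    simp only [Multiset.sum_cons, Multiset.map_cons]
    exact le_trans (norm_add_le _ _) (by linarith)

/-- Lemma 3.1 (Vandermonde inverse estimate): if `x₀, …, x_{d−1} ∈ ℂ` satisfy
`|x_j| ≤ M` and `|x_j − x_k| ≥ η` for `j ≠ k` (so they are distinct), then the
Vandermonde matrix `V = [x_k^j]` is invertible and the entries of its inverse satisfy
`|b_{jk}| ≤ M^{d−1−k} C(d−1, k) / η^{d−1}`. -/
theorem stmt9 (d : ℕ) (hd : 1 ≤ d) (x : Fin d → ℂ) (M η : ℝ)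
    (hM : 0 < M) (hη : 0 < η)
    (hx : ∀ j, ‖x j‖ ≤ M)
    (hsep : ∀ j k, j ≠ k → η ≤ ‖x j - x k‖) :
    IsUnit (Matrix.of fun j k : Fin d => x k ^ (j : ℕ)) ∧
      ∀ j k : Fin d,
        ‖(Matrix.of fun j k : Fin d => x k ^ (j : ℕ))⁻¹ j k‖
          ≤ M ^ (d - 1 - (k : ℕ)) * ((d - 1).choose (k : ℕ)) / η ^ (d - 1) := by
  set V : Matrix (Fin d) (Fin d) ℂ := Matrix.of fun j k : Fin d => x k ^ (j : ℕ) with hV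
  have hcard : ∀ j : Fin d, (univ.erase j).card = d - 1 := by
    intro j; rw [Finset.card_erase_of_mem (mem_univ j), Finset.card_univ, Fintype.card_fin]
  set P : Fin d → ℂ[X] := fun j => ∏ m ∈ univ.erase j, (X - C (x m)) with hP
  set c : Fin d → ℂ := fun j => ∏ m ∈ univ.erase j, (x j - x m) with hc
  have hcne : ∀ j, c j ≠ 0 := by
    intro j
    refine Finset.prod_ne_zero_iff.2 fun m hm => ?_
    have hne : j ≠ m := fun h => (Finset.mem_erase.1 hm).1 h.symm
    intro h0
    have := hsep j m hne
    rw [h0] at this; simp at this; linarith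
  have hdegP : ∀ j, (P j).natDegree = d - 1 := by
    intro j
    rw [hP]
    rw [Polynomial.natDegree_prod _ _ (fun m _ => X_sub_C_ne_zero (x m))]
    simp [hcard j, Finset.sum_const, hcard]
  set B : Matrix (Fin d) (Fin d) ℂ :=
    Matrix.of (fun j k : Fin d => (P j).coeff k / c j) with hB
  have hBV : B * V = 1 := by
    ext i k
    simp only [Matrix.mul_apply, hB, Matrix.of_apply, hV]
    have : ∑ j : Fin d, (P i).coeff j / c i * x k ^ (j : ℕ)
        = (∑ j : Fin d, (P i).coeff j * x k ^ (j : ℕ)) / c i := by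
      rw [Finset.sum_div]; congr 1; ext j; ring
    rw [this]
    have heval : (∑ j : Fin d, (P i).coeff j * x k ^ (j : ℕ)) = (P i).eval (x k) := by
      rw [Polynomial.eval_eq_sum_range' (lt_of_le_of_lt (le_of_eq (hdegP i))
        (Nat.sub_lt (by omega) one_pos))]
      exact Fin.sum_univ_eq_sum_range (fun m => (P i).coeff m * x k ^ m) d
    rw [heval]
    by_cases hik : i = k
    · subst hik
      have : (P i).eval (x i) = c i := by
        rw [hP, hc]; simp [Polynomial.eval_prod]
      rw [this, div_self (hcne i)]
      simp [Matrix.one_apply]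
    · have : (P i).eval (x k) = 0 := by
        rw [hP, Polynomial.eval_prod]
        refine Finset.prod_eq_zero (Finset.mem_erase.2 ⟨fun h => hik h.symm, mem_univ k⟩) ?_
        simp
      rw [this, zero_div]
      simp [Matrix.one_apply, Ne.symm hik, hik]
  have hUnit : IsUnit V := (Matrix.isUnit_iff_isUnit_det V).2 (Matrix.isUnit_det_of_left_inverse hBV)
  have hVinv : V⁻¹ = B := Matrix.inv_eq_left_inv hBV
  refine ⟨hUnit, fun j k => ?_⟩
  rw [hVinv]
  simp only [hB, Matrix.of_apply]
  rw [norm_div]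
  -- denominator bound
  have hcabs : η ^ (d - 1) ≤ ‖c j‖ := by
    rw [hc, norm_prod]
    calc η ^ (d - 1) = ∏ m ∈ univ.erase j, η := by rw [Finset.prod_const, hcard j]
    _ ≤ ∏ m ∈ univ.erase j, ‖x j - x m‖ :=
        Finset.prod_le_prod (fun _ _ => le_of_lt hη)
          (fun m hm => hsep j m (fun h => (Finset.mem_erase.1 hm).1 h.symm))
  -- numerator bound
  have hk : (k : ℕ) ≤ d - 1 := by omega
  set S : Multiset ℂ := (univ.erase j).val.map x with hS
  have hScard : Multiset.card S = d - 1 := by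
    rw [hS, Multiset.card_map]; exact hcard j
  have hPS : P j = (S.map fun t => X - C t).prod := by
    simp only [hP, hS, Multiset.map_map, Finset.prod_eq_multiset_prod]; rfl
  have hcoeff : (P j).coeff k = (-1) ^ (d - 1 - (k : ℕ)) * S.esymm (d - 1 - (k : ℕ)) := by
    rw [hPS, Multiset.prod_X_sub_C_coeff S (by rw [hScard]; exact hk), hScard]
  have hnum : ‖(P j).coeff k‖
      ≤ M ^ (d - 1 - (k : ℕ)) * ((d - 1).choose (k : ℕ)) := by
    rw [hcoeff, norm_mul, norm_pow, norm_neg, norm_one, one_pow, one_mul]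
    rw [Multiset.esymm]
    refine le_trans (multiset_abs_sum_le _) ?_
    rw [Multiset.map_map]
    set n := d - 1 - (k : ℕ) with hn
    have hcardP : Multiset.card (S.powersetCard n) = (d - 1).choose n := by
      rw [Multiset.card_powersetCard, hScard]
    have hbound : ∀ y ∈ (S.powersetCard n).map (norm ∘ Multiset.prod),
        y ≤ M ^ n := by
      intro y hy
      obtain ⟨t, ht, rfl⟩ := Multiset.mem_map.1 hy
      have hts : t ≤ S := (Multiset.mem_powersetCard.1 ht).1
      have htc : Multiset.card t = n := (Multiset.mem_powersetCard.1 ht).2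
      simp only [Function.comp_apply]
      rw [show ‖t.prod‖ = (t.map norm).prod from map_multiset_prod (normHom (α := ℂ)) t]
      calc (t.map norm).prod ≤ M ^ Multiset.card (t.map norm) := by
            refine multiset_prod_le_pow _ _ hM.le fun a ha => ?_
            obtain ⟨z, hz, rfl⟩ := Multiset.mem_map.1 ha
            have hzS : z ∈ S := Multiset.mem_of_le hts hz
            obtain ⟨m, _, rfl⟩ := Multiset.mem_map.1 hzS
            exact ⟨norm_nonneg _, hx m⟩
      _ = M ^ n := by rw [Multiset.card_map, htc]
    calc ((S.powersetCard n).map (norm ∘ Multiset.prod)).sum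
        ≤ Multiset.card ((S.powersetCard n).map (norm ∘ Multiset.prod)) • M ^ n :=
          Multiset.sum_le_card_nsmul _ _ hbound
      _ = ((d - 1).choose n) * M ^ n := by
          rw [Multiset.card_map, hcardP, nsmul_eq_mul]
      _ = M ^ n * ((d - 1).choose n) := by ring
      _ = M ^ n * ((d - 1).choose (k : ℕ)) := by
          rw [hn, Nat.choose_symm hk]
  exact div_le_div₀ (by positivity) hnum (by positivity) hcabs
end

section
/- Let K ≥ 2 and let y_0, …, y_{K−1} ∈ 𝔻 be distinct points with min_{j≠k} |y_j − y_k| ≥ η > 0. Then for every x ∈ 𝔻 there is a unique vector c = (c_0, …, c_{K−1}) ∈ ℂ^K satisfying Σ_{k=0}^{K−1} c_k · y_k^j = x^j for all 0 ≤ j ≤ K−1 (with the convention 0^0 = 1), and it satisfies Σ_{k=0}^{K−1} |c_k| ≤ K · (2/η)^{K−1}. -/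
open Finset

/-- Section 3.1: given `K ≥ 2` distinct points `y₀, …, y_{K−1} ∈ 𝔻` with pairwise
distances at least `η > 0`, for every `x ∈ 𝔻` there is a unique `c ∈ ℂ^K` with
`Σ_k c_k y_k^j = x^j` for all `0 ≤ j ≤ K−1`, and it satisfies
`Σ_k |c_k| ≤ K (2/η)^{K−1}`. -/
theorem stmt10 (K : ℕ) (hK : 2 ≤ K) (η : ℝ) (hη : 0 < η)
    (y : Fin K → ℂ) (hy : ∀ k, ‖y k‖ ≤ 1)
    (hsep : ∀ j k, j ≠ k → η ≤ ‖y j - y k‖)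
    (x : ℂ) (hx : ‖x‖ ≤ 1) :
    (∃! c : Fin K → ℂ, ∀ j : Fin K, ∑ k, c k * y k ^ (j : ℕ) = x ^ (j : ℕ)) ∧
      ∀ c : Fin K → ℂ, (∀ j : Fin K, ∑ k, c k * y k ^ (j : ℕ) = x ^ (j : ℕ)) →
        ∑ k, ‖c k‖ ≤ (K : ℝ) * (2 / η) ^ (K - 1) := by
  have hinj : Function.Injective y := by
    intro a b hab
    by_contra h
    have := hsep a b h
    rw [hab, sub_self, norm_zero] at this
    linarith
  -- Lagrange coefficients
  set c0 : Fin K → ℂ := fun k => (Lagrange.basis Finset.univ y k).eval x with hc0def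
  have hc0 : ∀ j : Fin K, ∑ k, c0 k * y k ^ (j : ℕ) = x ^ (j : ℕ) := by
    intro j
    have hdeg : (Polynomial.X ^ (j : ℕ) : Polynomial ℂ).degree < (#(Finset.univ : Finset (Fin K)) : ℕ) := by
      rw [Polynomial.degree_X_pow, Finset.card_univ, Fintype.card_fin]
      exact_mod_cast j.isLt
    have h := Lagrange.eq_interpolate (f := (Polynomial.X ^ (j : ℕ) : Polynomial ℂ))
      (Set.injOn_of_injective hinj) hdeg
    have h2 := congrArg (Polynomial.eval x) h
    rw [Lagrange.interpolate_apply] at h2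
    simp only [Polynomial.eval_pow, Polynomial.eval_X, Polynomial.eval_finset_sum,
      Polynomial.eval_mul, Polynomial.eval_C] at h2
    rw [h2]
    exact Finset.sum_congr rfl fun k _ => mul_comm _ _
  have huniq : ∀ c : Fin K → ℂ,
      (∀ j : Fin K, ∑ k, c k * y k ^ (j : ℕ) = x ^ (j : ℕ)) → c = c0 := by
    intro c hc
    have hz : ∀ j : Fin K, ∑ k, (c - c0) k * y k ^ (j : ℕ) = 0 := by
      intro j
      simp only [Pi.sub_apply, sub_mul, Finset.sum_sub_distrib, hc j, hc0 j, sub_self]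
    have := Matrix.eq_zero_of_forall_pow_sum_mul_pow_eq_zero hinj hz
    have : c - c0 = 0 := this
    funext k
    have := congrFun this k
    simpa [sub_eq_zero] using this
  refine ⟨⟨c0, hc0, huniq⟩, ?_⟩
  intro c hc
  rw [huniq c hc]
  have hbound : ∀ k, ‖c0 k‖ ≤ (2 / η) ^ (K - 1) := by
    intro k
    rw [hc0def]
    simp only [Lagrange.basis]
    rw [Polynomial.eval_prod, norm_prod]
    have hcard : #((Finset.univ : Finset (Fin K)).erase k) = K - 1 := by
      rw [Finset.card_erase_of_mem (Finset.mem_univ k), Finset.card_univ, Fintype.card_fin]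
    rw [← hcard, ← Finset.prod_const]
    apply Finset.prod_le_prod (fun j _ => norm_nonneg _)
    intro j hj
    have hjk : j ≠ k := (Finset.mem_erase.mp hj).1
    have hsep' : η ≤ ‖y k - y j‖ := hsep k j (Ne.symm hjk)
    rw [Lagrange.basisDivisor]
    simp only [Polynomial.eval_mul, Polynomial.eval_C, Polynomial.eval_sub, Polynomial.eval_X]
    rw [norm_mul, norm_inv]
    have h1 : ‖x - y j‖ ≤ 2 := by
      calc ‖x - y j‖ ≤ ‖x‖ + ‖y j‖ :=
            norm_sub_le _ _
        _ ≤ 2 := by linarith [hx, hy j]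
    have h2 : (0:ℝ) < ‖y k - y j‖ := lt_of_lt_of_le hη hsep'
    rw [inv_mul_eq_div, div_le_div_iff₀ h2 hη]
    calc ‖x - y j‖ * η ≤ 2 * η := by nlinarith
      _ ≤ 2 * ‖y k - y j‖ := by nlinarith
  calc ∑ k, ‖c0 k‖ ≤ ∑ _k : Fin K, (2 / η) ^ (K - 1) :=
        Finset.sum_le_sum fun k _ => hbound k
    _ = (K : ℝ) * (2 / η) ^ (K - 1) := by
        rw [Finset.sum_const, Finset.card_univ, Fintype.card_fin, nsmul_eq_mul]
end
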